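/- arXiv:2205.15197 — 11 statements merged into one kernel-verified Lean document; each statement's English description precedes it below -/
import Mathlib

section
/- Let r ≥ 2 and m ≥ r, and let 0 ≤ f ≤ C(m,r). If there exists k ∈ ℕ with C(k,r) + m < f < C(k+1,r), then there is no r-uniform hypergraph on m vertices with f edges that is the vertex-disjoint union of a complete r-graph and an r-graph with at most m edges. -/
open Finset
open scoped Classical

/-- `(n,e) →_r (m,f)`: every `r`-uniform hypergraph on `n` vertices with `e` edges
has an induced sub-hypergraph on `m` vertices with exactly `f` edges. -/
def PairArrows (r n e m f : ℕ) : Prop :=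
  ∀ G : Finset (Finset (Fin n)), (∀ s ∈ G, s.card = r) → G.card = e →
    ∃ S : Finset (Fin n), S.card = m ∧ (G.filter (fun t => t ⊆ S)).card = f

/-- The density `σ_r(m,f)`. -/
noncomputable def sigmaR (r m f : ℕ) : ℝ :=
  Filter.limsup
    (fun n : ℕ =>
      (((Finset.range (n.choose r + 1)).filter (fun e => PairArrows r n e m f)).card : ℝ) /
        (n.choose r : ℝ))
    Filter.atTop
/-- The pair `(m,f)` can be realised as the vertex-disjoint union of a complete
`r`-graph and an `r`-graph with at most `m` edges. -/
def CliquePlusFew (r m f : ℕ) : Prop :=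
  ∃ (K : Finset (Fin m)) (H : Finset (Finset (Fin m))),
    (∀ s ∈ H, s.card = r ∧ Disjoint s K) ∧ H.card ≤ m ∧
    K.card.choose r + H.card = f

theorem not_cliquePlusFew_of_between (r m f k : ℕ) (hr : 2 ≤ r) (hm : r ≤ m)
    (hf : f ≤ m.choose r) (h1 : k.choose r + m < f) (h2 : f < (k + 1).choose r) :
    ¬ CliquePlusFew r m f := by
  rintro ⟨K, H, _hH, hHm, hsum⟩
  rcases le_or_gt K.card k with hc | hc
  · have : K.card.choose r ≤ k.choose r := Nat.choose_le_choose r hc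
    omega
  · have : (k + 1).choose r ≤ K.card.choose r := Nat.choose_le_choose r hc
    omega
end

section
/- Let r ≥ 2 and m ≥ r, and let 0 ≤ f ≤ C(m,r). If there exists k ∈ ℕ with C(k-1,r) < f < C(k,r) − m, then there is no r-uniform hypergraph on m vertices with f edges that consists of the complement of an r-graph with at most m edges together with some isolated vertices (i.e., a complete r-graph on some l vertices with at most m edges removed, plus isolated vertices). -/
open Finset
open scoped Classical

/-- The pair `(m,f)` can be realised as a complete `r`-graph on some vertex set `K`
with the edges of an `≤ m`-edge `r`-graph removed, together with isolated vertices. -/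
def CoCliqueFew (r m f : ℕ) : Prop :=
  ∃ (K : Finset (Fin m)) (H : Finset (Finset (Fin m))),
    H ⊆ K.powersetCard r ∧ H.card ≤ m ∧
    K.card.choose r = f + H.card

theorem not_coCliqueFew_of_between (r m f k : ℕ) (hr : 2 ≤ r) (hm : r ≤ m)
    (hf : f ≤ m.choose r) (h1 : (k - 1).choose r < f) (h2 : f + m < k.choose r) :
    ¬ CoCliqueFew r m f := by
  rintro ⟨K, H, hHK, hHm, heq⟩
  rcases le_or_gt K.card (k - 1) with h | h
  · have := Nat.choose_le_choose r h
    omega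
  · have hk : k ≤ K.card := by omega
    have := Nat.choose_le_choose r hk
    omega
end

section
/- For integers m > 0 and r ≥ 2, there exists a constant c > 0 such that for all sufficiently large n there is an r-uniform hypergraph on n vertices with at least c·n^{r−1+1/(m+1)} edges in which every set of m vertices spans at most m hyperedges. -/
open Finset
open scoped Classical

/-- An `r`-graph on `Fin n` is `p`-sparse if every `p` vertices span at most `p` edges. -/
def Sparse (n p : ℕ) (G : Finset (Finset (Fin n))) : Prop :=
  ∀ S : Finset (Fin n), S.card = p → (G.filter (fun t => t ⊆ S)).card ≤ p

/-!
The deletion method. Let `N = C(n, r)` and take `2d` of the `r`-subsets of `Fin n` at random,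
where `d = n^{r-1} s` and `s = ⌊n^{1/(m+1)}⌋`. A violation of sparseness contains `m + 1` edges
inside some `m` vertices; there are at most `n^m C(C(m,r), m+1)` such configurations, and each
one is present with probability `C(2d, m+1) / C(N, m+1) ≤ (2d/N)^{m+1}`. As `N ≥ n^r / (r^r r!)`
and `s^{m+1} ≤ n`, the expected number of violations is at most `d` for large `n`, so some choice
has at most `d` of them, and deleting one edge from each leaves an `m`-sparse graph with at least
`d ≥ n^{r-1+1/(m+1)} / 2` edges.
-/

section Deletion

variable {α : Type*}

theorem exists_hitting_set (𝓑 : Finset (Finset α)) (h𝓑 : ∀ F ∈ 𝓑, F.Nonempty) :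
    ∃ H : Finset α, #H ≤ #𝓑 ∧ ∀ F ∈ 𝓑, ¬Disjoint F H := by
  induction 𝓑 using Finset.induction_on with
  | empty => exact ⟨∅, by simp, by simp⟩
  | insert F 𝓑 hF ih =>
    obtain ⟨H, hH, hmeet⟩ := ih fun F' hF' => h𝓑 F' (mem_insert_of_mem hF')
    obtain ⟨x, hx⟩ := h𝓑 F (mem_insert_self F 𝓑)
    refine ⟨insert x H, ?_, fun F' hF' => ?_⟩
    · rw [card_insert_of_notMem hF]
      exact (card_insert_le x H).trans (by omega)
    · rcases mem_insert.mp hF' with rfl | hF'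
      · exact not_disjoint_iff.mpr ⟨x, hx, mem_insert_self x H⟩
      · exact fun hd => hmeet F' hF' (hd.mono_right (subset_insert x H))

theorem card_filter_superset_mul_choose {E F : Finset α} (hFE : F ⊆ E) (t : ℕ) :
    #{G ∈ E.powersetCard t | F ⊆ G} * (#E).choose #F = (#E).choose t * t.choose #F := by
  rcases le_or_gt #F t with hFt | htF
  · rw [card_filter_powersetCard_subset F E t hFE hFt, Nat.choose_mul hFt, mul_comm]
  · have hnone : #{G ∈ E.powersetCard t | F ⊆ G} = 0 := by
      refine card_eq_zero.mpr (filter_eq_empty_iff.mpr fun G hG hFG => ?_)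
      exact htF.not_ge ((card_le_card hFG).trans (mem_powersetCard.mp hG).2.le)
    rw [hnone, Nat.choose_eq_zero_of_lt htF, zero_mul, mul_zero]

/-- `#𝓑 * C(t, K) / C(#E, K)` is the average number of members of `𝓑` inside a `t`-subset
of `E`. -/
theorem exists_mem_powersetCard_card_filter_subset_mul_le {E : Finset α}
    {𝓑 : Finset (Finset α)} {K t : ℕ} (h𝓑 : 𝓑 ⊆ E.powersetCard K) (ht : t ≤ #E) :
    ∃ G ∈ E.powersetCard t, #{F ∈ 𝓑 | F ⊆ G} * (#E).choose K ≤ #𝓑 * t.choose K := by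
  obtain ⟨G, hG, hmin⟩ := exists_min_image (E.powersetCard t) (fun G => #{F ∈ 𝓑 | F ⊆ G})
    (powersetCard_nonempty.mpr ht)
  refine ⟨G, hG, Nat.le_of_mul_le_mul_right ?_ (Nat.choose_pos ht)⟩
  calc #{F ∈ 𝓑 | F ⊆ G} * (#E).choose K * (#E).choose t
      = ∑ _G' ∈ E.powersetCard t, #{F ∈ 𝓑 | F ⊆ G} * (#E).choose K := by
        rw [sum_const, card_powersetCard, smul_eq_mul, mul_comm]
    _ ≤ ∑ G' ∈ E.powersetCard t, #{F ∈ 𝓑 | F ⊆ G'} * (#E).choose K :=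
        sum_le_sum fun G' hG' => Nat.mul_le_mul_right _ (hmin G' hG')
    _ = ∑ F ∈ 𝓑, #{G' ∈ E.powersetCard t | F ⊆ G'} * (#E).choose K := by
        simp only [← sum_mul, card_filter]
        rw [sum_comm]
    _ = ∑ _F ∈ 𝓑, (#E).choose t * t.choose K := sum_congr rfl fun F hF => by
        obtain ⟨hFE, hFK⟩ := mem_powersetCard.mp (h𝓑 hF)
        rw [← hFK]
        exact card_filter_superset_mul_choose hFE t
    _ = #𝓑 * t.choose K * (#E).choose t := by
        rw [sum_const, smul_eq_mul]
        ring

/-- The deletion method: if a random `t`-subset of `E` is expected to contain at most `d`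
members of `𝓑`, then some subset of `E` of size at least `t - d` contains none. -/
theorem exists_subset_forall_not_subset {E : Finset α} {𝓑 : Finset (Finset α)} {K t d : ℕ}
    (h𝓑 : 𝓑 ⊆ E.powersetCard K) (hK : 0 < K) (ht : t ≤ #E)
    (hd : #𝓑 * t.choose K ≤ (#E).choose K * d) :
    ∃ G ⊆ E, (∀ F ∈ 𝓑, ¬F ⊆ G) ∧ t ≤ #G + d := by
  obtain ⟨G₀, hG₀, hfew⟩ := exists_mem_powersetCard_card_filter_subset_mul_le h𝓑 ht
  obtain ⟨hG₀E, hG₀t⟩ := mem_powersetCard.mp hG₀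
  have hbad : #{F ∈ 𝓑 | F ⊆ G₀} ≤ d := by
    rcases Nat.eq_zero_or_pos ((#E).choose K) with h0 | hpos
    · have h𝓑₀ : 𝓑 = ∅ := subset_empty.mp <| h𝓑.trans_eq <|
        powersetCard_eq_empty.mpr (Nat.choose_eq_zero_iff.mp h0)
      simp [h𝓑₀]
    · exact Nat.le_of_mul_le_mul_right (hfew.trans (hd.trans_eq (mul_comm _ _))) hpos
  obtain ⟨H, hH, hhit⟩ := exists_hitting_set {F ∈ 𝓑 | F ⊆ G₀} fun F hF =>
    card_pos.mp ((mem_powersetCard.mp (h𝓑 (mem_filter.mp hF).1)).2 ▸ hK)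
  refine ⟨G₀ \ H, sdiff_subset.trans hG₀E, fun F hF hFG => ?_, ?_⟩
  · exact hhit F (mem_filter.mpr ⟨hF, hFG.trans sdiff_subset⟩)
      (disjoint_of_subset_left hFG sdiff_disjoint)
  · have := le_card_sdiff H G₀
    omega

end Deletion

/-- The obstructions to `Sparse n m` among `r`-graphs. -/
def denseConfigs (n m r : ℕ) : Finset (Finset (Finset (Fin n))) :=
  (univ.powersetCard m).biUnion fun S => (S.powersetCard r).powersetCard (m + 1)

theorem denseConfigs_subset (n m r : ℕ) :
    denseConfigs n m r ⊆ (univ.powersetCard r).powersetCard (m + 1) := by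
  intro F hF
  obtain ⟨S, -, hFS⟩ := mem_biUnion.mp hF
  obtain ⟨hFS, hFcard⟩ := mem_powersetCard.mp hFS
  exact mem_powersetCard.mpr ⟨hFS.trans (powersetCard_mono (subset_univ S)), hFcard⟩

theorem card_denseConfigs_le (n m r : ℕ) :
    #(denseConfigs n m r) ≤ n ^ m * (m.choose r).choose (m + 1) := by
  calc #(denseConfigs n m r)
      ≤ ∑ S ∈ univ.powersetCard m, #((S.powersetCard r).powersetCard (m + 1)) :=
        card_biUnion_le
    _ = ∑ _S ∈ (univ : Finset (Fin n)).powersetCard m, (m.choose r).choose (m + 1) :=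
        sum_congr rfl fun S hS => by
          rw [card_powersetCard, card_powersetCard, (mem_powersetCard.mp hS).2]
    _ = n.choose m * (m.choose r).choose (m + 1) := by
        rw [sum_const, card_powersetCard, card_univ, Fintype.card_fin, smul_eq_mul]
    _ ≤ n ^ m * (m.choose r).choose (m + 1) := Nat.mul_le_mul_right _ (Nat.choose_le_pow n m)

theorem sparse_of_forall_not_subset {n m r : ℕ} {G : Finset (Finset (Fin n))}
    (hG : ∀ e ∈ G, #e = r) (hfree : ∀ F ∈ denseConfigs n m r, ¬F ⊆ G) : Sparse n m G := by
  intro S hS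
  by_contra! hlarge
  obtain ⟨F, hF, hFcard⟩ := exists_subset_card_eq (Nat.succ_le_of_lt hlarge)
  have hFS : F ⊆ S.powersetCard r := fun e he => by
    obtain ⟨heG, heS⟩ := mem_filter.mp (hF he)
    exact mem_powersetCard.mpr ⟨heS, hG e heG⟩
  exact hfree F (mem_biUnion.mpr ⟨S, mem_powersetCard.mpr ⟨subset_univ S, hS⟩,
    mem_powersetCard.mpr ⟨hFS, hFcard⟩⟩) (hF.trans (filter_subset _ _))

theorem exists_sparse_le_card {n m r d : ℕ} (hd : 2 * d ≤ n.choose r)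
    (hconfigs : n ^ m * (m.choose r).choose (m + 1) * (2 * d).choose (m + 1)
      ≤ (n.choose r).choose (m + 1) * d) :
    ∃ G : Finset (Finset (Fin n)), (∀ e ∈ G, #e = r) ∧ Sparse n m G ∧ d ≤ #G := by
  have hE : #((univ : Finset (Fin n)).powersetCard r) = n.choose r := by simp
  obtain ⟨G, hGE, hfree, hG⟩ := exists_subset_forall_not_subset (d := d)
    (denseConfigs_subset n m r) m.succ_pos (hE ▸ hd)
    (hE ▸ (Nat.mul_le_mul_right _ (card_denseConfigs_le n m r)).trans hconfigs)
  have hGr : ∀ e ∈ G, #e = r := fun e he => (mem_powersetCard.mp (hGE he)).2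
  exact ⟨G, hGr, sparse_of_forall_not_subset hGr hfree, by omega⟩

section Estimates

open Nat

theorem descFactorial_mul_pow_le {t N : ℕ} (htN : t ≤ N) (K : ℕ) :
    t.descFactorial K * N ^ K ≤ N.descFactorial K * t ^ K := by
  induction K with
  | zero => simp
  | succ K ih =>
    have hstep : (t - K) * N ≤ (N - K) * t := by
      rw [Nat.sub_mul, Nat.sub_mul, mul_comm t N]
      exact Nat.sub_le_sub_left (Nat.mul_le_mul_left K htN) _
    calc t.descFactorial (K + 1) * N ^ (K + 1)
        = ((t - K) * N) * (t.descFactorial K * N ^ K) := by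
          rw [descFactorial_succ, pow_succ]; ring
      _ ≤ ((N - K) * t) * (N.descFactorial K * t ^ K) := Nat.mul_le_mul hstep ih
      _ = N.descFactorial (K + 1) * t ^ (K + 1) := by
          rw [descFactorial_succ, pow_succ]; ring

theorem choose_mul_pow_le {t N : ℕ} (htN : t ≤ N) (K : ℕ) :
    t.choose K * N ^ K ≤ N.choose K * t ^ K := by
  have h := descFactorial_mul_pow_le htN K
  rw [descFactorial_eq_factorial_mul_choose, descFactorial_eq_factorial_mul_choose, mul_assoc,
    mul_assoc] at h
  exact Nat.le_of_mul_le_mul_left h K.factorial_pos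

theorem pow_le_mul_choose {n r : ℕ} (hrn : r ≤ n) : n ^ r ≤ r ^ r * r ! * n.choose r := by
  have hbase : n ^ r ≤ (r * (n + 1 - r)) ^ r := by
    rcases Nat.eq_zero_or_pos r with rfl | hr
    · simp
    · obtain ⟨k, rfl⟩ := Nat.exists_eq_add_of_le hrn
      rw [show r + k + 1 - r = k + 1 by omega]
      exact Nat.pow_le_pow_left (by nlinarith) r
  calc n ^ r ≤ r ^ r * (n + 1 - r) ^ r := by rwa [mul_pow] at hbase
    _ ≤ r ^ r * (r ! * n.choose r) := by
        rw [← descFactorial_eq_factorial_mul_choose]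
        exact Nat.mul_le_mul_left _ (pow_sub_le_descFactorial n r)
    _ = r ^ r * r ! * n.choose r := (mul_assoc _ _ _).symm

theorem mul_choose_le_of_mul_pow_le {X t N K d : ℕ} (htN : t ≤ N) (hN : 0 < N)
    (h : X * t ^ K ≤ N ^ K * d) : X * t.choose K ≤ N.choose K * d := by
  refine Nat.le_of_mul_le_mul_right ?_ (pow_pos hN K)
  calc X * t.choose K * N ^ K = X * (t.choose K * N ^ K) := mul_assoc _ _ _
    _ ≤ X * (N.choose K * t ^ K) := Nat.mul_le_mul_left _ (choose_mul_pow_le htN K)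
    _ = N.choose K * (X * t ^ K) := by ring
    _ ≤ N.choose K * (N ^ K * d) := Nat.mul_le_mul_left _ h
    _ = N.choose K * d * N ^ K := by ring

theorem two_mul_pow_mul_le_choose {n r s : ℕ} (hr : r ≠ 0) (hrn : r ≤ n) (hs : s ^ 2 ≤ n)
    (hn : (2 * (r ^ r * r !)) ^ 2 ≤ n) : 2 * (n ^ (r - 1) * s) ≤ n.choose r := by
  set c := (r ^ r * r !)
  have hc : 0 < c := by have := Nat.pos_of_ne_zero hr; positivity
  have hcs : 2 * c * s ≤ n := by
    refine (Nat.pow_le_pow_iff_left two_ne_zero).mp ?_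
    calc (2 * c * s) ^ 2 = (2 * c) ^ 2 * s ^ 2 := mul_pow _ _ _
      _ ≤ n * n := Nat.mul_le_mul hn hs
      _ = n ^ 2 := (sq n).symm
  refine Nat.le_of_mul_le_mul_left ?_ hc
  calc c * (2 * (n ^ (r - 1) * s)) = n ^ (r - 1) * (2 * c * s) := by ring
    _ ≤ n ^ (r - 1) * n := Nat.mul_le_mul_left _ hcs
    _ = n ^ r := pow_sub_one_mul hr n
    _ ≤ c * n.choose r := pow_le_mul_choose hrn

theorem mul_two_mul_pow_mul_pow_le {n m r s D : ℕ} (hr : 2 ≤ r) (hrn : r ≤ n) (hs : s ^ m ≤ n)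
    (hn : D * (2 * (r ^ r * r !)) ^ (m + 1) ≤ n) :
    n ^ m * D * (2 * (n ^ (r - 1) * s)) ^ (m + 1) ≤ n.choose r ^ (m + 1) * (n ^ (r - 1) * s) := by
  obtain ⟨k, rfl⟩ := Nat.exists_eq_add_of_le' (by omega : 1 ≤ r)
  rw [Nat.add_sub_cancel]
  set c := ((k + 1) ^ (k + 1) * (k + 1)!)
  have hc : 0 < c := by positivity
  have hDn : D * (2 * c) ^ (m + 1) ≤ n ^ k := hn.trans (Nat.le_self_pow (by omega) n)
  have hN : n ^ (k + 1) ≤ c * n.choose (k + 1) := pow_le_mul_choose hrn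
  have hdm : (n ^ k * s) ^ m ≤ n ^ (k * m) * n := by
    rw [mul_pow, ← pow_mul]
    exact Nat.mul_le_mul_left _ hs
  clear_value c
  generalize n ^ k * s = d at hdm ⊢
  refine Nat.le_of_mul_le_mul_left ?_ (pow_pos hc (m + 1))
  calc c ^ (m + 1) * (n ^ m * D * (2 * d) ^ (m + 1))
      = D * (2 * c) ^ (m + 1) * (n ^ m * d ^ m) * d := by ring
    _ ≤ n ^ k * (n ^ m * (n ^ (k * m) * n)) * d := by gcongr
    _ = (n ^ (k + 1)) ^ (m + 1) * d := by ring
    _ ≤ (c * n.choose (k + 1)) ^ (m + 1) * d := by gcongr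
    _ = c ^ (m + 1) * (n.choose (k + 1) ^ (m + 1) * d) := by ring

end Estimates

theorem floor_rpow_one_div_pow_le (n k : ℕ) : ⌊(n : ℝ) ^ (1 / ((k : ℝ) + 1))⌋₊ ^ (k + 1) ≤ n := by
  have hroot : ((n : ℝ) ^ (1 / ((k : ℝ) + 1))) ^ (k + 1) = n := by
    rw [one_div, ← Nat.cast_succ, Real.rpow_inv_natCast_pow n.cast_nonneg k.succ_ne_zero]
  exact_mod_cast (pow_le_pow_left₀ (Nat.cast_nonneg _) (Nat.floor_le (by positivity)) _).trans
    hroot.le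

open Nat in
/-- There exist `m`-sparse `r`-graphs on `n` vertices with `Ω(n^{r-1+1/(m+1)})` edges. -/
theorem exists_sparse_dense_hypergraph (m r : ℕ) (hm : 0 < m) (hr : 2 ≤ r) :
    ∃ c : ℝ, 0 < c ∧ ∃ N : ℕ, ∀ n ≥ N,
      ∃ G : Finset (Finset (Fin n)), (∀ s ∈ G, s.card = r) ∧ Sparse n m G ∧
        c * (n : ℝ) ^ ((r : ℝ) - 1 + 1 / ((m : ℝ) + 1)) ≤ (G.card : ℝ) := by
  set c := 2 * (r ^ r * r !)
  set D := (m.choose r).choose (m + 1)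
  refine ⟨1 / 2, by norm_num, r + c ^ 2 + D * c ^ (m + 1), fun n hn => ?_⟩
  obtain ⟨hrn, hcn, hDn⟩ : r ≤ n ∧ c ^ 2 ≤ n ∧ D * c ^ (m + 1) ≤ n := by omega
  set x : ℝ := (n : ℝ) ^ (1 / ((m : ℝ) + 1))
  have hx : 1 ≤ x := Real.one_le_rpow (by exact_mod_cast (by omega : 1 ≤ n)) (by positivity)
  have hs : 1 ≤ ⌊x⌋₊ := (Nat.one_le_floor_iff x).mpr hx
  have hsn : ∀ k ≤ m + 1, ⌊x⌋₊ ^ k ≤ n := fun k hk =>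
    (Nat.pow_le_pow_right hs hk).trans (floor_rpow_one_div_pow_le n m)
  have hd : 2 * (n ^ (r - 1) * ⌊x⌋₊) ≤ n.choose r :=
    two_mul_pow_mul_le_choose (by omega) hrn (hsn 2 (by omega)) hcn
  have hconfigs : n ^ m * D * (2 * (n ^ (r - 1) * ⌊x⌋₊)) ^ (m + 1)
      ≤ n.choose r ^ (m + 1) * (n ^ (r - 1) * ⌊x⌋₊) :=
    mul_two_mul_pow_mul_pow_le hr hrn (hsn m (by omega)) hDn
  obtain ⟨G, hGr, hGs, hGd⟩ := exists_sparse_le_card hd <|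
    mul_choose_le_of_mul_pow_le hd (Nat.choose_pos (by omega)) hconfigs
  refine ⟨G, hGr, hGs, ?_⟩
  have hn₀ : (0 : ℝ) < n := by exact_mod_cast (by omega : 0 < n)
  calc 1 / 2 * (n : ℝ) ^ ((r : ℝ) - 1 + 1 / ((m : ℝ) + 1))
      = (n : ℝ) ^ (r - 1) * (x / 2) := by
        rw [Real.rpow_add hn₀, ← Nat.cast_pred (by omega), Real.rpow_natCast]; ring
    _ ≤ (n : ℝ) ^ (r - 1) * ⌊x⌋₊ := by gcongr; exact (Nat.div_two_lt_floor hx).le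
    _ ≤ #G := by exact_mod_cast hGd
end

section
/- Let r ≥ 2, p ≥ 2 be integers and let 0 ≤ c < 1. For all sufficiently large n and every integer e with 0 ≤ e ≤ c·C(n,r), there exist a nonnegative integer k and an r-uniform hypergraph on n vertices with exactly e edges that is the vertex-disjoint union of a complete r-graph K_k^{(r)} and a p-sparse r-graph on n−k vertices. -/
open Finset
open scoped Classical

/-!
Take `k` maximal with `C(k, r) ≤ e`; the remaining `e - C(k, r)` edges number fewer than
`C(k, r - 1) ≤ n ^ (r - 1)`. Since `C(n, r) - C(k, r) ≤ (n - k) C(n - 1, r - 1) = r (n - k) C(n, r) / n`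
and `C(k, r) ≤ c C(n, r)`, the complement of the clique has `m = n - k ≥ (1 - c) n / r` vertices.
A uniformly random set of `A m ^ (r - 1)` of its `r`-sets is `p`-sparse with positive probability:
a violation needs `p + 1` edges on `p` vertices, there are `O(m ^ p)` such configurations, and each
lies in the random set with probability `O(m ^ (-(p + 1)))`.
-/

open Nat in
theorem pow_le_two_pow_mul_factorial_mul_choose {m j : ℕ} (h : 2 * j ≤ m) :
    m ^ j ≤ 2 ^ j * j ! * m.choose j :=
  calc m ^ j ≤ (2 * (m + 1 - j)) ^ j := Nat.pow_le_pow_left (by omega) _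
    _ = 2 ^ j * (m + 1 - j) ^ j := mul_pow _ _ _
    _ ≤ 2 ^ j * m.descFactorial j := Nat.mul_le_mul_left _ (Nat.pow_sub_le_descFactorial m j)
    _ = 2 ^ j * j ! * m.choose j := by rw [Nat.descFactorial_eq_factorial_mul_choose, mul_assoc]

theorem choose_succ_le_choose_succ_add_sub_mul {k n : ℕ} (s : ℕ) (hkn : k ≤ n) :
    n.choose (s + 1) ≤ k.choose (s + 1) + (n - k) * (n - 1).choose s := by
  induction n, hkn using Nat.le_induction with
  | base => simp
  | succ n hkn ih =>
    calc (n + 1).choose (s + 1) = n.choose s + n.choose (s + 1) := Nat.choose_succ_succ' n s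
      _ ≤ n.choose s + (k.choose (s + 1) + (n - k) * n.choose s) := by
          gcongr; exact ih.trans (by gcongr; omega)
      _ = k.choose (s + 1) + (n + 1 - k) * (n + 1 - 1).choose s := by
        rw [Nat.add_sub_cancel, show n + 1 - k = n - k + 1 by omega]; ring

theorem mul_choose_le_mul_choose_add {k n : ℕ} (s : ℕ) (hkn : k ≤ n) :
    n * n.choose (s + 1) ≤ n * k.choose (s + 1) + (s + 1) * (n - k) * n.choose (s + 1) := by
  obtain _ | n := n
  · simp
  have hpascal : (n + 1) * n.choose s = (n + 1).choose (s + 1) * (s + 1) :=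
    Nat.add_one_mul_choose_eq n s
  calc (n + 1) * (n + 1).choose (s + 1)
      ≤ (n + 1) * (k.choose (s + 1) + (n + 1 - k) * n.choose s) :=
        Nat.mul_le_mul_left _ (choose_succ_le_choose_succ_add_sub_mul s hkn)
    _ = (n + 1) * k.choose (s + 1) + (s + 1) * (n + 1 - k) * (n + 1).choose (s + 1) := by
        rw [mul_add, mul_left_comm, hpascal]; ring

theorem exists_choose_le_lt_choose_succ {r e n : ℕ} (hr : 0 < r) (he : e < n.choose r) :
    ∃ k < n, k.choose r ≤ e ∧ e < (k + 1).choose r := by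
  have hex : ∃ k : ℕ, e < k.choose r := ⟨n, he⟩
  have hpos : 0 < Nat.find hex := by
    by_contra! h0
    have := Nat.find_spec hex
    rw [Nat.le_zero.1 h0, Nat.choose_eq_zero_of_lt hr] at this
    omega
  refine ⟨Nat.find hex - 1, by have := Nat.find_min' hex he; omega, ?_, ?_⟩
  · exact not_lt.1 (Nat.find_min hex (by omega))
  · rw [Nat.sub_add_cancel hpos]; exact Nat.find_spec hex

section UnionBound

variable {α : Type*} [DecidableEq α]

theorem card_filter_subset_powersetCard_le {E F : Finset α} (hF : F ⊆ E) (q : ℕ) :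
    #{G ∈ E.powersetCard q | F ⊆ G} ≤ (#E - #F).choose (q - #F) := by
  calc #{G ∈ E.powersetCard q | F ⊆ G}
      ≤ #(((E \ F).powersetCard (q - #F)).image (· ∪ F)) := by
        refine card_le_card fun G hG => ?_
        obtain ⟨hGq, hFG⟩ := mem_filter.1 hG
        obtain ⟨hGE, hG⟩ := mem_powersetCard.1 hGq
        refine mem_image.2 ⟨G \ F, mem_powersetCard.2 ⟨sdiff_subset_sdiff hGE le_rfl, ?_⟩,
          sdiff_union_of_subset hFG⟩
        rw [card_sdiff_of_subset hFG, hG]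
    _ ≤ #((E \ F).powersetCard (q - #F)) := card_image_le
    _ = (#E - #F).choose (q - #F) := by rw [card_powersetCard, card_sdiff_of_subset hF]

/-- The union bound: `#𝓑 * C(q, j) / C(#E, j)` is the expected number of members of `𝓑` inside a
uniformly random `q`-subset of `E`. -/
theorem exists_mem_powersetCard_forall_not_subset {E : Finset α} {𝓑 : Finset (Finset α)}
    {j q : ℕ} (h𝓑 : 𝓑 ⊆ E.powersetCard j) (hqE : q ≤ #E)
    (hcount : #𝓑 * q.choose j < (#E).choose j) :
    ∃ G ∈ E.powersetCard q, ∀ F ∈ 𝓑, ¬F ⊆ G := by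
  by_cases hjq : j ≤ q
  swap
  · obtain ⟨G, hG⟩ := powersetCard_nonempty.2 hqE
    refine ⟨G, hG, fun F hF hFG => hjq ?_⟩
    simpa only [(mem_powersetCard.1 (h𝓑 hF)).2, (mem_powersetCard.1 hG).2] using card_le_card hFG
  by_contra! hcover
  set X := (#E - j).choose (q - j)
  have hle : (#E).choose q ≤ #𝓑 * X :=
    calc (#E).choose q = #(E.powersetCard q) := (card_powersetCard q E).symm
      _ ≤ #(𝓑.biUnion fun F => {G ∈ E.powersetCard q | F ⊆ G}) := by
        refine card_le_card fun G hG => ?_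
        obtain ⟨F, hF, hFG⟩ := hcover G hG
        exact mem_biUnion.2 ⟨F, hF, mem_filter.2 ⟨hG, hFG⟩⟩
      _ ≤ ∑ F ∈ 𝓑, #{G ∈ E.powersetCard q | F ⊆ G} := card_biUnion_le
      _ ≤ ∑ _F ∈ 𝓑, X := sum_le_sum fun F hF => by
        obtain ⟨hFE, hFj⟩ := mem_powersetCard.1 (h𝓑 hF)
        simpa only [hFj] using card_filter_subset_powersetCard_le hFE q
      _ = #𝓑 * X := by rw [sum_const, smul_eq_mul]
  have hX : 0 < X := Nat.choose_pos (by omega)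
  have hdouble : (#E).choose q * q.choose j = (#E).choose j * X := Nat.choose_mul hjq
  have : (#E).choose j * X < (#E).choose j * X :=
    calc (#E).choose j * X = (#E).choose q * q.choose j := hdouble.symm
      _ ≤ #𝓑 * X * q.choose j := Nat.mul_le_mul_right _ hle
      _ = #𝓑 * q.choose j * X := by ring
      _ < (#E).choose j * X := Nat.mul_lt_mul_of_pos_right hcount hX
  exact lt_irrefl _ this

def denseFamilies (E : Finset (Finset α)) (p : ℕ) : Finset (Finset (Finset α)) :=
  {F ∈ E.powersetCard (p + 1) | #(F.sup id) ≤ p}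

theorem card_denseFamilies_le {V : Finset α} {p : ℕ} (r : ℕ) (hp : p ≤ #V) :
    #(denseFamilies (V.powersetCard r) p) ≤ #V ^ p * 2 ^ 2 ^ p := by
  calc #(denseFamilies (V.powersetCard r) p)
      ≤ #((V.powersetCard p).biUnion fun U => U.powerset.powerset) := by
        refine card_le_card fun F hF => ?_
        obtain ⟨hFE, hFp⟩ := mem_filter.1 hF
        have hsupV : F.sup id ⊆ V :=
          Finset.sup_le fun t ht => (mem_powersetCard.1 ((mem_powersetCard.1 hFE).1 ht)).1
        obtain ⟨U, hFU, hUV, hU⟩ := exists_subsuperset_card_eq hsupV hFp hp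
        refine mem_biUnion.2 ⟨U, mem_powersetCard.2 ⟨hUV, hU⟩, mem_powerset.2 fun t ht => ?_⟩
        exact mem_powerset.2 ((le_sup (f := id) ht).trans hFU)
    _ ≤ ∑ U ∈ V.powersetCard p, #U.powerset.powerset := card_biUnion_le
    _ = (#V).choose p * 2 ^ 2 ^ p := by
        rw [sum_congr rfl fun U hU => by rw [card_powerset, card_powerset, (mem_powersetCard.1 hU).2],
          sum_const, card_powersetCard, smul_eq_mul]
    _ ≤ #V ^ p * 2 ^ 2 ^ p := Nat.mul_le_mul_right _ (Nat.choose_le_pow _ _)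

end UnionBound

theorem Sparse.anti {n p : ℕ} {G H : Finset (Finset (Fin n))} (hG : Sparse n p G) (hHG : H ⊆ G) :
    Sparse n p H :=
  fun S hS => (card_le_card (filter_subset_filter _ hHG)).trans (hG S hS)

theorem sparse_of_forall_lt_card_sup {n p : ℕ} {G : Finset (Finset (Fin n))}
    (h : ∀ F ⊆ G, #F = p + 1 → p < #(F.sup id)) : Sparse n p G := by
  intro S hS
  by_contra! hlt
  obtain ⟨F, hFS, hF⟩ := exists_subset_card_eq (Nat.succ_le_of_lt hlt)
  have hsup : F.sup id ⊆ S := Finset.sup_le fun t ht => (mem_filter.1 (hFS ht)).2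
  have := h F (hFS.trans (filter_subset _ _)) hF
  have := card_le_card hsup
  omega

theorem exists_sparse_of_card_mul_choose_lt {n p q : ℕ} (r : ℕ) (V : Finset (Fin n))
    (hqE : q ≤ (#V).choose r)
    (hcount : #(denseFamilies (V.powersetCard r) p) * q.choose (p + 1)
      < ((#V).choose r).choose (p + 1)) :
    ∃ G ⊆ V.powersetCard r, Sparse n p G ∧ #G = q := by
  rw [← card_powersetCard r V] at hqE hcount
  obtain ⟨G, hG, hfree⟩ := exists_mem_powersetCard_forall_not_subset (filter_subset _ _) hqE hcount
  obtain ⟨hGE, hGq⟩ := mem_powersetCard.1 hG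
  refine ⟨G, hGE, sparse_of_forall_lt_card_sup fun F hFG hF => ?_, hGq⟩
  by_contra! hsup
  exact hfree F (mem_filter.2 ⟨mem_powersetCard.2 ⟨hFG.trans hGE, hF⟩, hsup⟩) hFG

open Nat in
theorem exists_forall_ge_mul_pow_le_choose_and_mul_choose_lt (s p A : ℕ) : ∃ M₀, ∀ m ≥ M₀,
    A * m ^ s ≤ m.choose (s + 1) ∧
      m ^ p * 2 ^ 2 ^ p * (A * m ^ s).choose (p + 1) < (m.choose (s + 1)).choose (p + 1) := by
  set K := 2 ^ (s + 1) * (s + 1)!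
  set L := 2 ^ (p + 1) * (p + 1)!
  have hK : 0 < K := by positivity
  refine ⟨2 * (s + 1) + 2 * (p + 1) * K + A * K + 2 ^ 2 ^ p * A ^ (p + 1) * K ^ (p + 1) * L + 1,
    fun m hm => ?_⟩
  set M := m.choose (s + 1)
  have hmM : m ^ (s + 1) ≤ K * M := pow_le_two_pow_mul_factorial_mul_choose (by omega)
  have hm_pow : m ≤ m ^ (s + 1) := Nat.le_self_pow (by omega) m
  have hqM : A * m ^ s ≤ M := by
    refine Nat.le_of_mul_le_mul_left ?_ hK
    calc K * (A * m ^ s) = (A * K) * m ^ s := by ring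
      _ ≤ m * m ^ s := Nat.mul_le_mul_right _ (by omega)
      _ = m ^ (s + 1) := (_root_.pow_succ' m s).symm
      _ ≤ K * M := hmM
  have hM : 2 * (p + 1) ≤ M := by
    refine Nat.le_of_mul_le_mul_left ?_ hK
    calc K * (2 * (p + 1)) = 2 * (p + 1) * K := by ring
      _ ≤ m ^ (s + 1) := by omega
      _ ≤ K * M := hmM
  have hML : M ^ (p + 1) ≤ L * M.choose (p + 1) := pow_le_two_pow_mul_factorial_mul_choose hM
  refine ⟨hqM, Nat.lt_of_mul_lt_mul_left (a := K ^ (p + 1) * L) ?_⟩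
  set X := m ^ (p + s * (p + 1))
  have hX : 0 < X := pow_pos (by omega) _
  calc K ^ (p + 1) * L * (m ^ p * 2 ^ 2 ^ p * (A * m ^ s).choose (p + 1))
      ≤ K ^ (p + 1) * L * (m ^ p * 2 ^ 2 ^ p * (A * m ^ s) ^ (p + 1)) := by
        gcongr; exact Nat.choose_le_pow _ _
    _ = (2 ^ 2 ^ p * A ^ (p + 1) * K ^ (p + 1) * L) * X := by rw [mul_pow, ← pow_mul]; ring
    _ < m * X := Nat.mul_lt_mul_of_pos_right (by omega) hX
    _ = (m ^ (s + 1)) ^ (p + 1) := by rw [← pow_mul, ← _root_.pow_succ']; ring_nf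
    _ ≤ (K * M) ^ (p + 1) := Nat.pow_le_pow_left hmM _
    _ ≤ K ^ (p + 1) * L * M.choose (p + 1) := by rw [mul_pow, mul_assoc]; gcongr

theorem exists_sparse_of_le_card (s p A : ℕ) : ∃ M₀, ∀ {n : ℕ} (V : Finset (Fin n)), M₀ ≤ #V →
    ∃ G ⊆ V.powersetCard (s + 1), Sparse n p G ∧ #G = A * #V ^ s := by
  obtain ⟨M₀, hM₀⟩ := exists_forall_ge_mul_pow_le_choose_and_mul_choose_lt s p A
  refine ⟨M₀ + p, fun V hV => ?_⟩
  obtain ⟨hqE, hcount⟩ := hM₀ #V (by omega)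
  exact exists_sparse_of_card_mul_choose_lt _ V hqE
    ((Nat.mul_le_mul_right _ (card_denseFamilies_le _ (by omega))).trans_lt hcount)

theorem le_mul_sub_of_choose_le_mul_choose {k n s D : ℕ} {c : ℝ} (hkn : k ≤ n) (hsn : s + 1 ≤ n)
    (hD : (s + 1 : ℝ) ≤ D * (1 - c)) (hk : (k.choose (s + 1) : ℝ) ≤ c * n.choose (s + 1)) :
    n ≤ D * (n - k) := by
  have hC : (0 : ℝ) < n.choose (s + 1) := by exact_mod_cast Nat.choose_pos hsn
  have hdef : (n : ℝ) * n.choose (s + 1)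
      ≤ n * k.choose (s + 1) + (s + 1) * (n - k : ℕ) * n.choose (s + 1) := by
    exact_mod_cast mul_choose_le_mul_choose_add s hkn
  have hlin : (1 - c) * n ≤ (s + 1) * (n - k : ℕ) := by
    refine le_of_mul_le_mul_right ?_ hC
    nlinarith [mul_le_mul_of_nonneg_left hk (Nat.cast_nonneg (α := ℝ) n)]
  have hc : 0 < 1 - c := by
    by_contra! h; nlinarith [(Nat.cast_nonneg (α := ℝ) D)]
  have : (1 - c) * n ≤ (1 - c) * (D * (n - k : ℕ)) := by
    nlinarith [(Nat.cast_nonneg (α := ℝ) (n - k))]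
  exact_mod_cast le_of_mul_le_mul_left this hc

theorem realise_clique_plus_sparse_general (r p : ℕ) (hr : 2 ≤ r)
    (c : ℝ) (hc1 : c < 1) :
    ∃ N : ℕ, ∀ n ≥ N, ∀ e : ℕ, (e : ℝ) ≤ c * (n.choose r : ℝ) →
      ∃ (k : ℕ) (K : Finset (Fin n)) (H : Finset (Finset (Fin n))),
        K.card = k ∧ (∀ s ∈ H, s.card = r ∧ Disjoint s K) ∧ Sparse n p H ∧
        k.choose r + H.card = e := by
  obtain ⟨s, rfl⟩ : ∃ s, r = s + 1 := ⟨r - 1, by omega⟩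
  set D := ⌈(s + 1 : ℝ) / (1 - c)⌉₊
  have hD : (s + 1 : ℝ) ≤ D * (1 - c) := (div_le_iff₀ (by linarith)).1 (Nat.le_ceil _)
  have hDpos : 0 < D := Nat.ceil_pos.2 (div_pos (by positivity) (by linarith))
  obtain ⟨M₀, hM₀⟩ := exists_sparse_of_le_card s p (D ^ s)
  refine ⟨D * M₀ + s + 1, fun n hn e he => ?_⟩
  have hC : (0 : ℝ) < n.choose (s + 1) := by exact_mod_cast Nat.choose_pos (by omega)
  have he_lt : e < n.choose (s + 1) := by
    have : (e : ℝ) < n.choose (s + 1) := by nlinarith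
    exact_mod_cast this
  obtain ⟨k, hkn, hke, hek⟩ := exists_choose_le_lt_choose_succ (by omega : 0 < s + 1) he_lt
  have hnk : n ≤ D * (n - k) := le_mul_sub_of_choose_le_mul_choose hkn.le (by omega) hD
    ((Nat.cast_le.2 hke).trans he)
  obtain ⟨K, -, hK⟩ := exists_subset_card_eq (s := (univ : Finset (Fin n))) (by simpa using hkn.le)
  have hKc : #Kᶜ = n - k := by rw [card_compl, Fintype.card_fin, hK]
  obtain ⟨G, hGV, hG, hGcard⟩ := hM₀ Kᶜ (by rw [hKc]; nlinarith)
  have hgap : e - k.choose (s + 1) ≤ #G := by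
    have : e - k.choose (s + 1) < k.choose s := by have := Nat.choose_succ_succ' k s; omega
    calc e - k.choose (s + 1) ≤ n ^ s := (this.trans_le ((Nat.choose_le_choose s hkn.le).trans
          (Nat.choose_le_pow n s))).le
      _ ≤ (D * (n - k)) ^ s := Nat.pow_le_pow_left hnk s
      _ = #G := by rw [hGcard, hKc, mul_pow]
  obtain ⟨H, hHG, hH⟩ := exists_subset_card_eq hgap
  refine ⟨k, K, H, hK, fun t ht => ?_, hG.anti hHG, by omega⟩
  obtain ⟨htK, ht⟩ := mem_powersetCard.1 (hGV (hHG ht))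
  exact ⟨ht, subset_compl_iff_disjoint_right.1 htK⟩

/-- Every pair `(n,e)` with `e ≤ c·C(n,r)` can be realised, for large `n`, as the
vertex-disjoint union of a clique `K_k^{(r)}` and a `p`-sparse `r`-graph on `n-k` vertices. -/
theorem realise_clique_plus_sparse (r p : ℕ) (hr : 2 ≤ r) (hp : 2 ≤ p)
    (c : ℝ) (hc0 : 0 ≤ c) (hc1 : c < 1) :
    ∃ N : ℕ, ∀ n ≥ N, ∀ e : ℕ, (e : ℝ) ≤ c * (n.choose r : ℝ) →
      ∃ (k : ℕ) (K : Finset (Fin n)) (H : Finset (Finset (Fin n))),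
        K.card = k ∧ (∀ s ∈ H, s.card = r ∧ Disjoint s K) ∧ Sparse n p H ∧
        k.choose r + H.card = e :=
  realise_clique_plus_sparse_general r p hr c hc1
end

section
/- Let r ≥ 2, p ≥ 2 be integers and let 0 < c ≤ 1. For all sufficiently large n and every integer e with c·C(n,r) ≤ e ≤ C(n,r), there exists an r-uniform hypergraph on n vertices with exactly e edges that is the complement of the vertex-disjoint union of a complete r-graph and a p-sparse r-graph; equivalently, it is obtained from a complete r-graph on some k ≤ n vertices by deleting the edges of a p-sparse r-graph and adding n−k isolated vertices. -/
/-!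
Let `k` be least with `e ≤ C(k, r)`, so that `d := C(k, r) - e < C(k - 1, r - 1)`. It suffices to
find a `p`-sparse family of exactly `d` edges of the complete `r`-graph on `k` vertices, and `k` is
large because `e ≥ c·C(n, r)` is. Such a family exists by the first moment method: a family is
`p`-sparse as soon as it contains no `p + 1` edges inside a common `p`-set; there are at most
`C(k, p)·C(C(p, r), p + 1)` such configurations, each lying in a fraction `C(d, p + 1) / C(N, p + 1)`
of the `d`-subsets of the `N = C(k, r)` edges, and this union bound is below `1` because
`C(k, p)·C(d, p + 1)` has degree `r(p + 1) - 1` in `k` while `C(N, p + 1)` has degree `r(p + 1)`.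
-/

open Finset
open scoped Classical

open scoped Nat

theorem exists_lt_le_succ_of_lt_of_le {α : Type*} [LinearOrder α] {f : ℕ → α} {e : α} {m n : ℕ}
    (hm : f m < e) (hn : e ≤ f n) (hmn : m ≤ n) :
    ∃ k, m ≤ k ∧ k < n ∧ f k < e ∧ e ≤ f (k + 1) := by
  induction n, hmn using Nat.le_induction with
  | base => exact absurd hn (not_le.2 hm)
  | succ n hmn ih =>
    by_cases h : e ≤ f n
    · obtain ⟨k, hmk, hkn, hk⟩ := ih h
      exact ⟨k, hmk, by omega, hk⟩
    · exact ⟨n, hmn, by omega, not_le.1 h, hn⟩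

theorem mul_choose_pred_pred {k r : ℕ} (hk : 0 < k) (hr : 0 < r) :
    k * (k - 1).choose (r - 1) = r * k.choose r := by
  have := Nat.add_one_mul_choose_eq (k - 1) (r - 1)
  rwa [Nat.sub_add_cancel hk, Nat.sub_add_cancel hr, mul_comm (k.choose r)] at this

theorem le_mul_choose {n r : ℕ} (hr : 0 < r) (hrn : r ≤ n) : n ≤ r * n.choose r := by
  rw [← mul_choose_pred_pred (by omega) hr]
  exact Nat.le_mul_of_pos_right n (Nat.choose_pos (by omega))

/-- First moment method: `#B · C(d, j) / C(#E, j)` is the expected number of members of `B` inside a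
uniformly random `d`-subset of `E`. -/
theorem exists_mem_powersetCard_forall_not_subset_s5 {α : Type*} [DecidableEq α] {E : Finset α}
    {B : Finset (Finset α)} {j d : ℕ} (hB : ∀ F ∈ B, F ⊆ E ∧ #F = j) (hjd : j ≤ d)
    (hdE : d ≤ #E) (h : #B * d.choose j < (#E).choose j) :
    ∃ H ∈ E.powersetCard d, ∀ F ∈ B, ¬F ⊆ H := by
  set bad := B.biUnion fun F => (E.powersetCard d).filter (F ⊆ ·)
  have hbad : #bad < #(E.powersetCard d) := by
    refine lt_of_mul_lt_mul_right (a := d.choose j) ?_ (Nat.zero_le _)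
    have hpos : 0 < (#E - j).choose (d - j) := Nat.choose_pos (by omega)
    calc #bad * d.choose j ≤ #B * (#E - j).choose (d - j) * d.choose j := by
          gcongr
          refine card_biUnion_le_card_mul _ _ _ fun F hF => ?_
          rw [card_filter_powersetCard_subset F E d (hB F hF).1 ((hB F hF).2 ▸ hjd), (hB F hF).2]
      _ < (#E).choose j * (#E - j).choose (d - j) := by
          rw [mul_right_comm]
          exact Nat.mul_lt_mul_of_pos_right h hpos
      _ = #(E.powersetCard d) * d.choose j := by rw [card_powersetCard, Nat.choose_mul hjd]
  obtain ⟨H, hH, hHbad⟩ := exists_mem_notMem_of_card_lt_card hbad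
  exact ⟨H, hH, fun F hF hFH => hHbad (mem_biUnion.2 ⟨F, hF, mem_filter.2 ⟨hH, hFH⟩⟩)⟩

theorem sparse_of_forall_not_subset_s5 {n r p : ℕ} {K : Finset (Fin n)}
    {H : Finset (Finset (Fin n))} (hH : H ⊆ K.powersetCard r) (hpK : p ≤ #K)
    (hfree : ∀ S ∈ K.powersetCard p, ∀ F ∈ (S.powersetCard r).powersetCard (p + 1), ¬F ⊆ H) :
    Sparse n p H := by
  intro S hS
  by_contra! hlarge
  obtain ⟨F, hFS, hF⟩ := exists_subset_card_eq (Nat.succ_le_of_lt hlarge)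
  obtain ⟨S', hSS', hS'K, hS'⟩ := exists_subsuperset_card_eq (inter_subset_right : S ∩ K ⊆ K)
    ((card_le_card inter_subset_left).trans hS.le) hpK
  refine hfree S' (mem_powersetCard.2 ⟨hS'K, hS'⟩) F (mem_powersetCard.2 ⟨fun t ht => ?_, hF⟩)
    (hFS.trans (filter_subset _ _))
  obtain ⟨htH, htS⟩ := mem_filter.1 (hFS ht)
  obtain ⟨htK, htr⟩ := mem_powersetCard.1 (hH htH)
  exact mem_powersetCard.2 ⟨(subset_inter htS htK).trans hSS', htr⟩

/-- With `N = C(k, r)` and `D = C(k - 1, r - 1)`, the identity `k · D = r · N` makes the left side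
`O(k^p D^(p + 1))` and the right side `≳ (k D)^(p + 1)`. -/
theorem choose_mul_choose_lt_choose {k r p A : ℕ} (hr : 0 < r) (hrk : r ≤ k) (hpk : 2 * r * p ≤ k)
    (hA : A * (p + 1)! * (2 * r) ^ (p + 1) < k) :
    k.choose p * A * ((k - 1).choose (r - 1)).choose (p + 1) < (k.choose r).choose (p + 1) := by
  set D := (k - 1).choose (r - 1)
  set N := k.choose r
  have hkD : k * D = r * N := mul_choose_pred_pred (by omega) hr
  have hD : 0 < D := Nat.choose_pos (by omega)
  have hpN : 2 * p ≤ N := Nat.le_of_mul_le_mul_left (by nlinarith) hr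
  have hdesc : (N - p) ^ (p + 1) ≤ (p + 1)! * N.choose (p + 1) := by
    rw [← Nat.descFactorial_eq_factorial_mul_choose]
    simpa using N.pow_sub_le_descFactorial (p + 1)
  suffices (2 * r) ^ (p + 1) * ((p + 1)! * (k.choose p * A * D.choose (p + 1))) <
      (2 * r) ^ (p + 1) * ((p + 1)! * N.choose (p + 1)) from
    Nat.lt_of_mul_lt_mul_left (Nat.lt_of_mul_lt_mul_left this)
  calc (2 * r) ^ (p + 1) * ((p + 1)! * (k.choose p * A * D.choose (p + 1)))
      = A * (p + 1)! * (2 * r) ^ (p + 1) * (k.choose p * D.choose (p + 1)) := by ring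
    _ ≤ A * (p + 1)! * (2 * r) ^ (p + 1) * (k ^ p * D ^ (p + 1)) :=
        Nat.mul_le_mul_left _ (Nat.mul_le_mul (Nat.choose_le_pow _ _) (Nat.choose_le_pow _ _))
    _ < k * (k ^ p * D ^ (p + 1)) :=
        Nat.mul_lt_mul_of_pos_right hA (Nat.mul_pos (Nat.pow_pos (by omega)) (Nat.pow_pos hD))
    _ = (r * N) ^ (p + 1) := by rw [← hkD]; ring
    _ ≤ (2 * r * (N - p)) ^ (p + 1) := by
        refine Nat.pow_le_pow_left ?_ _
        calc r * N ≤ r * (2 * (N - p)) := by gcongr; omega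
          _ = 2 * r * (N - p) := by ring
    _ = (2 * r) ^ (p + 1) * (N - p) ^ (p + 1) := by ring
    _ ≤ (2 * r) ^ (p + 1) * ((p + 1)! * N.choose (p + 1)) := by gcongr

theorem exists_sparse_subset_powersetCard (r p : ℕ) (hr : 0 < r) :
    ∃ K₀, ∀ n (K : Finset (Fin n)), K₀ ≤ #K → ∀ d ≤ (#K - 1).choose (r - 1),
      ∃ H ⊆ K.powersetCard r, Sparse n p H ∧ #H = d := by
  set A := (p.choose r).choose (p + 1)
  refine ⟨A * (p + 1)! * (2 * r) ^ (p + 1) + 2 * r * p + r + 1, fun n K hK d hd => ?_⟩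
  have hdE : d ≤ #(K.powersetCard r) := by
    rw [card_powersetCard, Nat.choose_eq_choose_pred_add (by omega) hr]
    omega
  rcases le_or_gt d p with hdp | hpd
  · obtain ⟨H, hHE, rfl⟩ := exists_subset_card_eq hdE
    exact ⟨H, hHE, fun S _ => (card_filter_le _ _).trans hdp, rfl⟩
  set B := (K.powersetCard p).biUnion fun S => (S.powersetCard r).powersetCard (p + 1)
  have hB : ∀ F ∈ B, F ⊆ K.powersetCard r ∧ #F = p + 1 := by
    intro F hF
    obtain ⟨S, hS, hFS⟩ := mem_biUnion.1 hF
    obtain ⟨hFS, hF⟩ := mem_powersetCard.1 hFS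
    exact ⟨hFS.trans (powersetCard_mono (mem_powersetCard.1 hS).1), hF⟩
  have hcardB : #B ≤ (#K).choose p * A := by
    rw [← card_powersetCard]
    refine card_biUnion_le_card_mul _ _ _ fun S hS => ?_
    rw [card_powersetCard, card_powersetCard, (mem_powersetCard.1 hS).2]
  obtain ⟨H, hH, hfree⟩ := exists_mem_powersetCard_forall_not_subset_s5 hB hpd hdE <| by
    calc #B * d.choose (p + 1)
        ≤ (#K).choose p * A * ((#K - 1).choose (r - 1)).choose (p + 1) :=
          Nat.mul_le_mul hcardB (Nat.choose_le_choose _ hd)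
      _ < (#(K.powersetCard r)).choose (p + 1) := by
          rw [card_powersetCard]
          exact choose_mul_choose_lt_choose hr (by omega) (by omega) (by omega)
  obtain ⟨hHE, rfl⟩ := mem_powersetCard.1 hH
  have hpK : p ≤ #K := (Nat.le_mul_of_pos_left p (by omega : 0 < 2 * r)).trans (by omega)
  exact ⟨H, hHE, sparse_of_forall_not_subset_s5 hHE hpK
    fun S hS F hF => hfree F (mem_biUnion.2 ⟨S, hS, hF⟩), rfl⟩

theorem realise_coclique_minus_sparse_general (r p : ℕ) (hr : 2 ≤ r)
    (c : ℝ) (hc0 : 0 < c) :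
    ∃ N : ℕ, ∀ n ≥ N, ∀ e : ℕ, c * (n.choose r : ℝ) ≤ (e : ℝ) → e ≤ n.choose r →
      ∃ (K : Finset (Fin n)) (H : Finset (Finset (Fin n))),
        H ⊆ K.powersetCard r ∧ Sparse n p H ∧
        K.card.choose r = e + H.card := by
  obtain ⟨K₀, hK₀⟩ := exists_sparse_subset_powersetCard r p (by omega)
  obtain ⟨N, hN⟩ := exists_nat_gt (r * K₀.choose r / c : ℝ)
  refine ⟨max r N, fun n hn e hce hen => ?_⟩
  have hK₀e : K₀.choose r < e := by
    have hnr : (n : ℝ) ≤ r * n.choose r := mod_cast le_mul_choose (by omega) (le_of_max_le_left hn)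
    have : (r : ℝ) * K₀.choose r < r * e :=
      calc (r : ℝ) * K₀.choose r < c * N := by rw [div_lt_iff₀ hc0] at hN; linarith
        _ ≤ c * n := by gcongr; exact_mod_cast le_of_max_le_right hn
        _ ≤ r * (c * n.choose r) := by nlinarith
        _ ≤ r * e := by gcongr
    exact_mod_cast lt_of_mul_lt_mul_left this (Nat.cast_nonneg r)
  have hK₀n : K₀ ≤ n := by
    by_contra! h
    exact absurd (Nat.choose_le_choose r h.le) (by omega)
  obtain ⟨k, hK₀k, hkn, hke, hek⟩ :=
    exists_lt_le_succ_of_lt_of_le (f := (·.choose r)) hK₀e hen hK₀n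
  obtain ⟨K, -, hK⟩ := exists_subset_card_eq (show k + 1 ≤ #(univ : Finset (Fin n)) by simpa)
  have hpascal : (k + 1).choose r = k.choose (r - 1) + k.choose r := by
    simpa using Nat.choose_eq_choose_pred_add (Nat.succ_pos k) (show 0 < r by omega)
  obtain ⟨H, hHK, hH, hHcard⟩ :=
    hK₀ n K (by omega) ((k + 1).choose r - e) (by rw [hK, Nat.add_sub_cancel]; omega)
  exact ⟨K, H, hHK, hH, by rw [hK, hHcard]; omega⟩

/-- Every pair `(n,e)` with `c·C(n,r) ≤ e ≤ C(n,r)` can be realised, for large `n`,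
as a complete `r`-graph on some `k ≤ n` vertices with the edges of a `p`-sparse
`r`-graph deleted, together with `n-k` isolated vertices. -/
theorem realise_coclique_minus_sparse (r p : ℕ) (hr : 2 ≤ r) (hp : 2 ≤ p)
    (c : ℝ) (hc0 : 0 < c) (hc1 : c ≤ 1) :
    ∃ N : ℕ, ∀ n ≥ N, ∀ e : ℕ, c * (n.choose r : ℝ) ≤ (e : ℝ) → e ≤ n.choose r →
      ∃ (K : Finset (Fin n)) (H : Finset (Finset (Fin n))),
        H ⊆ K.powersetCard r ∧ Sparse n p H ∧
        K.card.choose r = e + H.card :=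
  realise_coclique_minus_sparse_general r p hr c hc0
end

section
/- Let m ≥ r ≥ 2 and 0 ≤ f ≤ C(m,r). Suppose that neither (m,f) nor (m, C(m,r) − f) can be realised as an r-uniform hypergraph that is the vertex-disjoint union of a complete r-graph and an r-graph with at most m edges. Then the pair (m,f) is absolutely r-avoidable. -/
open Finset
open scoped Classical

/-- The pair `(m,f)` is absolutely `r`-avoidable. -/
def AbsolutelyAvoidable (r m f : ℕ) : Prop :=
  ∃ n₀ : ℕ, ∀ n > n₀, ∀ e ≤ n.choose r,
    ∃ G : Finset (Finset (Fin n)), (∀ s ∈ G, s.card = r) ∧ G.card = e ∧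
      ¬ ∃ S : Finset (Fin n), S.card = m ∧ (G.filter (fun t => t ⊆ S)).card = f


lemma card_supersets {α : Type*} [DecidableEq α] (T B : Finset α) (hBT : B ⊆ T) (s : ℕ) (hs : B.card ≤ s) :
    ((powersetCard s T).filter (fun A => B ⊆ A)).card
      = (T.card - B.card).choose (s - B.card) := by
  classical
  have : (T.card - B.card).choose (s - B.card) = (powersetCard (s - B.card) (T \ B)).card := by
    rw [Finset.card_powersetCard, Finset.card_sdiff_of_subset hBT]
  rw [this]
  apply Finset.card_bij' (i := fun A _ => A \ B) (j := fun A' _ => A' ∪ B)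
  · intro A hA
    simp only [mem_filter, mem_powersetCard] at hA
    obtain ⟨⟨hAT, hAc⟩, hBA⟩ := hA
    rw [mem_powersetCard]
    constructor
    · exact sdiff_subset_sdiff hAT le_rfl
    · rw [card_sdiff_of_subset hBA, hAc]
  · intro A' hA'
    rw [mem_powersetCard] at hA'
    obtain ⟨hsub, hcard⟩ := hA'
    have hdisj : Disjoint A' B := Finset.sdiff_disjoint.mono_left hsub
    simp only [mem_filter, mem_powersetCard]
    refine ⟨⟨?_, ?_⟩, subset_union_right⟩
    · exact union_subset (hsub.trans sdiff_subset) hBT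
    · rw [card_union_of_disjoint hdisj, hcard]
      omega
  · intro A hA
    simp only [mem_filter] at hA
    exact sdiff_union_of_subset hA.2
  · intro A' hA'
    rw [mem_powersetCard] at hA'
    have hdisj : Disjoint A' B := Finset.sdiff_disjoint.mono_left hA'.1
    rw [union_sdiff_cancel_right hdisj]

lemma choose_descFactorial_identity (M s : ℕ) (hsM : s ≤ M) :
    ∀ c, c ≤ s → (M - c).choose (s - c) * M.descFactorial c = M.choose s * s.descFactorial c := by
  intro c
  induction c with
  | zero => simp
  | succ c ih =>
    intro hcs
    have hc : c ≤ s := Nat.le_of_succ_le hcs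
    have hcM : c < M := lt_of_lt_of_le hcs hsM
    rw [Nat.descFactorial_succ, Nat.descFactorial_succ]
    have key : (M - c) * (M - c - 1).choose (s - c - 1) = (M - c).choose (s - c) * (s - c) := by
      have h1 : M - c = Nat.succ (M - c - 1) := by omega
      have h2 : s - c = Nat.succ (s - c - 1) := by omega
      rw [h1, h2]
      simp only [Nat.succ_sub_one]
      rw [Nat.add_one_mul_choose_eq]
    have : M - (c+1) = M - c - 1 := by omega
    rw [this]
    have : s - (c+1) = s - c - 1 := by omega
    rw [this]
    calc (M - c - 1).choose (s - c - 1) * ((M - c) * M.descFactorial c)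
        = ((M - c) * (M - c - 1).choose (s - c - 1)) * M.descFactorial c := by ring
      _ = ((M - c).choose (s - c) * (s - c)) * M.descFactorial c := by rw [key]
      _ = (s - c) * ((M - c).choose (s - c) * M.descFactorial c) := by ring
      _ = (s - c) * (M.choose s * s.descFactorial c) := by rw [ih hc]
      _ = M.choose s * ((s - c) * s.descFactorial c) := by ring


lemma succ_pow_lt_four_mul_pow (M : ℕ) (hM : 1 ≤ M) : (M+1)^M < 4 * M^M := by
  have hMpos : (0:ℝ) < M := by exact_mod_cast hM
  have h2 : ((M:ℝ)+1) ≤ Real.exp (1/M) * M := by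
    have hexp := Real.add_one_le_exp ((1:ℝ)/M)
    have h3 : ((1:ℝ)/M + 1) * M ≤ Real.exp (1/M) * M :=
      mul_le_mul_of_nonneg_right hexp (le_of_lt hMpos)
    calc ((M:ℝ)+1) = (1/M + 1)*M := by field_simp; ring
      _ ≤ _ := h3
  have h1 : ((M:ℝ)+1)^M ≤ Real.exp 1 * (M:ℝ)^M := by
    calc ((M:ℝ)+1)^M ≤ (Real.exp (1/M) * M)^M := by
          apply pow_le_pow_left₀ (by positivity) h2
      _ = Real.exp (1/M)^M * (M:ℝ)^M := mul_pow _ _ _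
      _ = Real.exp ((M:ℕ) * (1/M)) * (M:ℝ)^M := by rw [← Real.exp_nat_mul]
      _ = Real.exp 1 * (M:ℝ)^M := by rw [mul_one_div, div_self (ne_of_gt hMpos)]
  have h4 : Real.exp 1 < 4 := lt_trans Real.exp_one_lt_d9 (by norm_num)
  have h5 : ((M:ℝ)+1)^M < 4 * (M:ℝ)^M :=
    lt_of_le_of_lt h1 (mul_lt_mul_of_pos_right h4 (by positivity))
  exact_mod_cast h5

lemma two_r_pow_lt (r : ℕ) (hr : 1 ≤ r) : (2*r+1)^r < 2 * (2*r)^r := by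
  have h := succ_pow_lt_four_mul_pow (2*r) (by omega)
  have hsq : ((2*r+1)^r)^2 < (2*(2*r)^r)^2 := by
    calc ((2*r+1)^r)^2 = (2*r+1)^(2*r) := by rw [← pow_mul]; congr 1; ring
      _ < 4*(2*r)^(2*r) := h
      _ = (2*(2*r)^r)^2 := by ring
  exact lt_of_pow_lt_pow_left₀ 2 (by positivity) hsq

lemma choose_lt_two_mul_choose_sub (r : ℕ) (hr : 2 ≤ r) :
    ∃ n₁ : ℕ, ∀ n, n₁ ≤ n → n.choose r < 2 * ((n - n/(4*r)).choose r) := by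
  refine ⟨100*r*r, ?_⟩
  intro n hn
  set d := n/(4*r) with hd
  have hrn : 8*r ≤ n := by nlinarith
  have h4rd : d*(4*r) ≤ n := Nat.div_mul_le_self n (4*r)
  have hd8 : d ≤ n/8 := by
    rw [hd]
    exact Nat.div_le_div_left (by omega) (by omega)
  have h2rd : 2*r*d ≤ n/2 := by
    rw [Nat.le_div_iff_mul_le (by omega)]
    calc 2*r*d*2 = d*(4*r) := by ring
      _ ≤ n := h4rd
  have hr8 : r ≤ n/8 := by
    rw [Nat.le_div_iff_mul_le (by omega)]
    nlinarith
  have hkey : (2*r+1)*d + r ≤ n := by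
    have : (2*r+1)*d = 2*r*d + d := by ring
    omega
  have hdr : d + r ≤ n := by nlinarith
  -- termwise induction
  have hstep : ∀ c, c ≤ r → (2*r)^c * n.descFactorial c ≤ (2*r+1)^c * (n-d).descFactorial c := by
    intro c
    induction c with
    | zero => simp
    | succ c ih =>
      intro hc
      have hc' : c ≤ r := by omega
      have hterm : (2*r)*(n-c) ≤ (2*r+1)*(n-d-c) := by
        have h1 : c ≤ n := by omega
        have h2 : d + c ≤ n := by omega
        zify [h1, show d ≤ n by omega, show c ≤ n - d by omega]
        have h3 : ((2*r+1)*d + r : ℤ) ≤ n := by exact_mod_cast hkey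
        have h4 : (c:ℤ) ≤ r := by exact_mod_cast hc'
        nlinarith [h3, h4]
      rw [Nat.descFactorial_succ, Nat.descFactorial_succ, pow_succ, pow_succ]
      calc (2*r)^c*(2*r) * ((n-c) * n.descFactorial c)
          = ((2*r)*(n-c)) * ((2*r)^c * n.descFactorial c) := by ring
        _ ≤ ((2*r+1)*(n-d-c)) * ((2*r+1)^c * (n-d).descFactorial c) :=
            Nat.mul_le_mul hterm (ih hc')
        _ = (2*r+1)^c*(2*r+1) * ((n-d-c) * (n-d).descFactorial c) := by ring
  have hdfnd_pos : 0 < (n-d).descFactorial r := by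
    rw [Nat.pos_iff_ne_zero, ne_eq, Nat.descFactorial_eq_zero_iff_lt]
    omega
  have hdflt : n.descFactorial r < 2 * (n-d).descFactorial r := by
    have h1 : (2*r)^r * n.descFactorial r ≤ (2*r+1)^r * (n-d).descFactorial r := hstep r le_rfl
    have h2 : (2*r+1)^r * (n-d).descFactorial r < (2*(2*r)^r) * (n-d).descFactorial r :=
      (Nat.mul_lt_mul_right hdfnd_pos).2 (two_r_pow_lt r (by omega))
    have h3 : (2*r)^r * n.descFactorial r < (2*r)^r * (2 * (n-d).descFactorial r) := by
      calc (2*r)^r * n.descFactorial r < (2*(2*r)^r) * (n-d).descFactorial r := lt_of_le_of_lt h1 h2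
        _ = (2*r)^r * (2 * (n-d).descFactorial r) := by ring
    exact Nat.lt_of_mul_lt_mul_left h3
  have hiden : n.choose r * (n-d).descFactorial r = (n-d).choose r * n.descFactorial r := by
    rw [Nat.descFactorial_eq_factorial_mul_choose, Nat.descFactorial_eq_factorial_mul_choose]
    ring
  have hcpos : 0 < (n-d).choose r := Nat.choose_pos (by omega)
  have hfin : n.choose r * (n-d).descFactorial r < (2*((n-d).choose r)) * (n-d).descFactorial r := by
    calc n.choose r * (n-d).descFactorial r = (n-d).choose r * n.descFactorial r := hiden
      _ < (n-d).choose r * (2 * (n-d).descFactorial r) := by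
          exact (Nat.mul_lt_mul_left hcpos).2 hdflt
      _ = (2*((n-d).choose r)) * (n-d).descFactorial r := by ring
  exact Nat.lt_of_mul_lt_mul_right hfin

lemma exists_locally_sparse (r m : ℕ) (hr : 2 ≤ r) (hm : r ≤ m) :
    ∃ C : ℕ, ∀ n, C ≤ n → ∀ R : Finset (Fin n), n / (4*r) ≤ R.card →
      ∀ t, t ≤ n ^ (r-1) →
      ∃ H : Finset (Finset (Fin n)), H ⊆ powersetCard r R ∧ H.card = t ∧
        ∀ S : Finset (Fin n), S.card = m → (H.filter (fun b => b ⊆ S)).card ≤ m := by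
  classical
  set c₁ : ℕ := (m+1) * ((m.choose r)^(m+1) * 2^(m+1)) with hc₁
  set K₂ : ℕ := c₁ * (16*r)^(r*m) * (2*r.factorial)^(m+1) with hK₂
  set K : ℕ := K₂ + 2*r.factorial*m + 2*r.factorial*(16*r)^(r-1) + r + 1 with hK
  refine ⟨8*r*(K+1), ?_⟩
  intro n hn R hR t ht
  have hrpos : 0 < r := by omega
  set u : ℕ := n / (8*r) with hu
  have hu1 : K + 1 ≤ u := by
    rw [hu, Nat.le_div_iff_mul_le (by omega)]
    calc (K+1) * (8*r) = 8*r*(K+1) := by ring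
      _ ≤ n := hn
  have huK₂ : K₂ ≤ u := by omega
  have hur : r ≤ u := by omega
  have hu0 : 1 ≤ u := by omega
  have hufm : 2*r.factorial*m ≤ u := by omega
  have huf16 : 2*r.factorial*(16*r)^(r-1) ≤ u := by omega
  -- N and M
  set N : ℕ := R.card with hN
  set T : Finset (Finset (Fin n)) := powersetCard r R with hT
  set M : ℕ := T.card with hM
  have hMchoose : M = N.choose r := by rw [hM, hT, card_powersetCard]
  have h2uN : 2*u ≤ N := by
    refine le_trans ?_ hR
    rw [hu, Nat.le_div_iff_mul_le (by omega)]
    calc 2*(n/(8*r))*(4*r) = (n/(8*r))*(8*r) := by ring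
      _ ≤ n := Nat.div_mul_le_self _ _
  have huN : u ≤ N + 1 - r := by omega
  -- u^r ≤ r! * M
  have hurM : u^r ≤ r.factorial * M := by
    calc u^r ≤ (N+1-r)^r := Nat.pow_le_pow_left huN r
      _ ≤ N.descFactorial r := Nat.pow_sub_le_descFactorial N r
      _ = r.factorial * N.choose r := Nat.descFactorial_eq_factorial_mul_choose N r
      _ = r.factorial * M := by rw [hMchoose]
  -- n ≤ 16*r*u
  have hn16 : n ≤ 16*r*u := by
    have h1 : 8*r*(n/(8*r)) + n % (8*r) = n := Nat.div_add_mod n (8*r)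
    rw [← hu] at h1
    have h2 : n % (8*r) < 8*r := Nat.mod_lt _ (by omega)
    have h3 : 8*r ≤ 8*r*u := Nat.le_mul_of_pos_right _ hu0
    have h4 : 8*r*u + 8*r*u = 16*r*u := by ring
    omega
  -- 2*t ≤ M
  have hnr1 : n^(r-1) ≤ (16*r)^(r-1) * u^(r-1) := by
    rw [← mul_pow]; exact Nat.pow_le_pow_left hn16 _
  have hfact2t : r.factorial * (2*t) ≤ u^r := by
    calc r.factorial * (2*t) ≤ r.factorial * (2*n^(r-1)) := by
          apply Nat.mul_le_mul_left
          have := ht; omega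
      _ = 2*r.factorial * n^(r-1) := by ring
      _ ≤ 2*r.factorial * ((16*r)^(r-1) * u^(r-1)) := Nat.mul_le_mul_left _ hnr1
      _ = (2*r.factorial*(16*r)^(r-1)) * u^(r-1) := by ring
      _ ≤ u * u^(r-1) := Nat.mul_le_mul_right _ huf16
      _ = u^(r-1+1) := by rw [pow_succ, mul_comm]
      _ = u^r := by congr 1; omega
  have h2tM : 2*t ≤ M := by
    have key : r.factorial * (2*t) ≤ r.factorial * M := le_trans hfact2t hurM
    exact Nat.le_of_mul_le_mul_left key r.factorial_pos
  by_cases htm : t ≤ m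
  · -- trivial case
    obtain ⟨H, hHT, hHcard⟩ := Finset.exists_subset_card_eq (show t ≤ T.card by omega)
    exact ⟨H, hHT, hHcard, fun S _ => le_trans (le_trans (card_filter_le _ _) hHcard.le) htm⟩
  push_neg at htm
  set s : ℕ := 2*t with hs
  have hmle : m + 1 ≤ s := by omega
  have hsM : s ≤ M := h2tM
  -- Bad
  set Bad : Finset (Finset (Finset (Fin n))) :=
    (powersetCard (m+1) T).filter
      (fun B => ∃ S : Finset (Fin n), S.card = m ∧ ∀ b ∈ B, b ⊆ S) with hBad
  have hBadT : ∀ B ∈ Bad, B ⊆ T ∧ B.card = m+1 := by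
    intro B hB
    rw [hBad, mem_filter, mem_powersetCard] at hB
    exact ⟨hB.1.1, hB.1.2⟩
  have hBadcard : Bad.card ≤ n^m * (m.choose r)^(m+1) := by
    have hsub : Bad ⊆ (powersetCard m (univ : Finset (Fin n))).biUnion
        (fun S => powersetCard (m+1) (powersetCard r S)) := by
      intro B hB
      have hB' := hB
      rw [hBad, mem_filter] at hB'
      obtain ⟨hBP, S, hScard, hSB⟩ := hB'
      rw [mem_powersetCard] at hBP
      rw [mem_biUnion]
      refine ⟨S, by rw [mem_powersetCard]; exact ⟨subset_univ _, hScard⟩, ?_⟩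
      rw [mem_powersetCard]
      refine ⟨?_, hBP.2⟩
      intro b hb
      rw [mem_powersetCard]
      have := hBP.1 hb
      rw [hT, mem_powersetCard] at this
      exact ⟨hSB b hb, this.2⟩
    calc Bad.card ≤ ∑ S ∈ powersetCard m (univ : Finset (Fin n)),
          (powersetCard (m+1) (powersetCard r S)).card :=
          le_trans (card_le_card hsub) (card_biUnion_le)
      _ = ∑ S ∈ powersetCard m (univ : Finset (Fin n)), (S.card.choose r).choose (m+1) := by
          apply Finset.sum_congr rfl; intro S _; rw [card_powersetCard, card_powersetCard]
      _ ≤ ∑ _S ∈ powersetCard m (univ : Finset (Fin n)), (m.choose r)^(m+1) := by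
          apply Finset.sum_le_sum
          intro S hS
          rw [mem_powersetCard] at hS
          rw [hS.2]
          exact Nat.choose_le_pow _ _
      _ = (powersetCard m (univ : Finset (Fin n))).card * (m.choose r)^(m+1) := by
          rw [Finset.sum_const, smul_eq_mul]
      _ ≤ n^m * (m.choose r)^(m+1) := by
          apply Nat.mul_le_mul_right
          rw [card_powersetCard, card_univ, Fintype.card_fin]
          exact Nat.choose_le_pow _ _
    -- averaging setup
  set P : Finset (Finset (Finset (Fin n))) := powersetCard s T with hP
  have hPcard : P.card = M.choose s := by rw [hP, card_powersetCard, hM]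
  have hPne : P.Nonempty := by
    rw [hP]; exact powersetCard_nonempty.2 hsM
  have hsum : ∑ A ∈ P, ((Bad.filter (fun B => B ⊆ A)).card)
      = Bad.card * ((M - (m+1)).choose (s - (m+1))) := by
    have swap : ∑ A ∈ P, ((Bad.filter (fun B => B ⊆ A)).card)
        = ∑ B ∈ Bad, ((P.filter (fun A => B ⊆ A)).card) := by
      simp_rw [card_filter]
      exact Finset.sum_comm
    rw [swap]
    have hconst : ∀ B ∈ Bad, (P.filter (fun A => B ⊆ A)).card
        = (M - (m+1)).choose (s - (m+1)) := by
      intro B hB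
      obtain ⟨hBT', hBc⟩ := hBadT B hB
      rw [hP, card_supersets T B hBT' s (by rw [hBc]; omega), hBc, ← hM]
    rw [Finset.sum_congr rfl hconst, Finset.sum_const, smul_eq_mul, mul_comm]
  -- key numeric inequality
  have hdfpos : 0 < M.descFactorial (m+1) := by
    rw [Nat.pos_iff_ne_zero, ne_eq, Nat.descFactorial_eq_zero_iff_lt]
    omega
  have hmM : m ≤ M := by omega
  have hf7 : u^r ≤ 2*r.factorial*(M-m) := by
    obtain ⟨x, hx⟩ : ∃ x, M = x + m := ⟨M - m, by omega⟩
    have hMm : M - m = x := by omega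
    rw [hMm]
    have h5 : u^r ≤ r.factorial*x + r.factorial*m := by
      calc u^r ≤ r.factorial * M := hurM
        _ = r.factorial*x + r.factorial*m := by rw [hx]; ring
    have h6 : 2*(r.factorial*m) ≤ u^r := by
      calc 2*(r.factorial*m) = 2*r.factorial*m := by ring
        _ ≤ u := hufm
        _ ≤ u^r := Nat.le_self_pow (by omega) u
    have h7 : 2*r.factorial*x = 2*(r.factorial*x) := by ring
    omega
  have hrm : m + (r-1)*m = r*m := by
    have hh : r - 1 + 1 = r := by omega
    calc m + (r-1)*m = ((r-1)+1)*m := by ring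
      _ = r*m := by rw [hh]
  have hcore : c₁ * n^(r*m) ≤ (M-m)^(m+1) := by
    have hposf : 0 < (2*r.factorial)^(m+1) := by positivity
    apply Nat.le_of_mul_le_mul_right ?_ hposf
    have hnrm : n^(r*m) ≤ (16*r)^(r*m) * u^(r*m) := by
      rw [← mul_pow]; exact Nat.pow_le_pow_left hn16 _
    calc c₁ * n^(r*m) * (2*r.factorial)^(m+1)
        ≤ c₁ * ((16*r)^(r*m) * u^(r*m)) * (2*r.factorial)^(m+1) :=
          Nat.mul_le_mul_right _ (Nat.mul_le_mul_left _ hnrm)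
      _ = K₂ * u^(r*m) := by rw [hK₂]; ring
      _ ≤ u * u^(r*m) := Nat.mul_le_mul_right _ huK₂
      _ ≤ u^r * u^(r*m) := Nat.mul_le_mul_right _ (Nat.le_self_pow (by omega) u)
      _ = u^(r*(m+1)) := by rw [← pow_add]; congr 1; ring
      _ = (u^r)^(m+1) := by rw [← pow_mul]
      _ ≤ (2*r.factorial*(M-m))^(m+1) := Nat.pow_le_pow_left hf7 _
      _ = (M-m)^(m+1) * (2*r.factorial)^(m+1) := by rw [mul_pow]; ring
  have htpos : 0 < t := by omega
  have hS : (m+1) * Bad.card * s.descFactorial (m+1) ≤ t * M.descFactorial (m+1) := by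
    have hb2 : s.descFactorial (m+1) ≤ (2*t)^(m+1) := by
      rw [hs] at *; exact Nat.descFactorial_le_pow _ _
    have hb3 : (M-m)^(m+1) ≤ M.descFactorial (m+1) := by
      have hpl := Nat.pow_sub_le_descFactorial M (m+1)
      have he : M+1-(m+1) = M-m := by omega
      rwa [he] at hpl
    have htm' : t^m ≤ (n^(r-1))^m := Nat.pow_le_pow_left ht m
    calc (m+1) * Bad.card * s.descFactorial (m+1)
        ≤ (m+1) * (n^m * (m.choose r)^(m+1)) * (2*t)^(m+1) :=
          Nat.mul_le_mul (Nat.mul_le_mul_left _ hBadcard) hb2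
      _ = c₁ * n^m * (t^m * t) := by rw [hc₁]; ring
      _ ≤ c₁ * n^m * ((n^(r-1))^m * t) := by
          apply Nat.mul_le_mul_left
          exact Nat.mul_le_mul_right _ htm'
      _ = c₁ * (n^m * n^((r-1)*m)) * t := by rw [← pow_mul]; ring
      _ = c₁ * n^(r*m) * t := by rw [← pow_add, hrm]
      _ ≤ (M-m)^(m+1) * t := Nat.mul_le_mul_right _ hcore
      _ ≤ M.descFactorial (m+1) * t := Nat.mul_le_mul_right _ hb3
      _ = t * M.descFactorial (m+1) := by ring
  have KEY : (m+1) * (Bad.card * ((M - (m+1)).choose (s - (m+1)))) ≤ t * M.choose s := by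
    have hid := choose_descFactorial_identity M s hsM (m+1) hmle
    apply Nat.le_of_mul_le_mul_right ?_ hdfpos
    calc (m+1) * (Bad.card * ((M - (m+1)).choose (s - (m+1)))) * M.descFactorial (m+1)
        = (m+1)*Bad.card*((M - (m+1)).choose (s - (m+1)) * M.descFactorial (m+1)) := by ring
      _ = (m+1)*Bad.card*(M.choose s * s.descFactorial (m+1)) := by rw [hid]
      _ = ((m+1)*Bad.card*s.descFactorial (m+1)) * M.choose s := by ring
      _ ≤ (t * M.descFactorial (m+1)) * M.choose s := Nat.mul_le_mul_right _ hS
      _ = t * M.choose s * M.descFactorial (m+1) := by ring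
  have havg : ∃ A ∈ P, (m+1) * ((Bad.filter (fun B => B ⊆ A)).card) ≤ t := by
    apply Finset.exists_le_of_sum_le hPne
    calc ∑ A ∈ P, (m+1) * ((Bad.filter (fun B => B ⊆ A)).card)
        = (m+1) * ∑ A ∈ P, ((Bad.filter (fun B => B ⊆ A)).card) := by rw [Finset.mul_sum]
      _ = (m+1) * (Bad.card * ((M - (m+1)).choose (s - (m+1)))) := by rw [hsum]
      _ ≤ t * M.choose s := KEY
      _ = ∑ _A ∈ P, t := by rw [Finset.sum_const, smul_eq_mul, hPcard]; ring
  -- deletion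
  obtain ⟨A, hAP, hwA⟩ := havg
  have hAmem := mem_powersetCard.1 (by rwa [hP] at hAP)
  have hAT : A ⊆ T := hAmem.1
  have hAcard : A.card = s := hAmem.2
  set W := Bad.filter (fun B => B ⊆ A) with hW
  set A' := A.filter (fun a => ∀ B ∈ Bad, B ⊆ A → a ∉ B) with hA'
  have hsubdel : A \ A' ⊆ W.biUnion id := by
    intro x hx
    rw [mem_sdiff] at hx
    obtain ⟨hxA, hxA'⟩ := hx
    rw [hA', mem_filter] at hxA'
    push_neg at hxA'
    obtain ⟨B, hB, hBA, hxB⟩ := hxA' hxA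
    rw [mem_biUnion]
    exact ⟨B, by rw [hW, mem_filter]; exact ⟨hB, hBA⟩, hxB⟩
  have hdelcard : (A \ A').card ≤ W.card * (m+1) := by
    calc (A \ A').card ≤ (W.biUnion id).card := card_le_card hsubdel
      _ ≤ ∑ B ∈ W, (id B).card := card_biUnion_le
      _ = ∑ _B ∈ W, (m+1) := by
          apply Finset.sum_congr rfl; intro B hB
          rw [hW, mem_filter] at hB
          exact (hBadT B hB.1).2
      _ = W.card * (m+1) := by rw [Finset.sum_const, smul_eq_mul]
  have hA'A : A' ⊆ A := filter_subset _ _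
  have hA'card : t ≤ A'.card := by
    have h1 : (A \ A').card = A.card - A'.card := card_sdiff_of_subset hA'A
    have h2 : A'.card ≤ A.card := card_le_card hA'A
    have hcomm : W.card*(m+1) = (m+1)*W.card := by ring
    omega
  obtain ⟨H, hHA', hHcard⟩ := Finset.exists_subset_card_eq hA'card
  refine ⟨H, (hHA'.trans hA'A).trans hAT, hHcard, ?_⟩
  intro S hScard
  by_contra hcon
  push_neg at hcon
  obtain ⟨B, hBsub, hBcard⟩ := Finset.exists_subset_card_eq
    (show m+1 ≤ (H.filter (fun b => b ⊆ S)).card from hcon)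
  have hBBad : B ∈ Bad := by
    rw [hBad, mem_filter, mem_powersetCard]
    refine ⟨⟨?_, hBcard⟩, S, hScard, ?_⟩
    · exact (hBsub.trans (filter_subset _ _)).trans ((hHA'.trans hA'A).trans hAT)
    · intro b hb; exact (mem_filter.1 (hBsub hb)).2
  have hBA : B ⊆ A := (hBsub.trans (filter_subset _ _)).trans (hHA'.trans hA'A)
  have hBne : B.Nonempty := by rw [← card_pos, hBcard]; omega
  obtain ⟨b, hb⟩ := hBne
  have hbA' : b ∈ A' := hHA' ((filter_subset _ _) (hBsub hb))
  rw [hA', mem_filter] at hbA'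
  exact hbA'.2 B hBBad hBA hb

lemma cliquePlusFew_of_parts (r m f k j : ℕ) (hk : k ≤ m) (hj : j ≤ m)
    (hjc : j ≤ (m-k).choose r) (hsum : k.choose r + j = f) : CliquePlusFew r m f := by
  obtain ⟨K, hKu, hKcard⟩ := Finset.exists_subset_card_eq
    (show k ≤ (univ : Finset (Fin m)).card by simp [hk])
  have hcompl : ((univ : Finset (Fin m)) \ K).card = m - k := by
    rw [card_sdiff_of_subset (subset_univ K), card_univ, Fintype.card_fin, hKcard]
  have hle : j ≤ (powersetCard r ((univ : Finset (Fin m)) \ K)).card := by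
    rw [card_powersetCard, hcompl]; exact hjc
  obtain ⟨H, hHsub, hHcard⟩ := Finset.exists_subset_card_eq hle
  refine ⟨K, H, ?_, by omega, by rw [hKcard, hHcard]; exact hsum⟩
  intro s hs
  have hmem := hHsub hs
  rw [mem_powersetCard] at hmem
  exact ⟨hmem.2, disjoint_left.2 fun a ha hK => (mem_sdiff.1 (hmem.1 ha)).2 hK⟩

lemma construction_avoids (r m f : ℕ) (hr : 2 ≤ r) (hm : r ≤ m) (h1 : ¬ CliquePlusFew r m f) :
    ∃ n₀ : ℕ, ∀ n, n₀ ≤ n → ∀ e q, q.choose r ≤ e → e < (q+1).choose r → q ≤ n - n/(4*r) →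
      ∃ G : Finset (Finset (Fin n)), (∀ s ∈ G, s.card = r) ∧ G.card = e ∧
        ¬ ∃ S : Finset (Fin n), S.card = m ∧ (G.filter (fun t => t ⊆ S)).card = f := by
  classical
  obtain ⟨C, hC⟩ := exists_locally_sparse r m hr hm
  refine ⟨C + m + 4*r, ?_⟩
  intro n hn e q hqe heq hqn
  set d := n / (4*r) with hd
  have hdn : d ≤ n := Nat.div_le_self _ _
  have hqn' : q ≤ n := le_trans hqn (Nat.sub_le n d)
  -- t bound
  set t : ℕ := e - q.choose r with ht
  have htlt : t < q.choose (r-1) := by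
    have h : r - 1 + 1 = r := by omega
    have hpascal := Nat.choose_succ_succ q (r-1)
    simp only [Nat.succ_eq_add_one] at hpascal
    rw [h] at hpascal
    omega
  have htn : t ≤ n ^ (r-1) := by
    have h1 : q.choose (r-1) ≤ n.choose (r-1) := Nat.choose_le_choose _ hqn'
    have h2 : n.choose (r-1) ≤ n ^ (r-1) := Nat.choose_le_pow _ _
    omega
  -- Q and R
  obtain ⟨Q, hQu, hQcard⟩ := Finset.exists_subset_card_eq
    (show q ≤ (univ : Finset (Fin n)).card by simp [hqn'])
  set R : Finset (Fin n) := univ \ Q with hR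
  have hRcard : R.card = n - q := by
    rw [hR, card_sdiff_of_subset (subset_univ Q), card_univ, Fintype.card_fin, hQcard]
  have hRd : n / (4*r) ≤ R.card := by rw [hRcard, ← hd]; omega
  obtain ⟨H, hHsub, hHcard, hHprop⟩ := hC n (by omega) R hRd t htn
  set G : Finset (Finset (Fin n)) := powersetCard r Q ∪ H with hG
  have hHR : ∀ b ∈ H, b ⊆ R ∧ b.card = r := by
    intro b hb
    have := hHsub hb
    rw [mem_powersetCard] at this
    exact this
  have hdisj : Disjoint (powersetCard r Q) H := by
    rw [disjoint_left]
    intro b hbQ hbH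
    rw [mem_powersetCard] at hbQ
    have hbR := (hHR b hbH).1
    have hbcard := hbQ.2
    have hbne : b.Nonempty := by rw [← card_pos, hbcard]; omega
    obtain ⟨x, hx⟩ := hbne
    have hxQ := hbQ.1 hx
    have hxR := hbR hx
    rw [hR, mem_sdiff] at hxR
    exact hxR.2 hxQ
  refine ⟨G, ?_, ?_, ?_⟩
  · intro b hb
    rw [hG, mem_union] at hb
    rcases hb with hb | hb
    · exact (mem_powersetCard.1 hb).2
    · exact (hHR b hb).2
  · rw [hG, card_union_of_disjoint hdisj, card_powersetCard, hQcard, hHcard]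
    omega
  · rintro ⟨S, hScard, hSf⟩
    -- count
    have hsplit : G.filter (fun b => b ⊆ S)
        = (powersetCard r Q).filter (fun b => b ⊆ S) ∪ H.filter (fun b => b ⊆ S) := by
      rw [hG, filter_union]
    have hdisj2 : Disjoint ((powersetCard r Q).filter (fun b => b ⊆ S))
        (H.filter (fun b => b ⊆ S)) :=
      hdisj.mono (filter_subset _ _) (filter_subset _ _)
    have hfirst : (powersetCard r Q).filter (fun b => b ⊆ S) = powersetCard r (Q ∩ S) := by
      ext b
      simp only [mem_filter, mem_powersetCard, subset_inter_iff]
      tauto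
    set k : ℕ := (Q ∩ S).card with hk
    set j : ℕ := (H.filter (fun b => b ⊆ S)).card with hj
    have hkm : k ≤ m := by
      rw [hk, ← hScard]
      exact card_le_card inter_subset_right
    have hjm : j ≤ m := hHprop S hScard
    have hcount : (G.filter (fun b => b ⊆ S)).card = k.choose r + j := by
      rw [hsplit, card_union_of_disjoint hdisj2, hfirst, card_powersetCard]
    have hjC : j ≤ (m - k).choose r := by
      have hsub2 : H.filter (fun b => b ⊆ S) ⊆ powersetCard r (S \ Q) := by
        intro b hb
        rw [mem_filter] at hb
        obtain ⟨hbH, hbS⟩ := hb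
        obtain ⟨hbR, hbc⟩ := hHR b hbH
        rw [mem_powersetCard]
        refine ⟨?_, hbc⟩
        intro x hx
        rw [mem_sdiff]
        have := hbR hx
        rw [hR, mem_sdiff] at this
        exact ⟨hbS hx, this.2⟩
      have hSQcard : (S \ Q).card = m - k := by
        have h := Finset.card_sdiff_add_card_inter S Q
        have hIC : (S ∩ Q).card = k := by rw [hk, inter_comm]
        omega
      calc j ≤ (powersetCard r (S \ Q)).card := card_le_card hsub2
        _ = (m - k).choose r := by rw [card_powersetCard, hSQcard]
    exact h1 (cliquePlusFew_of_parts r m f k j hkm hjm hjC (by omega))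

theorem absolutelyAvoidable_of_not_cliquePlusFew (r m f : ℕ) (hr : 2 ≤ r) (hm : r ≤ m)
    (hf : f ≤ m.choose r)
    (h1 : ¬ CliquePlusFew r m f) (h2 : ¬ CliquePlusFew r m (m.choose r - f)) :
    AbsolutelyAvoidable r m f := by
  classical
  obtain ⟨n₁, hn₁⟩ := choose_lt_two_mul_choose_sub r hr
  obtain ⟨nA, hnA⟩ := construction_avoids r m f hr hm h1
  obtain ⟨nB, hnB⟩ := construction_avoids r m (m.choose r - f) hr hm h2
  refine ⟨n₁ + nA + nB + 8*r + m, ?_⟩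
  intro n hn e he
  set d := n / (4*r) with hd
  have hd1 : 1 ≤ d := by
    rw [hd, Nat.le_div_iff_mul_le (by omega)]
    omega
  have hdn : d ≤ n := Nat.div_le_self _ _
  have hrn : r ≤ n := by omega
  have hP0 : Nat.choose 0 r ≤ e := by
    rw [Nat.choose_eq_zero_of_lt (by omega)]
    omega
  set q := Nat.findGreatest (fun q => q.choose r ≤ e) n with hq
  have hqe : q.choose r ≤ e := Nat.findGreatest_spec (P := fun q => q.choose r ≤ e) (Nat.zero_le n) hP0
  by_cases hcase : q ≤ n - d
  · have heq : e < (q+1).choose r := by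
      by_contra hcon
      push_neg at hcon
      exact Nat.findGreatest_is_greatest (show q < q+1 by omega) (by omega) hcon
    exact hnA n (by omega) e q hqe heq hcase
  · push_neg at hcase
    have heC : (n-d+1).choose r ≤ e := by
      have hqn : q ≤ n := Nat.findGreatest_le n
      calc (n-d+1).choose r ≤ q.choose r := Nat.choose_le_choose r (by omega)
        _ ≤ e := hqe
    set e' := n.choose r - e with he'
    have hF : n.choose r < 2 * ((n-d).choose r) := hn₁ n (by omega)
    have hmono : (n-d).choose r ≤ (n-d+1).choose r := Nat.choose_le_choose r (by omega)
    have he'lt : e' < (n-d+1).choose r := by omega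
    have hP0' : Nat.choose 0 r ≤ e' := by rw [Nat.choose_eq_zero_of_lt (by omega)]; omega
    set q' := Nat.findGreatest (fun q => q.choose r ≤ e') n with hq'
    have hq'e : q'.choose r ≤ e' := Nat.findGreatest_spec (P := fun q => q.choose r ≤ e') (Nat.zero_le n) hP0'
    have hq'le : q' ≤ n - d := by
      by_contra hcon
      push_neg at hcon
      have hmono2 : (n-d+1).choose r ≤ q'.choose r := Nat.choose_le_choose r (by omega)
      omega
    have he'q : e' < (q'+1).choose r := by
      by_contra hcon
      push_neg at hcon
      exact Nat.findGreatest_is_greatest (show q' < q'+1 by omega) (by omega) hcon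
    obtain ⟨G', hG'unif, hG'card, hG'avoid⟩ := hnB n (by omega) e' q' hq'e he'q hq'le
    have hG'sub : G' ⊆ powersetCard r (univ : Finset (Fin n)) := by
      intro b hb
      rw [mem_powersetCard]
      exact ⟨subset_univ _, hG'unif b hb⟩
    refine ⟨powersetCard r (univ : Finset (Fin n)) \ G', ?_, ?_, ?_⟩
    · intro b hb
      rw [mem_sdiff, mem_powersetCard] at hb
      exact hb.1.2
    · rw [card_sdiff_of_subset hG'sub, card_powersetCard, card_univ, Fintype.card_fin, hG'card]
      omega
    · rintro ⟨S, hScard, hSf⟩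
      apply hG'avoid
      refine ⟨S, hScard, ?_⟩
      have hsplit : (powersetCard r (univ : Finset (Fin n)) \ G').filter (fun b => b ⊆ S)
          = powersetCard r S \ (G'.filter (fun b => b ⊆ S)) := by
        ext b
        simp only [mem_filter, mem_sdiff, mem_powersetCard]
        constructor
        · rintro ⟨⟨⟨_, hbc⟩, hbG'⟩, hbS⟩
          exact ⟨⟨hbS, hbc⟩, fun h => hbG' h.1⟩
        · rintro ⟨⟨hbS, hbc⟩, hbn⟩
          exact ⟨⟨⟨subset_univ _, hbc⟩, fun h => hbn ⟨h, hbS⟩⟩, hbS⟩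
      have hsubS : G'.filter (fun b => b ⊆ S) ⊆ powersetCard r S := by
        intro b hb
        rw [mem_filter] at hb
        rw [mem_powersetCard]
        exact ⟨hb.2, hG'unif b hb.1⟩
      have hj' : (G'.filter (fun b => b ⊆ S)).card ≤ m.choose r := by
        have hcc := card_le_card hsubS
        rwa [card_powersetCard, hScard] at hcc
      rw [hsplit, card_sdiff_of_subset hsubS, card_powersetCard, hScard] at hSf
      omega
end

section
/- Let r ≥ 3 be fixed. If x is the integer with C(x,r) ≤ ⌊C(m,r)/2⌋ < C(x+1,r), then x + 1 > m/(2^{1/r}·e), and consequently for all sufficiently large m one has C(x−1, r−1) > 2m + 2. -/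
/-!
Comparing `C(m,r)` with `(m/r)^r` from below and `C(x+1,r)` with `((x+1)e/r)^r` from above turns
`C(m,r) < 2 C(x+1,r)` into `m^r < 2 ((x+1)e)^r`, and taking `r`-th roots gives `m < 2^{1/r} e (x+1)`.
Since `2^{1/r} e < 6`, the root `x` grows linearly in `m`, while `C(x-1,r-1) ≥ (x-r+1)^2/(r-1)!`
grows quadratically once `r ≥ 3`.
-/

open Finset

namespace Nat

theorem pow_le_pow_mul_choose {n r : ℕ} (h : r ≤ n) : n ^ r ≤ r ^ r * n.choose r := by
  refine Nat.le_of_mul_le_mul_right ?_ r.factorial_pos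
  calc n ^ r * r ! = ∏ i ∈ range r, n * (r - i) := by
        rw [← descFactorial_self r, descFactorial_eq_prod_range, prod_mul_distrib, prod_const,
          card_range]
    _ ≤ ∏ i ∈ range r, r * (n - i) := by
        refine prod_le_prod' fun i _ => ?_
        rw [Nat.mul_sub, Nat.mul_sub, Nat.mul_comm r n]
        exact Nat.sub_le_sub_left (Nat.mul_le_mul_right i h) _
    _ = r ^ r * n.descFactorial r := by
        rw [descFactorial_eq_prod_range, prod_mul_distrib, prod_const, card_range]
    _ = r ^ r * n.choose r * r ! := by
        rw [descFactorial_eq_factorial_mul_choose]; ring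

theorem pow_mul_choose_le_mul_exp_pow (n r : ℕ) :
    ((r : ℝ) ^ r * n.choose r) ≤ (n * Real.exp 1) ^ r := by
  have hfact : (0 : ℝ) < r ! := mod_cast r.factorial_pos
  have hexp : (r : ℝ) ^ r / r ! ≤ Real.exp 1 ^ r := by
    rw [Real.exp_one_pow]
    exact Real.pow_div_factorial_le_exp _ r.cast_nonneg r
  calc (r : ℝ) ^ r * n.choose r ≤ (r : ℝ) ^ r * ((n : ℝ) ^ r / r !) := by
        gcongr; exact_mod_cast choose_le_pow_div r n
    _ = (n : ℝ) ^ r * ((r : ℝ) ^ r / r !) := by ring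
    _ ≤ (n * Real.exp 1) ^ r := by rw [mul_pow]; gcongr

theorem sq_sub_le_factorial_mul_choose (n : ℕ) {k : ℕ} (hk : 2 ≤ k) :
    (n + 1 - k) ^ 2 ≤ k ! * n.choose k := by
  rw [← descFactorial_eq_factorial_mul_choose]
  refine le_trans ?_ (pow_sub_le_descFactorial n k)
  rcases Nat.eq_zero_or_pos (n + 1 - k) with h | h
  · simp [h]
  · exact Nat.pow_le_pow_right h hk

end Nat

theorem lt_rpow_one_div_mul_of_pow_lt_mul_pow {a b c : ℝ} (ha : 0 ≤ a) (hb : 0 ≤ b) (hc : 0 ≤ c)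
    {r : ℕ} (hr : r ≠ 0) (h : a ^ r < c * b ^ r) : a < c ^ ((1 : ℝ) / r) * b := by
  have hroot : (c ^ ((1 : ℝ) / r) * b) ^ r = c * b ^ r := by
    rw [mul_pow, one_div, Real.rpow_inv_natCast_pow hc hr]
  rw [← pow_lt_pow_iff_left₀ ha (by positivity) hr, hroot]
  exact h

theorem div_lt_succ_of_choose_div_two_lt {r m x : ℕ} (hr : r ≠ 0) (hrm : r ≤ m)
    (h : m.choose r / 2 < (x + 1).choose r) :
    (m : ℝ) / (2 ^ ((1 : ℝ) / r) * Real.exp 1) < (x : ℝ) + 1 := by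
  have hchoose : (m.choose r : ℝ) < 2 * (x + 1).choose r := by
    have := (Nat.div_lt_iff_lt_mul two_pos).mp h
    exact_mod_cast (by omega : m.choose r < 2 * (x + 1).choose r)
  have hpow : (m : ℝ) ^ r < 2 * (((x : ℝ) + 1) * Real.exp 1) ^ r :=
    calc (m : ℝ) ^ r ≤ (r : ℝ) ^ r * m.choose r := by exact_mod_cast Nat.pow_le_pow_mul_choose hrm
      _ < (r : ℝ) ^ r * (2 * (x + 1).choose r) := by gcongr
      _ = 2 * ((r : ℝ) ^ r * (x + 1).choose r) := by ring
      _ ≤ 2 * (((x : ℝ) + 1) * Real.exp 1) ^ r := by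
        gcongr; exact_mod_cast Nat.pow_mul_choose_le_mul_exp_pow (x + 1) r
  rw [div_lt_iff₀ (by positivity)]
  calc (m : ℝ) < 2 ^ ((1 : ℝ) / r) * (((x : ℝ) + 1) * Real.exp 1) :=
        lt_rpow_one_div_mul_of_pow_lt_mul_pow (by positivity) (by positivity) zero_le_two hr hpow
    _ = ((x : ℝ) + 1) * (2 ^ ((1 : ℝ) / r) * Real.exp 1) := by ring

theorem lt_six_mul_succ_of_div_lt {r m x : ℕ} (hr : r ≠ 0)
    (h : (m : ℝ) / (2 ^ ((1 : ℝ) / r) * Real.exp 1) < (x : ℝ) + 1) : m < 6 * (x + 1) := by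
  have htwo : (2 : ℝ) ^ ((1 : ℝ) / r) ≤ 2 :=
    Real.rpow_le_self_of_one_le one_le_two
      (div_le_one_of_le₀ (mod_cast Nat.one_le_iff_ne_zero.mpr hr) r.cast_nonneg)
  have he : Real.exp 1 < 3 := Real.exp_one_lt_d9.trans (by norm_num)
  have hpos : (0 : ℝ) < 2 ^ ((1 : ℝ) / r) := by positivity
  have hsix : (2 : ℝ) ^ ((1 : ℝ) / r) * Real.exp 1 ≤ 6 := by nlinarith [Real.exp_pos 1]
  rw [div_lt_iff₀ (by positivity)] at h
  have : (m : ℝ) < 6 * ((x : ℝ) + 1) := by nlinarith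
  exact_mod_cast this

theorem two_mul_add_two_lt_choose_pred {r m x : ℕ} (hr : 3 ≤ r)
    (hm : 144 * (r - 1).factorial + 72 * r ≤ m) (hx : m < 6 * (x + 1)) :
    2 * m + 2 < (x - 1).choose (r - 1) := by
  set F := (r - 1).factorial
  have hF : 1 ≤ F := Nat.factorial_pos _
  have hsq := Nat.sq_sub_le_factorial_mul_choose (x - 1) (show 2 ≤ r - 1 by omega)
  set b := x - 1 + 1 - (r - 1)
  -- `144 b^2 ≥ (m + 144 F)^2 ≥ 288 F m + 432 F`, which is where the threshold on `m` comes from.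
  have hb : m + 144 * F ≤ 12 * b := by omega
  have : F * (2 * m + 3) ≤ F * (x - 1).choose (r - 1) := by nlinarith
  have := Nat.le_of_mul_le_mul_left this hF
  omega

/-- If `C(x,r) ≤ ⌊C(m,r)/2⌋ < C(x+1,r)` with `r ≥ 3`, then `x+1 > m/(2^{1/r}·e)`, and
consequently for all sufficiently large `m` one has `C(x-1,r-1) > 2m+2`. -/
theorem bounds_on_half_binomial_root (r : ℕ) (hr : 3 ≤ r) :
    (∀ m x : ℕ, r ≤ m → x.choose r ≤ m.choose r / 2 → m.choose r / 2 < (x + 1).choose r →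
      (m : ℝ) / (2 ^ ((1 : ℝ) / r) * Real.exp 1) < (x : ℝ) + 1) ∧
    ∃ m₀ : ℕ, ∀ m x : ℕ, m₀ ≤ m →
      x.choose r ≤ m.choose r / 2 → m.choose r / 2 < (x + 1).choose r →
      2 * m + 2 < (x - 1).choose (r - 1) := by
  have hr0 : r ≠ 0 := by omega
  refine ⟨fun m x hrm _ h => div_lt_succ_of_choose_div_two_lt hr0 hrm h,
    144 * (r - 1).factorial + 72 * r, fun m x hm _ h => ?_⟩
  have hrm : r ≤ m := by omega
  exact two_mul_add_two_lt_choose_pred hr hm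
    (lt_six_mul_succ_of_div_lt hr0 (div_lt_succ_of_choose_div_two_lt hr0 hrm h))
end

section
/- Let m ≥ r ≥ 3 and 0 ≤ f ≤ C(m,r). If (m,f) cannot be realised as the vertex-disjoint union of a complete r-graph and an r-graph with at most m edges, then σ_r(m,f) = 0. In particular, if there is no x ∈ {0,…,m} with 0 ≤ f − C(x,r) < m, then σ_r(m,f) = 0. -/
open Finset
open scoped Classical

/-!
Put a clique on `x` vertices and, on a disjoint set `A` of `n / q` vertices, an `r`-graph `E`
that is locally sparse: every nonempty set of at most `m` of its edges covers more vertices than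
it has edges. An `m`-set `S` then induces a clique on `y` vertices plus `h < m` edges of `E`,
vertex-disjoint from it, so this graph does not arrow `(m, f)` unless `f = C(y, r) + h` is of
that shape. Every `e ≤ C(n - n / q, r)` is `C(x, r) + t` with `x ≤ n - n / q` and
`t ≤ C(n, r - 1)`, so it suffices that `A` carries a locally sparse `E` with `C(n, r - 1)` edges.
This is the deletion method: among the `T`-sets of `r`-subsets of `A`, the average number of
crowded subfamilies covering `u` vertices is at most `C(#A, u) 2^C(u, r) (T / C(#A, r))^u`, which
is bounded when `#A * T = O(C(#A, r))`; for `r ≥ 2` this allows `T = C(n, r - 1) + O(1)`.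
Hence only the `C(n, r) - C(n - n / q, r) ≤ 2r/q * C(n, r)` largest values of `e` can arrow
`(m, f)`, for every `q`.
-/

open Filter

theorem Nat.choose_sub_sub_le_choose_sub_sub {N T u k : ℕ} (huk : u ≤ k) (hkT : k ≤ T)
    (hTN : T ≤ N) : (N - k).choose (T - k) ≤ (N - u).choose (T - u) := by
  rw [Nat.choose_symm_of_eq_add (show N - k = (T - k) + (N - T) by omega),
    Nat.choose_symm_of_eq_add (show N - u = (T - u) + (N - T) by omega)]
  exact Nat.choose_le_choose _ (by omega)

theorem Nat.choose_sub_mul_pow_le {N T u : ℕ} (huT : u ≤ T) (hTN : T ≤ N) :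
    (N - u).choose (T - u) * N ^ u ≤ N.choose T * T ^ u := by
  induction u with
  | zero => simp
  | succ u ih =>
    have hstep : (N - (u + 1)).choose (T - (u + 1)) * N ≤ (N - u).choose (T - u) * T := by
      have key := Nat.add_one_mul_choose_eq (N - (u + 1)) (T - (u + 1))
      rw [show N - (u + 1) + 1 = N - u by omega, show T - (u + 1) + 1 = T - u by omega] at key
      have hratio : (T - u) * N ≤ T * (N - u) := by
        zify [(by omega : u ≤ T), (by omega : u ≤ N)]
        nlinarith
      refine Nat.le_of_mul_le_mul_left ?_ (show 0 < N - u by omega)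
      calc (N - u) * ((N - (u + 1)).choose (T - (u + 1)) * N)
          = (N - u).choose (T - u) * ((T - u) * N) := by rw [← mul_assoc, key]; ring
        _ ≤ (N - u).choose (T - u) * (T * (N - u)) := by gcongr
        _ = (N - u) * ((N - u).choose (T - u) * T) := by ring
    calc (N - (u + 1)).choose (T - (u + 1)) * N ^ (u + 1)
        = (N - (u + 1)).choose (T - (u + 1)) * N * N ^ u := by ring
      _ ≤ (N - u).choose (T - u) * T * N ^ u := by gcongr
      _ = (N - u).choose (T - u) * N ^ u * T := by ring
      _ ≤ N.choose T * T ^ u * T := Nat.mul_le_mul_right _ (ih (by omega))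
      _ = N.choose T * T ^ (u + 1) := by ring

theorem Nat.choose_mul_choose_sub_le {d u T N L : ℕ} (huT : u ≤ T) (hTN : T ≤ N)
    (hL : d * T ≤ L * N) : d.choose u * (N - u).choose (T - u) ≤ L ^ u * N.choose T := by
  have hN : 0 < N ^ u := by
    rcases u.eq_zero_or_pos with rfl | hu
    · simp
    · exact pow_pos (by omega) u
  refine Nat.le_of_mul_le_mul_right ?_ hN
  calc d.choose u * (N - u).choose (T - u) * N ^ u
      ≤ d ^ u * (N.choose T * T ^ u) := by
        rw [mul_assoc]
        exact Nat.mul_le_mul (Nat.choose_le_pow d u) (Nat.choose_sub_mul_pow_le huT hTN)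
    _ = (d * T) ^ u * N.choose T := by ring
    _ ≤ (L * N) ^ u * N.choose T := by gcongr
    _ = L ^ u * N.choose T * N ^ u := by ring

theorem Nat.exists_choose_le_le_choose_add (s : ℕ) :
    ∀ {M e : ℕ}, e ≤ M.choose (s + 1) →
      ∃ x ≤ M, x.choose (s + 1) ≤ e ∧ e ≤ x.choose (s + 1) + M.choose s
  | 0, e, he => ⟨0, le_rfl, by simp_all, by simp_all⟩
  | M + 1, e, he => by
    have hmono : M.choose s ≤ (M + 1).choose s := Nat.choose_le_choose s M.le_succ
    by_cases h : e ≤ M.choose (s + 1)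
    · obtain ⟨x, hxM, hxe, hex⟩ := Nat.exists_choose_le_le_choose_add s h
      exact ⟨x, by omega, hxe, by omega⟩
    · rw [Nat.choose_succ_succ'] at he
      exact ⟨M, by omega, by omega, by omega⟩

theorem Nat.pow_le_factorial_mul_choose_div {n q r : ℕ} (hq : 0 < q) (hn : 2 * q * r ≤ n) :
    n ^ r ≤ r.factorial * (2 * q) ^ r * (n / q).choose r := by
  set d := n / q
  have hlt : n < q * (d + 1) := Nat.lt_mul_div_succ n hq
  have hd : 2 * r < d + 1 := Nat.lt_of_mul_lt_mul_left (a := q) (by linarith)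
  have key : n ≤ 2 * q * (d + 1 - r) := by
    have : q * (d + 1) ≤ q * (2 * (d + 1 - r)) := Nat.mul_le_mul_left q (by omega)
    linarith
  calc n ^ r ≤ (2 * q * (d + 1 - r)) ^ r := Nat.pow_le_pow_left key r
    _ = (2 * q) ^ r * (d + 1 - r) ^ r := mul_pow _ _ _
    _ ≤ (2 * q) ^ r * d.descFactorial r := by gcongr; exact Nat.pow_sub_le_descFactorial d r
    _ = r.factorial * (2 * q) ^ r * d.choose r := by
      rw [Nat.descFactorial_eq_factorial_mul_choose]; ring

theorem Nat.choose_succ_le_choose_sub_add_mul (n s d : ℕ) :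
    n.choose (s + 1) ≤ (n - d).choose (s + 1) + d * n.choose s := by
  induction d with
  | zero => simp
  | succ d ih =>
    have hstep : (n - d).choose (s + 1) ≤ (n - (d + 1)).choose (s + 1) + n.choose s := by
      rcases Nat.lt_or_ge d n with h | h
      · rw [show n - d = n - (d + 1) + 1 by omega, Nat.choose_succ_succ']
        have := Nat.choose_le_choose s (Nat.sub_le n (d + 1))
        omega
      · simp [show n - d = 0 by omega]
    rw [Nat.succ_mul]
    omega

theorem Nat.mul_choose_le_two_mul_choose_succ {n s : ℕ} (h : 2 * s ≤ n) :
    n * n.choose s ≤ 2 * (s + 1) * n.choose (s + 1) := by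
  have := Nat.choose_succ_right_eq n s
  calc n * n.choose s ≤ 2 * (n - s) * n.choose s := Nat.mul_le_mul_right _ (by omega)
    _ = 2 * (s + 1) * n.choose (s + 1) := by rw [mul_assoc, mul_comm (n - s), ← this]; ring

section FinsetFamilies

variable {α : Type*} [DecidableEq α]

def IsCrowded (m : ℕ) (F : Finset (Finset α)) : Prop :=
  F.Nonempty ∧ #F ≤ m ∧ #(F.biUnion id) ≤ #F

def IsLocallySparse (m : ℕ) (E : Finset (Finset α)) : Prop :=
  ∀ F ⊆ E, ¬ IsCrowded m F

theorem IsLocallySparse.mono {m : ℕ} {E E' : Finset (Finset α)} (hE : IsLocallySparse m E)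
    (h : E' ⊆ E) : IsLocallySparse m E' :=
  fun F hF => hE F (hF.trans h)

theorem IsLocallySparse.card_filter_subset_lt {m : ℕ} {E : Finset (Finset α)}
    (hE : IsLocallySparse m E) {S : Finset α} (hS : S.Nonempty) (hSm : #S ≤ m) :
    #(E.filter (· ⊆ S)) < #S := by
  by_contra! hle
  obtain ⟨F, hFE, hF⟩ := exists_subset_card_eq hle
  refine hE F (hFE.trans (filter_subset _ _)) ⟨?_, hF ▸ hSm, ?_⟩
  · rw [← card_pos, hF]
    exact hS.card_pos
  · rw [hF]
    exact card_le_card (biUnion_subset.2 fun s hs => (mem_filter.1 (hFE hs)).2)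

theorem exists_isLocallySparse_subset (m : ℕ) (E : Finset (Finset α)) :
    ∃ E' ⊆ E, IsLocallySparse m E' ∧ #E ≤ #E' + #(E.powerset.filter (IsCrowded m)) := by
  choose! pick hpick using fun (F : Finset (Finset α)) (hF : IsCrowded m F) => hF.1
  set D := (E.powerset.filter (IsCrowded m)).image pick
  refine ⟨E \ D, sdiff_subset, fun F hF hcrowded => ?_, ?_⟩
  · have hFD : pick F ∈ D :=
      mem_image_of_mem _ (mem_filter.2 ⟨mem_powerset.2 (hF.trans sdiff_subset), hcrowded⟩)
    exact (mem_sdiff.1 (hF (hpick F hcrowded))).2 hFD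
  · calc #E ≤ #(E \ D) + #D := card_le_card_sdiff_add_card
      _ ≤ _ := by gcongr; exact card_image_le

theorem sum_card_filter_powerset_powersetCard {β : Type*} [DecidableEq β] (Ω : Finset β)
    (T : ℕ) (p : Finset β → Prop) [DecidablePred p] :
    ∑ E ∈ Ω.powersetCard T, #(E.powerset.filter p) =
      ∑ F ∈ Ω.powerset.filter p, #((Ω.powersetCard T).filter (F ⊆ ·)) := by
  refine ((sum_card_bipartiteAbove_eq_sum_card_bipartiteBelow
    fun F E : Finset β => F ⊆ E).trans
    (sum_congr rfl fun E hE => ?_)).symm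
  have hEΩ := (mem_powersetCard.1 hE).1
  congr 1
  ext F
  simp only [mem_bipartiteBelow, mem_filter, mem_powerset]
  exact ⟨fun ⟨⟨_, hp⟩, hFE⟩ => ⟨hFE, hp⟩,
    fun ⟨hFE, hp⟩ => ⟨⟨hFE.trans hEΩ, hp⟩, hFE⟩⟩

theorem card_filter_card_biUnion_eq_le (A : Finset α) (r u : ℕ) :
    #((A.powersetCard r).powerset.filter (fun F => #(F.biUnion id) = u)) ≤
      (#A).choose u * 2 ^ u.choose r := by
  calc _ ≤ #((A.powersetCard u).biUnion fun U => (U.powersetCard r).powerset) := by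
        refine card_le_card fun F hF => ?_
        obtain ⟨hFA, hFu⟩ := mem_filter.1 hF
        rw [mem_powerset] at hFA
        refine mem_biUnion.2 ⟨F.biUnion id, mem_powersetCard.2 ⟨?_, hFu⟩,
          mem_powerset.2 fun s hs => mem_powersetCard.2 ⟨?_, (mem_powersetCard.1 (hFA hs)).2⟩⟩
        · exact biUnion_subset.2 fun s hs => (mem_powersetCard.1 (hFA hs)).1
        · exact subset_biUnion_of_mem id hs
    _ ≤ ∑ U ∈ A.powersetCard u, #((U.powersetCard r).powerset) := card_biUnion_le
    _ = (#A).choose u * 2 ^ u.choose r := by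
        rw [sum_congr rfl fun U hU => by
          rw [card_powerset, card_powersetCard, (mem_powersetCard.1 hU).2],
          sum_const, card_powersetCard, smul_eq_mul]

theorem sum_filter_isCrowded_le (A : Finset α) (r m : ℕ) (g : ℕ → ℕ) :
    ∑ F ∈ (A.powersetCard r).powerset.filter (IsCrowded m), g #(F.biUnion id) ≤
      ∑ u ∈ range (m + 1), (#A).choose u * 2 ^ u.choose r * g u := by
  have hmaps : ∀ F ∈ (A.powersetCard r).powerset.filter (IsCrowded m),
      #(F.biUnion id) ∈ range (m + 1) := fun F hF => by
    obtain ⟨-, hFm, hspan⟩ := (mem_filter.1 hF).2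
    exact mem_range.2 (Nat.lt_succ_of_le (hspan.trans hFm))
  rw [← sum_fiberwise_of_maps_to hmaps]
  refine sum_le_sum fun u _ => ?_
  rw [sum_congr rfl fun F hF => by rw [(mem_filter.1 hF).2], sum_const, smul_eq_mul]
  gcongr
  refine (card_le_card fun F hF => ?_).trans (card_filter_card_biUnion_eq_le A r u)
  simp only [mem_filter] at hF ⊢
  exact ⟨hF.1.1, hF.2⟩

theorem sum_card_filter_isCrowded_le (A : Finset α) {r m T L : ℕ} (hmT : m ≤ T)
    (hTN : T ≤ (#A).choose r) (hL : #A * T ≤ L * (#A).choose r) (hL1 : 1 ≤ L) :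
    ∑ E ∈ (A.powersetCard r).powersetCard T, #(E.powerset.filter (IsCrowded m)) ≤
      ∑ _E ∈ (A.powersetCard r).powersetCard T, (m + 1) * 2 ^ m.choose r * L ^ m := by
  set N := (#A).choose r
  have hΩ : #(A.powersetCard r) = N := card_powersetCard r A
  rw [sum_card_filter_powerset_powersetCard, sum_const, card_powersetCard, hΩ, smul_eq_mul]
  calc _ ≤ ∑ F ∈ (A.powersetCard r).powerset.filter (IsCrowded m),
        (N - #(F.biUnion id)).choose (T - #(F.biUnion id)) := by
        refine sum_le_sum fun F hF => ?_
        obtain ⟨hFΩ, -, hFm, hspan⟩ := mem_filter.1 hF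
        rw [card_filter_powersetCard_subset F _ T (mem_powerset.1 hFΩ) (hFm.trans hmT), hΩ]
        exact Nat.choose_sub_sub_le_choose_sub_sub hspan (hFm.trans hmT) hTN
    _ ≤ ∑ u ∈ range (m + 1), (#A).choose u * 2 ^ u.choose r * (N - u).choose (T - u) :=
        sum_filter_isCrowded_le A r m fun k => (N - k).choose (T - k)
    _ ≤ ∑ _u ∈ range (m + 1), 2 ^ m.choose r * L ^ m * N.choose T := by
        refine sum_le_sum fun u hu => ?_
        have hum : u ≤ m := Nat.lt_succ_iff.1 (mem_range.1 hu)
        calc (#A).choose u * 2 ^ u.choose r * (N - u).choose (T - u)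
            = 2 ^ u.choose r * ((#A).choose u * (N - u).choose (T - u)) := by ring
          _ ≤ 2 ^ m.choose r * (L ^ m * N.choose T) := by
            refine Nat.mul_le_mul (Nat.pow_le_pow_right two_pos (Nat.choose_le_choose r hum)) ?_
            exact (Nat.choose_mul_choose_sub_le (hum.trans hmT) hTN hL).trans
              (Nat.mul_le_mul_right _ (Nat.pow_le_pow_right hL1 hum))
          _ = 2 ^ m.choose r * L ^ m * N.choose T := by ring
    _ = N.choose T * ((m + 1) * 2 ^ m.choose r * L ^ m) := by
        rw [sum_const, card_range, smul_eq_mul]; ring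

theorem exists_isLocallySparse_subset_powersetCard (A : Finset α) {r m T L : ℕ} (hmT : m ≤ T)
    (hTN : T ≤ (#A).choose r) (hL : #A * T ≤ L * (#A).choose r) (hL1 : 1 ≤ L) :
    ∃ E ⊆ A.powersetCard r, IsLocallySparse m E ∧
      T ≤ #E + (m + 1) * 2 ^ m.choose r * L ^ m := by
  have hne : ((A.powersetCard r).powersetCard T).Nonempty :=
    powersetCard_nonempty.2 (by rwa [card_powersetCard])
  obtain ⟨E₀, hE₀, hcrowded⟩ :=
    exists_le_of_sum_le hne (sum_card_filter_isCrowded_le A hmT hTN hL hL1)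
  obtain ⟨E, hE, hsparse, hcard⟩ := exists_isLocallySparse_subset m E₀
  rw [mem_powersetCard] at hE₀
  exact ⟨E, hE.trans hE₀.1, hsparse, by omega⟩

theorem disjoint_powersetCard_of_disjoint {r : ℕ} (hr : r ≠ 0) {A C : Finset α}
    (hAC : Disjoint A C) : Disjoint (C.powersetCard r) (A.powersetCard r) := by
  refine disjoint_left.2 fun s hs hsA => hr ?_
  obtain ⟨hsC, hsr⟩ := mem_powersetCard.1 hs
  rw [← hsr, card_eq_zero, ← subset_empty, ← disjoint_iff_inter_eq_empty.1 hAC]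
  exact subset_inter (mem_powersetCard.1 hsA).1 hsC

theorem filter_subset_powersetCard (r : ℕ) (C S : Finset α) :
    (C.powersetCard r).filter (· ⊆ S) = (C ∩ S).powersetCard r := by
  ext t
  simp only [mem_filter, mem_powersetCard, subset_inter_iff]
  tauto

theorem cliquePlusFew_of_embedding {r m : ℕ} (g : Fin m ↪ α) {K : Finset α}
    {H : Finset (Finset α)} (hK : ↑K ⊆ Set.range g)
    (hH : ∀ s ∈ H, ↑s ⊆ Set.range g ∧ #s = r ∧ Disjoint s K) (hHm : #H ≤ m) :
    CliquePlusFew r m ((#K).choose r + #H) := by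
  set pull : Finset α → Finset (Fin m) := fun s => s.preimage g g.injective.injOn
  have card_pull (s : Finset α) (hs : ↑s ⊆ Set.range g) : #(pull s) = #s := by
    rw [card_preimage, filter_true_of_mem fun v hv => hs hv]
  have pull_injOn : Set.InjOn pull {s | ↑s ⊆ Set.range g} := by
    have mem_of_pull {s t : Finset α} (hs : ↑s ⊆ Set.range g) (hst : pull s = pull t) :
        s ⊆ t := fun v hv => by
      obtain ⟨i, rfl⟩ := hs hv
      exact mem_preimage.1 (hst ▸ mem_preimage.2 hv : i ∈ pull t)
    exact fun s hs t ht hst => (mem_of_pull hs hst).antisymm (mem_of_pull ht hst.symm)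
  have hH_injOn : Set.InjOn pull ↑H := pull_injOn.mono fun s hs => (hH s hs).1
  refine ⟨pull K, H.image pull, ?_, by rwa [card_image_of_injOn hH_injOn], ?_⟩
  · simp only [mem_image]
    rintro _ ⟨s, hs, rfl⟩
    obtain ⟨hsg, hsr, hsK⟩ := hH s hs
    exact ⟨(card_pull s hsg).trans hsr, disjoint_preimage hsK⟩
  · rw [card_pull K hK, card_image_of_injOn hH_injOn]

end FinsetFamilies

theorem cliquePlusFew_of_pairArrows {r n m f x : ℕ} (hr : r ≠ 0) (hm : m ≠ 0)
    {A : Finset (Fin n)} (hxA : x + #A ≤ n) {E : Finset (Finset (Fin n))}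
    (hEA : E ⊆ A.powersetCard r) (hE : IsLocallySparse m E)
    (harrow : PairArrows r n (x.choose r + #E) m f) :
    CliquePlusFew r m f ∧ ∃ y ≤ m, y.choose r ≤ f ∧ f < y.choose r + m := by
  obtain ⟨C, hCA, hC⟩ := exists_subset_card_eq (s := Aᶜ) (n := x)
    (by rw [card_compl, Fintype.card_fin]; omega)
  have hAC : Disjoint A C := disjoint_of_subset_right hCA disjoint_compl_right
  have hCE : Disjoint (C.powersetCard r) E :=
    disjoint_of_subset_right hEA (disjoint_powersetCard_of_disjoint hr hAC)
  obtain ⟨S, hS, hSf⟩ := harrow (C.powersetCard r ∪ E)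
    (fun s hs => (mem_union.1 hs).elim (fun hs => (mem_powersetCard.1 hs).2)
      fun hs => (mem_powersetCard.1 (hEA hs)).2)
    (by rw [card_union_of_disjoint hCE, card_powersetCard, hC])
  rw [filter_union, card_union_of_disjoint (disjoint_filter_filter hCE),
    filter_subset_powersetCard, card_powersetCard] at hSf
  have hfew := hE.card_filter_subset_lt (S := S) (card_pos.1 (by omega)) hS.le
  have hrange : Set.range (S.orderEmbOfFin hS) = ↑S := range_orderEmbOfFin S hS
  refine ⟨hSf ▸ cliquePlusFew_of_embedding (S.orderEmbOfFin hS).toEmbedding ?_ ?_ (by omega),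
    #(C ∩ S), ?_, by omega, by omega⟩
  · simp only [RelEmbedding.coe_toEmbedding, hrange]
    exact_mod_cast inter_subset_right
  · intro s hs
    obtain ⟨hsE, hsS⟩ := mem_filter.1 hs
    obtain ⟨hsA, hsr⟩ := mem_powersetCard.1 (hEA hsE)
    refine ⟨?_, hsr,
      disjoint_of_subset_left hsA (disjoint_of_subset_right inter_subset_left hAC)⟩
    simp only [RelEmbedding.coe_toEmbedding, hrange]
    exact_mod_cast hsS
  · rw [← hS]
    exact card_le_card inter_subset_right

theorem not_pairArrows_of_isLocallySparse {r m f n : ℕ} (hr : r ≠ 0) (hm : m ≠ 0)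
    (hnot : ¬ (CliquePlusFew r m f ∧ ∃ x ≤ m, x.choose r ≤ f ∧ f < x.choose r + m))
    {A : Finset (Fin n)} {E : Finset (Finset (Fin n))} (hEA : E ⊆ A.powersetCard r)
    (hE : IsLocallySparse m E) (hcard : n.choose (r - 1) ≤ #E) {e : ℕ}
    (he : e ≤ (n - #A).choose r) : ¬ PairArrows r n e m f := by
  obtain ⟨s, rfl⟩ : ∃ s, r = s + 1 := ⟨r - 1, by omega⟩
  obtain ⟨x, hx, hxe, hex⟩ := Nat.exists_choose_le_le_choose_add s he
  have hA : #A ≤ n := (card_le_univ A).trans_eq (Fintype.card_fin n)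
  have hrest : e - x.choose (s + 1) ≤ #E := by
    have := Nat.choose_le_choose s (Nat.sub_le n #A)
    rw [Nat.add_sub_cancel] at hcard
    omega
  obtain ⟨E', hE'E, hE'⟩ := exists_subset_card_eq hrest
  intro harrow
  exact hnot (cliquePlusFew_of_pairArrows (x := x) hr hm (by omega) (hE'E.trans hEA) (hE.mono hE'E)
    (by rwa [hE', Nat.add_sub_cancel' hxe]))

theorem eventually_exists_isLocallySparse {r : ℕ} (hr : 2 ≤ r) (m : ℕ) {q : ℕ}
    (hq : 0 < q) :
    ∀ᶠ n in atTop, ∀ A : Finset (Fin n), #A = n / q →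
      ∃ E ⊆ A.powersetCard r, IsLocallySparse m E ∧ n.choose (r - 1) ≤ #E := by
  set K := r.factorial * (2 * q) ^ r
  set L := 2 * K
  set C₀ := (m + 1) * 2 ^ m.choose r * L ^ m
  have hK : 0 < K := by positivity
  filter_upwards [eventually_ge_atTop (2 * q * r + 2 * K + C₀)] with n hn A hA
  set T := n.choose (r - 1) + C₀
  have hKn : n ^ r ≤ K * (n / q).choose r := Nat.pow_le_factorial_mul_choose_div hq (by omega)
  have hpow : n ^ r = n * n ^ (r - 1) := by rw [← pow_succ', Nat.sub_add_cancel (by omega)]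
  have hT : T ≤ 2 * n ^ (r - 1) := by
    have := Nat.choose_le_pow n (r - 1)
    have := le_self_pow (M := ℕ) (a := n) (by omega) (by omega : r - 1 ≠ 0)
    omega
  have hmT : m ≤ T := by
    have : 1 ≤ 2 ^ m.choose r * L ^ m := Nat.one_le_iff_ne_zero.2 (by positivity)
    have : m ≤ C₀ := by simp only [C₀, mul_assoc]; nlinarith
    omega
  have hTN : T ≤ (#A).choose r := by
    rw [hA]
    refine Nat.le_of_mul_le_mul_left ?_ hK
    calc K * T ≤ K * (2 * n ^ (r - 1)) := Nat.mul_le_mul_left K hT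
      _ = 2 * K * n ^ (r - 1) := by ring
      _ ≤ n * n ^ (r - 1) := Nat.mul_le_mul_right _ (by omega)
      _ ≤ K * (n / q).choose r := hpow ▸ hKn
  have hL : #A * T ≤ L * (#A).choose r := by
    rw [hA]
    calc n / q * T ≤ n * (2 * n ^ (r - 1)) := Nat.mul_le_mul (Nat.div_le_self n q) hT
      _ = 2 * n ^ r := by rw [hpow]; ring
      _ ≤ 2 * (K * (n / q).choose r) := Nat.mul_le_mul_left 2 hKn
      _ = L * (n / q).choose r := by ring
  obtain ⟨E, hEA, hE, hcard⟩ :=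
    exists_isLocallySparse_subset_powersetCard A hmT hTN hL (by omega)
  exact ⟨E, hEA, hE, by omega⟩

theorem eventually_forall_not_pairArrows {r m f : ℕ} (hr : 2 ≤ r) (hm : m ≠ 0)
    (hnot : ¬ (CliquePlusFew r m f ∧ ∃ x ≤ m, x.choose r ≤ f ∧ f < x.choose r + m))
    {q : ℕ} (hq : 0 < q) :
    ∀ᶠ n in atTop, ∀ e ≤ (n - n / q).choose r, ¬ PairArrows r n e m f := by
  filter_upwards [eventually_exists_isLocallySparse hr m hq] with n hn e he
  obtain ⟨A, -, hA⟩ := exists_subset_card_eq (s := (univ : Finset (Fin n))) (n := n / q)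
    (by simp [Nat.div_le_self])
  obtain ⟨E, hEA, hE, hcard⟩ := hn A hA
  exact not_pairArrows_of_isLocallySparse (by omega) hm hnot hEA hE hcard (hA ▸ he)

theorem mul_card_filter_pairArrows_le {r m f n q : ℕ} (hr : r ≠ 0) (hn : 2 * r ≤ n)
    (h : ∀ e ≤ (n - n / q).choose r, ¬ PairArrows r n e m f) :
    q * #((range (n.choose r + 1)).filter (fun e => PairArrows r n e m f)) ≤
      2 * r * n.choose r := by
  obtain ⟨s, rfl⟩ : ∃ s, r = s + 1 := ⟨r - 1, by omega⟩
  have hsub : (range (n.choose (s + 1) + 1)).filter (fun e => PairArrows (s + 1) n e m f) ⊆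
      Ioc ((n - n / q).choose (s + 1)) (n.choose (s + 1)) := fun e he => by
    obtain ⟨he, harrow⟩ := mem_filter.1 he
    exact mem_Ioc.2 ⟨lt_of_not_ge fun hle => h e hle harrow, Nat.lt_succ_iff.1 (mem_range.1 he)⟩
  have hcount := (card_le_card hsub).trans_eq (Nat.card_Ioc _ _)
  have hdiff := Nat.choose_succ_le_choose_sub_add_mul n s (n / q)
  calc q * #_ ≤ q * (n / q * n.choose s) := Nat.mul_le_mul_left q (by omega)
    _ ≤ n * n.choose s := by rw [← mul_assoc]; exact Nat.mul_le_mul_right _ (Nat.mul_div_le n q)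
    _ ≤ 2 * (s + 1) * n.choose (s + 1) := Nat.mul_choose_le_two_mul_choose_succ (by omega)

theorem sigmaR_eq_zero_of_eventually_not_pairArrows {r m f : ℕ} (hr : r ≠ 0)
    (h : ∀ q, 0 < q →
      ∀ᶠ n in atTop, ∀ e ≤ (n - n / q).choose r, ¬ PairArrows r n e m f) :
    sigmaR r m f = 0 := by
  refine Tendsto.limsup_eq (tendsto_order.2 ⟨fun a ha => Eventually.of_forall fun n =>
    ha.trans_le (by positivity), fun b hb => ?_⟩)
  obtain ⟨q, hq⟩ := exists_nat_gt (2 * r / b)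
  have hq0 : (0 : ℝ) < q := (div_nonneg (by positivity) hb.le).trans_lt hq
  filter_upwards [h q (by exact_mod_cast hq0), eventually_ge_atTop (2 * r)] with n hn h2r
  have hcount : (q : ℝ) * #((range (n.choose r + 1)).filter (fun e => PairArrows r n e m f)) ≤
      2 * r * n.choose r := by exact_mod_cast mul_card_filter_pairArrows_le hr h2r hn
  have hpos : (0 : ℝ) < n.choose r := by exact_mod_cast Nat.choose_pos (by omega)
  rw [div_lt_iff₀ hpos]
  rw [div_lt_iff₀ hb] at hq
  nlinarith

theorem sigma_zero_of_not_cliquePlusFew_general (r m f : ℕ) (hr : 3 ≤ r) (hm : r ≤ m) :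
    (¬ CliquePlusFew r m f → sigmaR r m f = 0) ∧
    ((¬ ∃ x ≤ m, x.choose r ≤ f ∧ f < x.choose r + m) → sigmaR r m f = 0) := by
  have key
      (hnot : ¬ (CliquePlusFew r m f ∧ ∃ x ≤ m, x.choose r ≤ f ∧ f < x.choose r + m)) :
      sigmaR r m f = 0 :=
    sigmaR_eq_zero_of_eventually_not_pairArrows (by omega) fun _ hq =>
      eventually_forall_not_pairArrows (by omega) (by omega) hnot hq
  exact ⟨fun h => key fun hc => h hc.1, fun h => key fun hc => h hc.2⟩

theorem sigma_zero_of_not_cliquePlusFew (r m f : ℕ) (hr : 3 ≤ r) (hm : r ≤ m)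
    (hf : f ≤ m.choose r) :
    (¬ CliquePlusFew r m f → sigmaR r m f = 0) ∧
    ((¬ ∃ x ≤ m, x.choose r ≤ f ∧ f < x.choose r + m) → sigmaR r m f = 0) :=
  sigma_zero_of_not_cliquePlusFew_general r m f hr hm
end

section
/- Let m ≥ r ≥ 3 and 0 ≤ f ≤ C(m,r). If (m,f) cannot be realised as a hypergraph obtained from a complete r-graph by deleting at most m edges and adding isolated vertices, then σ_r(m,f) = 0. In particular, if there is no x ∈ {0,…,m} with 0 ≤ C(x,r) − f < m, then σ_r(m,f) = 0. -/
open Finset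
open scoped Classical

/-!
For `e` above a constant, let `t` be least with `e ≤ C(t,r)`, so `d = C(t,r) - e ≤ C(t-1,r-1)`.
Take for `G` the complete `r`-graph on `t` vertices minus an `r`-graph `H` with `d` edges in which
every `m`-set spans fewer than `m` edges. An `m`-set meeting the clique in `x` vertices induces
between `C(x,r) - m + 1` and `C(x,r)` edges of `G`, so `(n,e) ↛ (m,f)` unless some `C(x,r)` with
`x ≤ m` lies in `[f, f + m)`. Hence only boundedly many `e` arrow `(m,f)`, and `σ_r(m,f) = 0`.

`H` comes from the deletion method: a random set of `C(t-1,r-1) + c` edges has density about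
`r/t`, and it contains on average at most `c` families of `m` edges inside an `m`-set, as there
are `O(t^m)` such families, each surviving with probability `O(t^-m)`.
-/

namespace Nat

theorem choose_le_choose_add_add (a b j : ℕ) : a.choose b ≤ (a + j).choose (b + j) := by
  induction j with
  | zero => rfl
  | succ j ih =>
    rw [← Nat.add_assoc, ← Nat.add_assoc, choose_succ_succ]
    exact ih.trans (Nat.le_add_right _ _)

theorem sub_add_one_le_choose {n k : ℕ} (hk : 0 < k) (hkn : k ≤ n) :
    n - k + 1 ≤ n.choose k := by
  have h := choose_le_choose_add_add (n - k + 1) 1 (k - 1)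
  rwa [choose_one_right, show n - k + 1 + (k - 1) = n by omega,
    show 1 + (k - 1) = k by omega] at h

theorem tendsto_choose_atTop {k : ℕ} (hk : 0 < k) :
    Filter.Tendsto (fun n : ℕ => n.choose k) Filter.atTop Filter.atTop :=
  Filter.tendsto_atTop_mono' _
    (Filter.eventually_atTop.2
      ⟨k, fun _ hn => (Nat.le_succ _).trans (sub_add_one_le_choose hk hn)⟩)
    (Filter.tendsto_sub_atTop_nat k)

theorem choose_mul_choose_le_pow_mul_choose {t D N m c : ℕ} (h : t * D ≤ c * (N + 1 - m)) :
    t.choose m * D.choose m ≤ c ^ m * N.choose m := by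
  refine Nat.le_of_mul_le_mul_right ?_ (factorial_pos m)
  calc t.choose m * D.choose m * m ! = t.choose m * D.descFactorial m := by
        rw [descFactorial_eq_factorial_mul_choose]; ring
    _ ≤ t ^ m * D ^ m := Nat.mul_le_mul (choose_le_pow t m) (descFactorial_le_pow D m)
    _ = (t * D) ^ m := (Nat.mul_pow t D m).symm
    _ ≤ (c * (N + 1 - m)) ^ m := Nat.pow_le_pow_left h m
    _ = c ^ m * (N + 1 - m) ^ m := Nat.mul_pow _ _ m
    _ ≤ c ^ m * N.descFactorial m := Nat.mul_le_mul_left _ (pow_sub_le_descFactorial N m)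
    _ = c ^ m * N.choose m * m ! := by rw [descFactorial_eq_factorial_mul_choose]; ring

theorem mul_choose_eq_mul_choose_pred {t r : ℕ} (ht : 0 < t) (hr : 0 < r) :
    t * (t - 1).choose (r - 1) = r * t.choose r := by
  have h := add_one_mul_choose_eq (t - 1) (r - 1)
  rwa [Nat.sub_add_cancel ht, Nat.sub_add_cancel hr, Nat.mul_comm (t.choose r)] at h

theorem sub_add_one_le_choose_sub_one {t r : ℕ} (hr : 2 ≤ r) (hrt : r ≤ t) :
    t - r + 1 ≤ (t - 1).choose (r - 1) := by
  have h := sub_add_one_le_choose (n := t - 1) (k := r - 1) (by omega) (by omega)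
  rwa [show t - 1 - (r - 1) = t - r by omega] at h

theorem mul_le_choose_of_le {r t A : ℕ} (hr : 2 ≤ r) (ht : r * A + r ≤ t) :
    t * A ≤ t.choose r := by
  have hgap := sub_add_one_le_choose_sub_one hr (by omega : r ≤ t)
  refine Nat.le_of_mul_le_mul_left ?_ (by omega : 0 < r)
  calc r * (t * A) = t * (r * A) := by ring
    _ ≤ t * (t - 1).choose (r - 1) := Nat.mul_le_mul_left _ (by omega)
    _ = r * t.choose r := mul_choose_eq_mul_choose_pred (by omega) (by omega)

end Nat

namespace Finset

variable {α : Type*} [DecidableEq α]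

theorem card_filter_superset_powersetCard_le {E C : Finset α} (hCE : C ⊆ E) (D : ℕ) :
    #{H ∈ E.powersetCard D | C ⊆ H} ≤ (#E - #C).choose (D - #C) := by
  rw [← card_sdiff_of_subset hCE, ← card_powersetCard]
  refine card_le_card_of_injOn (· \ C) (fun H hH => ?_) (fun H hH H' hH' h => ?_)
  · obtain ⟨hH, hCH⟩ := mem_filter.1 (mem_coe.1 hH)
    obtain ⟨hHE, hHcard⟩ := mem_powersetCard.1 hH
    exact mem_coe.2 <| mem_powersetCard.2
      ⟨sdiff_subset_sdiff hHE le_rfl, by rw [card_sdiff_of_subset hCH, hHcard]⟩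
  · rw [← sdiff_union_of_subset (mem_filter.1 (mem_coe.1 hH)).2,
      ← sdiff_union_of_subset (mem_filter.1 (mem_coe.1 hH')).2]
    exact congrArg (· ∪ C) h

theorem exists_hittingSet {𝓑 : Finset (Finset α)} (h𝓑 : ∀ C ∈ 𝓑, C.Nonempty) :
    ∃ R : Finset α, #R ≤ #𝓑 ∧ ∀ C ∈ 𝓑, ∃ a ∈ C, a ∈ R := by
  choose pick hpick using h𝓑
  refine ⟨𝓑.attach.image fun C => pick C.1 C.2, card_image_le.trans (card_attach).le, ?_⟩
  exact fun C hC => ⟨pick C hC, hpick C hC, mem_image_of_mem _ (mem_attach _ ⟨C, hC⟩)⟩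

theorem exists_subset_forall_not_subset {H₀ : Finset α} {𝓒 : Finset (Finset α)}
    (h𝓒 : ∀ C ∈ 𝓒, C.Nonempty) :
    ∃ H ⊆ H₀, #H₀ - #{C ∈ 𝓒 | C ⊆ H₀} ≤ #H ∧ ∀ C ∈ 𝓒, ¬ C ⊆ H := by
  obtain ⟨R, hR, hit⟩ := exists_hittingSet (𝓑 := {C ∈ 𝓒 | C ⊆ H₀})
    fun C hC => h𝓒 C (mem_filter.1 hC).1
  refine ⟨H₀ \ R, sdiff_subset, (Nat.sub_le_sub_left hR _).trans (le_card_sdiff R H₀), ?_⟩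
  intro C hC hCH
  obtain ⟨a, haC, haR⟩ := hit C (mem_filter.2 ⟨hC, hCH.trans sdiff_subset⟩)
  exact (mem_sdiff.1 (hCH haC)).2 haR

/-- The deletion method: `C(D,k) / C(#E,k)` is the probability that a uniformly random `D`-subset
of `E` contains a given `k`-subset. -/
theorem exists_large_subset_forall_not_subset {E : Finset α} {𝓒 : Finset (Finset α)}
    {k D c : ℕ} (h𝓒 : ∀ C ∈ 𝓒, C ⊆ E ∧ #C = k) (hk : 0 < k) (hkD : k ≤ D) (hDE : D ≤ #E)
    (hcount : #𝓒 * D.choose k ≤ c * (#E).choose k) :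
    ∃ H ⊆ E, D - c ≤ #H ∧ ∀ C ∈ 𝓒, ¬ C ⊆ H := by
  set Ω := E.powersetCard D
  have hΩ : #Ω = (#E).choose D := card_powersetCard D E
  have hcontain : ∀ C ∈ 𝓒, #{H ∈ Ω | C ⊆ H} ≤ (#E - k).choose (D - k) := fun C hC =>
    (h𝓒 C hC).2 ▸ card_filter_superset_powersetCard_le (h𝓒 C hC).1 D
  have hhyper : #𝓒 * (#E - k).choose (D - k) ≤ c * #Ω := by
    refine Nat.le_of_mul_le_mul_right ?_ (Nat.choose_pos (hkD.trans hDE))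
    calc #𝓒 * (#E - k).choose (D - k) * (#E).choose k
        = #𝓒 * ((#E).choose k * (#E - k).choose (D - k)) := by ring
      _ = #𝓒 * D.choose k * #Ω := by rw [← Nat.choose_mul hkD, hΩ]; ring
      _ ≤ c * (#E).choose k * #Ω := Nat.mul_le_mul_right _ hcount
      _ = c * #Ω * (#E).choose k := by ring
  have hsum : ∑ H ∈ Ω, #{C ∈ 𝓒 | C ⊆ H} ≤ ∑ _H ∈ Ω, c := by
    calc ∑ H ∈ Ω, #{C ∈ 𝓒 | C ⊆ H} = ∑ C ∈ 𝓒, #{H ∈ Ω | C ⊆ H} :=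
by
          simp only [card_filter]; exact sum_comm
      _ ≤ #𝓒 * (#E - k).choose (D - k) := by simpa using sum_le_sum hcontain
      _ ≤ ∑ _H ∈ Ω, c := by simpa [Nat.mul_comm] using hhyper
  obtain ⟨H₀, hH₀, hbad⟩ := exists_le_of_sum_le (powersetCard_nonempty.2 hDE) hsum
  obtain ⟨H, hHH₀, hHcard, hH⟩ := exists_subset_forall_not_subset (H₀ := H₀)
    fun C hC => card_pos.1 ((h𝓒 C hC).2 ▸ hk)
  obtain ⟨hH₀E, hH₀card⟩ := mem_powersetCard.1 hH₀
  exact ⟨H, hHH₀.trans hH₀E, by omega, hH⟩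

end Finset

section SparseHypergraph

variable {α : Type*} [DecidableEq α]

def crowdedConfigs (T : Finset α) (r m : ℕ) : Finset (Finset (Finset α)) :=
  (T.powersetCard m).biUnion fun S => (S.powersetCard r).powersetCard m

theorem subset_and_card_of_mem_crowdedConfigs {T : Finset α} {r m : ℕ} {C : Finset (Finset α)}
    (hC : C ∈ crowdedConfigs T r m) : C ⊆ T.powersetCard r ∧ #C = m := by
  obtain ⟨S, hS, hCS⟩ := mem_biUnion.1 hC
  obtain ⟨hCS, hC⟩ := mem_powersetCard.1 hCS
  exact ⟨hCS.trans (powersetCard_mono (mem_powersetCard.1 hS).1), hC⟩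

theorem card_crowdedConfigs_le (T : Finset α) (r m : ℕ) :
    #(crowdedConfigs T r m) ≤ (#T).choose m * (m.choose r).choose m := by
  rw [← card_powersetCard m T]
  refine card_biUnion_le_card_mul _ _ _ fun S hS => ?_
  rw [card_powersetCard, card_powersetCard, (mem_powersetCard.1 hS).2]

theorem card_filter_subset_lt_of_forall_not_subset {T : Finset α} {r m : ℕ}
    {H : Finset (Finset α)} (hH : H ⊆ T.powersetCard r)
    (hfree : ∀ C ∈ crowdedConfigs T r m, ¬ C ⊆ H) (hmT : m ≤ #T) {S : Finset α} (hS : #S ≤ m) :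
    #{A ∈ H | A ⊆ S} < m := by
  by_contra! hge
  obtain ⟨C, hCH, hCcard⟩ := exists_subset_card_eq hge
  obtain ⟨S₁, hS₁, hS₁T, hS₁card⟩ := exists_subsuperset_card_eq
    (inter_subset_right : S ∩ T ⊆ T) ((card_le_card inter_subset_left).trans hS) hmT
  refine hfree C (mem_biUnion.2 ⟨S₁, mem_powersetCard.2 ⟨hS₁T, hS₁card⟩,
    mem_powersetCard.2 ⟨fun A hA => ?_, hCcard⟩⟩) (hCH.trans (filter_subset _ _))
  obtain ⟨hAH, hAS⟩ := mem_filter.1 (hCH hA)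
  obtain ⟨hAT, hAr⟩ := mem_powersetCard.1 (hH hAH)
  exact mem_powersetCard.2 ⟨(subset_inter hAS hAT).trans hS₁, hAr⟩

theorem card_filter_subset_sdiff_add_card_filter_subset {T S : Finset α} {r : ℕ}
    {H : Finset (Finset α)} (hH : H ⊆ T.powersetCard r) :
    #{A ∈ T.powersetCard r \ H | A ⊆ S} + #{A ∈ H | A ⊆ S} = (#(S ∩ T)).choose r := by
  have hsdiff : {A ∈ T.powersetCard r \ H | A ⊆ S}
      = {A ∈ T.powersetCard r | A ⊆ S} \ {A ∈ H | A ⊆ S} := by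
    ext A; simp only [mem_filter, mem_sdiff]; tauto
  have hinside : {A ∈ T.powersetCard r | A ⊆ S} = (S ∩ T).powersetCard r := by
    ext A; simp only [mem_filter, mem_powersetCard, subset_inter_iff]; tauto
  rw [hsdiff, card_sdiff_add_card_eq_card (filter_subset_filter _ hH), hinside,
    card_powersetCard]

end SparseHypergraph

/-- Bounds the expected number of crowded configurations in a random edge set of density about
`r / t` on `t` vertices. -/
def crowdBound (r m : ℕ) : ℕ := (m.choose r).choose m * (r + 1) ^ m

def sparseThreshold (r m : ℕ) : ℕ := r * (crowdBound r m + (r + 1) * m) + r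

theorem deletion_bounds_of_sparseThreshold_le {r m t : ℕ} (hr : 2 ≤ r) (hm : 0 < m)
    (ht : sparseThreshold r m ≤ t) :
    m ≤ (t - 1).choose (r - 1) + crowdBound r m ∧
    (t - 1).choose (r - 1) + crowdBound r m ≤ t.choose r ∧
    t.choose m * (m.choose r).choose m * ((t - 1).choose (r - 1) + crowdBound r m).choose m ≤
      crowdBound r m * (t.choose r).choose m := by
  set c := crowdBound r m
  set A := c + (r + 1) * m
  set N := t.choose r
  set gap := (t - 1).choose (r - 1)
  set D := gap + c
  replace ht : r * A + r ≤ t := ht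
  have hmA : m ≤ A := le_add_left (Nat.le_mul_of_pos_left m (by omega))
  have hArA : A ≤ r * A := Nat.le_mul_of_pos_left A (by omega)
  have hpascal : t * gap = r * N := Nat.mul_choose_eq_mul_choose_pred (by omega) (by omega)
  have hgap : t - r + 1 ≤ gap := Nat.sub_add_one_le_choose_sub_one hr (by omega)
  have hNA : t * A ≤ N := Nat.mul_le_choose_of_le hr ht
  have hAN : A ≤ N := (Nat.le_mul_of_pos_left A (by omega)).trans hNA
  have hstar : t * D ≤ (r + 1) * (N + 1 - m) := by
    have h1 : (r + 1) * (N + 1 - m) + (r + 1) * m = (r + 1) * N + (r + 1) := by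
      rw [← Nat.mul_add, Nat.sub_add_cancel (by omega), Nat.mul_add, Nat.mul_one]
    have h2 : t * A = t * c + t * ((r + 1) * m) := Nat.mul_add _ _ _
    have h3 : (r + 1) * m ≤ t * ((r + 1) * m) := Nat.le_mul_of_pos_left _ (by omega)
    have h4 : t * D = t * gap + t * c := Nat.mul_add _ _ _
    nlinarith
  refine ⟨by omega, ?_, ?_⟩
  · have h1 : t * c ≤ t * A := Nat.mul_le_mul_left _ (le_add_right le_rfl)
    have h2 : (r + 1) * N ≤ t * N := Nat.mul_le_mul_right _ (by omega)
    have h3 : t * D = t * gap + t * c := Nat.mul_add _ _ _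
    refine Nat.le_of_mul_le_mul_left ?_ (by omega : 0 < t)
    rw [Nat.add_one_mul] at h2
    omega
  · calc t.choose m * (m.choose r).choose m * D.choose m
        = (m.choose r).choose m * (t.choose m * D.choose m) := by ring
      _ ≤ (m.choose r).choose m * ((r + 1) ^ m * N.choose m) :=
          Nat.mul_le_mul_left _ (Nat.choose_mul_choose_le_pow_mul_choose hstar)
      _ = c * N.choose m := by simp only [c, crowdBound]; ring

theorem exists_sparse_rgraph {α : Type*} [DecidableEq α] {r m : ℕ} (hr : 2 ≤ r) (hm : 0 < m)
    {T : Finset α} (hT : sparseThreshold r m ≤ #T) :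
    ∃ H ⊆ T.powersetCard r, (#T - 1).choose (r - 1) ≤ #H ∧
      ∀ S : Finset α, #S ≤ m → #{A ∈ H | A ⊆ S} < m := by
  obtain ⟨hmD, hDN, hcount⟩ := deletion_bounds_of_sparseThreshold_le hr hm hT
  have hmT : m ≤ #T := by
    have : m ≤ r * m := Nat.le_mul_of_pos_left m (by omega)
    unfold sparseThreshold at hT
    nlinarith
  obtain ⟨H, hHE, hHcard, hfree⟩ := exists_large_subset_forall_not_subset
    (fun C hC => subset_and_card_of_mem_crowdedConfigs hC) hm hmD (by rwa [card_powersetCard])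
    (by
      rw [card_powersetCard]
      exact (Nat.mul_le_mul_right _ (card_crowdedConfigs_le T r m)).trans hcount)
  exact ⟨H, hHE, by omega, fun _ hS =>
    card_filter_subset_lt_of_forall_not_subset hHE hfree hmT hS⟩

theorem not_pairArrows_of_sparseThreshold_lt {r m f n e : ℕ} (hr : 2 ≤ r) (hm : 0 < m)
    (hgap : ¬ ∃ x ≤ m, f ≤ x.choose r ∧ x.choose r < f + m)
    (he : (sparseThreshold r m).choose r < e) (hen : e ≤ n.choose r) :
    ¬ PairArrows r n e m f := by
  intro harrow
  have hex : ∃ t : ℕ, e ≤ t.choose r := ⟨n, hen⟩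
  obtain ⟨t, het, hmin⟩ : ∃ t : ℕ, e ≤ t.choose r ∧ ∀ s < t, ¬ e ≤ s.choose r :=
    ⟨Nat.find hex, Nat.find_spec hex, fun _ => Nat.find_min hex⟩
  have htn : t ≤ n := not_lt.1 fun h => hmin n h hen
  have hthr : sparseThreshold r m < t := by
    by_contra! h
    exact absurd (het.trans (Nat.choose_le_choose r h)) (by omega)
  have hpred : (t - 1).choose r < e := not_le.1 (hmin (t - 1) (by omega))
  have hpascal := Nat.choose_eq_choose_pred_add (n := t) (k := r) (by omega) (by omega)
  obtain ⟨T, -, hT⟩ := exists_subset_card_eq (s := (univ : Finset (Fin n))) (by simpa using htn)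
  obtain ⟨H, hHT, hHcard, hsparse⟩ := exists_sparse_rgraph hr hm (T := T) (by omega)
  rw [hT] at hHcard
  obtain ⟨H', hH'H, hH'card⟩ := exists_subset_card_eq (s := H) (n := t.choose r - e) (by omega)
  have hH'T := hH'H.trans hHT
  obtain ⟨S, hS, hSf⟩ := harrow (T.powersetCard r \ H')
    (fun A hA => (mem_powersetCard.1 (mem_sdiff.1 hA).1).2)
    (by rw [card_sdiff_of_subset hH'T, card_powersetCard, hT, hH'card]; omega)
  have hcount := card_filter_subset_sdiff_add_card_filter_subset (S := S) hH'T
  have hfew : #{A ∈ H' | A ⊆ S} < m :=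
    (card_le_card (filter_subset_filter _ hH'H)).trans_lt (hsparse S hS.le)
  exact hgap ⟨#(S ∩ T), (card_le_card inter_subset_left).trans hS.le, by omega, by omega⟩

theorem sigmaR_eq_zero_of_forall_not_pairArrows {r m f : ℕ} (hr : 0 < r) (E₀ : ℕ)
    (h : ∀ n e, E₀ < e → e ≤ n.choose r → ¬ PairArrows r n e m f) : sigmaR r m f = 0 := by
  have hcard (n : ℕ) : #{e ∈ range (n.choose r + 1) | PairArrows r n e m f} ≤ E₀ + 1 := by
    refine (card_le_card fun e he => ?_).trans (card_range (E₀ + 1)).le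
    obtain ⟨he, harrow⟩ := mem_filter.1 he
    by_contra! hE₀
    exact h n e (by simpa using hE₀) (by simpa [Nat.lt_succ_iff] using he) harrow
  have hlim : Filter.Tendsto (fun n : ℕ => ((E₀ + 1 : ℕ) : ℝ) / (n.choose r : ℝ))
      Filter.atTop (nhds 0) :=
    tendsto_const_nhds.div_atTop (tendsto_natCast_atTop_atTop.comp (Nat.tendsto_choose_atTop hr))
  refine (squeeze_zero (fun n => by positivity) (fun n => ?_) hlim).limsup_eq
  exact div_le_div_of_nonneg_right (by exact_mod_cast hcard n) (Nat.cast_nonneg _)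

theorem coCliqueFew_of_choose {r m f x : ℕ} (hx : x ≤ m) (hf : f ≤ x.choose r)
    (hlt : x.choose r < f + m) : CoCliqueFew r m f := by
  obtain ⟨K, -, hK⟩ := exists_subset_card_eq (s := (univ : Finset (Fin m))) (by simpa using hx)
  obtain ⟨H, hHK, hH⟩ := exists_subset_card_eq (s := K.powersetCard r) (n := x.choose r - f)
    (by rw [card_powersetCard, hK]; omega)
  exact ⟨K, H, hHK, by omega, by rw [hK, hH]; omega⟩

theorem sigma_zero_of_not_coCliqueFew_general (r m f : ℕ) (hr : 3 ≤ r) (hm : r ≤ m) :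
    (¬ CoCliqueFew r m f → sigmaR r m f = 0) ∧
    ((¬ ∃ x ≤ m, f ≤ x.choose r ∧ x.choose r < f + m) → sigmaR r m f = 0) := by
  have key (hgap : ¬ ∃ x ≤ m, f ≤ x.choose r ∧ x.choose r < f + m) : sigmaR r m f = 0 :=
    sigmaR_eq_zero_of_forall_not_pairArrows (by omega) _ fun _ _ he hen =>
      not_pairArrows_of_sparseThreshold_lt (by omega) (by omega) hgap he hen
  exact ⟨fun h => key fun ⟨_, hx, hf, hlt⟩ => h (coCliqueFew_of_choose hx hf hlt), key⟩

theorem sigma_zero_of_not_coCliqueFew (r m f : ℕ) (hr : 3 ≤ r) (hm : r ≤ m)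
    (hf : f ≤ m.choose r) :
    (¬ CoCliqueFew r m f → sigmaR r m f = 0) ∧
    ((¬ ∃ x ≤ m, f ≤ x.choose r ∧ x.choose r < f + m) → sigmaR r m f = 0) :=
  sigma_zero_of_not_coCliqueFew_general r m f hr hm
end

section
/- Let m > r ≥ 3 and l ≤ l_{m,r}. If t_r(m,l) < f < C(m,r) − t_r(m,l), then σ_r(m,f) ≤ 1 − 2·(l)_r/l^r. -/
/-!
Take the parts of the complete balanced `l`-partite `r`-graph on `Fin n` to be the residue
classes modulo `l`. The edges inside an `m`-set `S` are the `r`-sets meeting `r` distinct classes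
once each, so their number is the elementary symmetric function `e_r` of the sizes of the classes
within `S`; for a fixed total `m` this is largest when the sizes are balanced, i.e. it is at most
`t_r(m,l)`. So neither a subgraph with `e ≤ t_r(n,l)` edges nor the complement of one has an
`m`-set spanning exactly `f` edges, and `(n,e) →_r (m,f)` forces
`t_r(n,l) < e < C(n,r) - t_r(n,l)`. Averaging over the `m`-subsets shows `2 t_r(n,l) < C(n,r)`
for `n ≥ m`, and `t_r(n,l) / C(n,r) → (l)_r / l^r`.
-/

open Finset
open scoped Classical

/-- Size of the `i`-th part of the balanced partition of `n` into `l` parts. -/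
def partSize (n l i : ℕ) : ℕ := n / l + if i < n % l then 1 else 0

/-- `t_r(n,l)`: number of edges of the complete balanced `l`-partite `r`-graph on `n` vertices. -/
def tEdges (r n l : ℕ) : ℕ :=
  ∑ S ∈ (Finset.range l).powersetCard r, ∏ i ∈ S, partSize n l i

/-- `l_{m,r}`: the largest `l` with `t_r(m,l) < C(m,r)/2`. -/
noncomputable def lmr (r m : ℕ) : ℕ :=
  Nat.findGreatest (fun l => 2 * tEdges r m l < m.choose r) m

namespace Multiset

theorem esymm_cons_succ {R : Type*} [CommSemiring R] (a : R) (s : Multiset R) (k : ℕ) :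
    (a ::ₘ s).esymm (k + 1) = a * s.esymm k + s.esymm (k + 1) := by
  simp only [esymm, powersetCard_cons, map_add, map_map, Function.comp_apply, prod_cons, sum_add,
    sum_map_mul_left]
  ring

theorem esymm_cons_cons_le {x y x' y' : ℕ} (hsum : x + y = x' + y') (hprod : x * y ≤ x' * y')
    (s : Multiset ℕ) : ∀ k, (x ::ₘ y ::ₘ s).esymm k ≤ (x' ::ₘ y' ::ₘ s).esymm k
  | 0 => by simp [esymm]
  | 1 => by
    simp only [esymm, powersetCard_cons, zero_add, powersetCard_zero_left, map_singleton,
      cons_zero, map_add, prod_singleton, sum_add, sum_singleton]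
    omega
  | k + 2 => by
    simp only [esymm_cons_succ]
    nlinarith [Nat.mul_le_mul_right (s.esymm k) hprod]

theorem eq_replicate_add_replicate_of_forall_le_add_one {M : Multiset ℕ} {l m : ℕ}
    (hcard : card M = l) (hsum : M.sum = m) (hbal : ∀ x ∈ M, ∀ y ∈ M, x ≤ y + 1) :
    M = replicate (m % l) (m / l + 1) + replicate (l - m % l) (m / l) := by
  rcases eq_or_ne M 0 with rfl | hM
  · simp [← hcard, ← hsum]
  obtain ⟨v, hv, hmin⟩ := M.exists_min_image id hM
  have hsplit : M = replicate (M.count (v + 1)) (v + 1) + replicate (M.count v) v := by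
    ext a
    simp only [count_add, count_replicate]
    by_cases ha : a ∈ M
    · have hva : v ≤ a := hmin a ha
      rcases (by have := hbal a ha v hv; omega : a = v ∨ a = v + 1) with rfl | rfl <;> simp
    · rw [count_eq_zero_of_notMem ha]
      split_ifs <;> simp_all
  have hv0 : 0 < M.count v := count_pos.2 hv
  have hc : M.count (v + 1) + M.count v = l := by
    simpa [← hcard] using (congrArg card hsplit).symm
  have hs : M.count (v + 1) * (v + 1) + M.count v * v = m := by
    simpa [← hsum, sum_replicate, mul_comm] using (congrArg sum hsplit).symm
  have hdiv : m / l = v ∧ m % l = M.count (v + 1) := by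
    rw [Nat.div_mod_unique (by omega)]
    constructor
    · rw [← hs, ← hc]; ring
    · omega
  rw [hdiv.1, hdiv.2, ← hc, Nat.add_sub_cancel_left]
  exact hsplit

end Multiset

open Multiset in
theorem map_partSize_range (m l : ℕ) (hl : 0 < l) :
    (Finset.range l).val.map (partSize m l) =
      replicate (m % l) (m / l + 1) + replicate (l - m % l) (m / l) := by
  refine eq_replicate_add_replicate_of_forall_le_add_one (by simp) ?_ ?_
  · have hfilter : {i ∈ Finset.range l | i < m % l} = Finset.range (m % l) := by
      ext i; simp only [Finset.mem_filter, Finset.mem_range]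
      have := Nat.mod_lt m hl; omega
    rw [Finset.sum_map_val]
    simp only [partSize, Finset.sum_add_distrib, Finset.sum_const, Finset.card_range,
      smul_eq_mul, Finset.sum_boole, hfilter, Nat.cast_id]
    exact Nat.div_add_mod m l
  · simp only [Multiset.mem_map, Finset.mem_val]
    rintro _ ⟨i, -, rfl⟩ _ ⟨j, -, rfl⟩
    simp only [partSize]; split_ifs <;> omega

theorem tEdges_eq_esymm (r m l : ℕ) :
    tEdges r m l = ((range l).val.map (partSize m l)).esymm r :=
  (esymm_map_val _ _ _).symm

theorem esymm_le_tEdges (r : ℕ) {l m : ℕ} {M : Multiset ℕ} (hcard : Multiset.card M = l)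
    (hsum : M.sum = m) : M.esymm r ≤ tEdges r m l := by
  induction h : (M.map (· ^ 2)).sum using Nat.strong_induction_on generalizing M with
  | _ N ih =>
    subst h
    rcases l.eq_zero_or_pos with rfl | hl
    · simp [Multiset.card_eq_zero.1 hcard, tEdges_eq_esymm]
    by_cases hbal : ∀ x ∈ M, ∀ y ∈ M, x ≤ y + 1
    · rw [tEdges_eq_esymm, map_partSize_range m l hl,
        ← M.eq_replicate_add_replicate_of_forall_le_add_one hcard hsum hbal]
    -- Moving a unit from a part `x` to a part `y ≤ x - 2` does not lower `e_r` but lowers `∑ x²`.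
    push Not at hbal
    obtain ⟨x, hx, y, hy, hxy⟩ := hbal
    obtain ⟨d, rfl⟩ : ∃ d, x = y + 2 + d := ⟨x - y - 2, by omega⟩
    obtain ⟨M', rfl⟩ : ∃ M', M = (y + 2 + d) ::ₘ y ::ₘ M' :=
      ⟨(M.erase (y + 2 + d)).erase y, by
        rw [Multiset.cons_erase ((Multiset.mem_erase_of_ne (by omega)).2 hy),
          Multiset.cons_erase hx]⟩
    calc ((y + 2 + d) ::ₘ y ::ₘ M').esymm r
        ≤ ((y + 1 + d) ::ₘ (y + 1) ::ₘ M').esymm r :=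
          Multiset.esymm_cons_cons_le (by omega) (by nlinarith) M' r
      _ ≤ tEdges r m l :=
          ih _ (by simp only [Multiset.map_cons, Multiset.sum_cons]; nlinarith)
            (by simpa using hcard) (by simp only [Multiset.sum_cons] at hsum ⊢; omega) rfl

section Transversal

variable {α : Type*} (col : α → ℕ) (S : Finset α)

def transversals (C : Finset ℕ) : Finset (Finset α) :=
  {t ∈ S.powerset | Set.InjOn col (t : Finset α) ∧ t.image col = C}

variable {col S}

theorem mem_transversals {C : Finset ℕ} {t : Finset α} :
    t ∈ transversals col S C ↔ t ⊆ S ∧ Set.InjOn col t ∧ t.image col = C := by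
  rw [transversals, mem_filter, mem_powerset]

theorem notMem_of_mem_transversals {C : Finset ℕ} {t : Finset α} {v : α}
    (ht : t ∈ transversals col S C) (hv : col v ∉ C) : v ∉ t := fun hvt =>
  hv ((mem_transversals.1 ht).2.2 ▸ mem_image_of_mem col hvt)

theorem card_transversals_insert {c : ℕ} {C : Finset ℕ} (hc : c ∉ C) :
    #(transversals col S (insert c C)) = #{v ∈ S | col v = c} * #(transversals col S C) := by
  rw [← card_product]
  symm
  refine card_nbij (fun p => insert p.1 p.2) ?_ ?_ ?_
  · intro ⟨v, t⟩ hp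
    simp only [coe_product, Set.mem_prod, mem_coe, mem_filter] at hp
    obtain ⟨⟨hvS, rfl⟩, ht⟩ := hp
    obtain ⟨htS, htinj, rfl⟩ := mem_transversals.1 ht
    rw [mem_coe, mem_transversals, coe_insert,
      Set.injOn_insert (notMem_of_mem_transversals ht hc), ← coe_image, image_insert]
    exact ⟨insert_subset hvS htS, ⟨htinj, hc⟩, rfl⟩
  · intro ⟨v, t⟩ hp ⟨w, u⟩ hq h
    simp only [coe_product, Set.mem_prod, mem_coe, mem_filter] at hp hq h
    obtain ⟨⟨-, rfl⟩, ht⟩ := hp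
    obtain ⟨⟨-, hwc⟩, hu⟩ := hq
    have hvw : v = w := by
      rcases mem_insert.1 (h ▸ mem_insert_self v t) with hvw | hvu
      · exact hvw
      · exact absurd hvu (notMem_of_mem_transversals hu hc)
    subst hvw
    rw [Prod.mk.injEq, ← erase_insert (notMem_of_mem_transversals ht hc), h,
      erase_insert (notMem_of_mem_transversals hu (hwc ▸ hc))]
    exact ⟨rfl, rfl⟩
  · intro t ht
    obtain ⟨htS, htinj, htC⟩ := mem_transversals.1 ht
    obtain ⟨v, hvt, rfl⟩ := mem_image.1 (htC ▸ mem_insert_self c C)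
    refine ⟨(v, t.erase v), ?_, insert_erase hvt⟩
    simp only [coe_product, Set.mem_prod, mem_coe, mem_filter, mem_transversals]
    refine ⟨⟨htS hvt, trivial⟩, (erase_subset v t).trans htS, htinj.mono (by simp), ?_⟩
    rw [← sdiff_singleton_eq_erase, image_sdiff_of_injOn htinj (singleton_subset_iff.2 hvt),
      image_singleton, htC, sdiff_singleton_eq_erase, erase_insert hc]

theorem card_transversals (C : Finset ℕ) :
    #(transversals col S C) = ∏ c ∈ C, #{v ∈ S | col v = c} := by
  induction C using Finset.induction_on with
  | empty =>
    have : transversals col S ∅ = {∅} := by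
      ext t; simp +contextual [mem_transversals, iff_def]
    rw [this, card_singleton, prod_empty]
  | insert c C hc ih => rw [card_transversals_insert hc, prod_insert hc, ih]

theorem card_powersetCard_filter_injOn (r l : ℕ) :
    #{t ∈ S.powersetCard r | Set.InjOn col (t : Finset α) ∧ t.image col ⊆ range l} =
      ∑ C ∈ (range l).powersetCard r, ∏ c ∈ C, #{v ∈ S | col v = c} := by
  rw [card_eq_sum_card_fiberwise (f := fun t => t.image col)]
  · refine sum_congr rfl fun C hC => ?_
    rw [← card_transversals, filter_filter]
    congr 1
    ext t
    rw [mem_powersetCard] at hC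
    simp only [mem_filter, mem_powersetCard, mem_transversals]
    constructor
    · rintro ⟨⟨hS, -⟩, ⟨hinj, -⟩, hC⟩
      exact ⟨hS, hinj, hC⟩
    · rintro ⟨hS, hinj, rfl⟩
      exact ⟨⟨hS, by rw [← hC.2, card_image_of_injOn hinj]⟩, ⟨hinj, hC.1⟩, rfl⟩
  · intro t ht
    rw [mem_coe, mem_filter, mem_powersetCard] at ht
    rw [mem_coe, mem_powersetCard]
    exact ⟨ht.2.2, by rw [card_image_of_injOn ht.2.1, ht.1.2]⟩

end Transversal

theorem card_filter_mod_eq_partSize {n l c : ℕ} (hc : c < l) :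
    #{v : Fin n | (v : ℕ) % l = c} = partSize n l c := by
  have hcount := Nat.count_modEq_card n (by omega : 0 < l) c
  rw [Nat.mod_eq_of_lt hc, Nat.count_eq_card_filter_range] at hcount
  rw [partSize, ← hcount, ← card_map Fin.valEmbedding]
  congr 1
  ext x
  simp only [mem_map, mem_filter, mem_univ, true_and, Fin.valEmbedding_apply, mem_range,
    Nat.ModEq, Nat.mod_eq_of_lt hc]
  exact ⟨fun ⟨v, hv, hvx⟩ => hvx ▸ ⟨v.isLt, hv⟩, fun ⟨hx, hxc⟩ => ⟨⟨x, hx⟩, hxc, rfl⟩⟩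

-- The condition `⊆ range l` is automatic for `0 < l`; for `l = 0`, where `v % 0 = v`, it
-- leaves no nonempty edges.
def balancedMultipartite (r n l : ℕ) : Finset (Finset (Fin n)) :=
  {t ∈ univ.powersetCard r | Set.InjOn (fun v : Fin n => (v : ℕ) % l) (t : Finset (Fin n)) ∧
    t.image (fun v : Fin n => (v : ℕ) % l) ⊆ range l}

theorem card_balancedMultipartite (r n l : ℕ) :
    #(balancedMultipartite r n l) = tEdges r n l := by
  rw [balancedMultipartite, card_powersetCard_filter_injOn, tEdges]
  refine sum_congr rfl fun C hC => prod_congr rfl fun c hc => card_filter_mod_eq_partSize ?_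
  exact mem_range.1 ((mem_powersetCard.1 hC).1 hc)

theorem card_filter_subset_balancedMultipartite_le (r l : ℕ) {n : ℕ} (S : Finset (Fin n)) :
    #{t ∈ balancedMultipartite r n l | t ⊆ S} ≤ tEdges r #S l := by
  have hfilter : {t ∈ balancedMultipartite r n l | t ⊆ S} =
      {t ∈ S.powersetCard r | Set.InjOn (fun v : Fin n => (v : ℕ) % l) (t : Finset (Fin n)) ∧
        t.image (fun v : Fin n => (v : ℕ) % l) ⊆ range l} := by
    ext t
    simp only [balancedMultipartite, mem_filter, mem_powersetCard, subset_univ, true_and]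
    tauto
  rw [hfilter, card_powersetCard_filter_injOn, ← esymm_map_val]
  rcases l.eq_zero_or_pos with rfl | hl
  · simp [tEdges_eq_esymm]
  · refine esymm_le_tEdges r (by simp) ?_
    rw [sum_map_val, ← card_eq_sum_card_fiberwise fun v _ => mem_range.2 (Nat.mod_lt _ hl)]

theorem tEdges_mul_choose_le (l : ℕ) {r m n : ℕ} (hrm : r ≤ m) (hmn : m ≤ n) :
    tEdges r n l * m.choose r ≤ n.choose r * tEdges r m l := by
  have hcount : tEdges r n l * (n - r).choose (m - r) ≤ n.choose m * tEdges r m l := by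
    have := card_mul_le_card_mul (fun t S => t ⊆ S) (s := balancedMultipartite r n l)
      (t := univ.powersetCard m) (m := (n - r).choose (m - r)) (n := tEdges r m l) ?_ ?_
    · simpa [card_balancedMultipartite] using this
    · intro t ht
      have htr : #t = r := (mem_powersetCard.1 (mem_filter.1 ht).1).2
      rw [bipartiteAbove, card_filter_powersetCard_subset _ _ _ (subset_univ t) (by omega),
        card_univ, Fintype.card_fin, htr]
    · intro S hS
      rw [← (mem_powersetCard.1 hS).2]
      exact card_filter_subset_balancedMultipartite_le r l S
  refine Nat.le_of_mul_le_mul_right ?_ (Nat.choose_pos (by omega : m - r ≤ n - r))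
  calc tEdges r n l * m.choose r * (n - r).choose (m - r)
      = tEdges r n l * (n - r).choose (m - r) * m.choose r := by ring
    _ ≤ n.choose m * tEdges r m l * m.choose r := Nat.mul_le_mul_right _ hcount
    _ = n.choose r * tEdges r m l * (n - r).choose (m - r) := by
      rw [mul_right_comm, Nat.choose_mul hrm]; ring

theorem two_mul_tEdges_lt_choose {r m n l : ℕ} (h : 2 * tEdges r m l < m.choose r) (hmn : m ≤ n) :
    2 * tEdges r n l < n.choose r := by
  have hrm : r ≤ m := by
    by_contra! hmr
    rw [Nat.choose_eq_zero_of_lt hmr] at h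
    omega
  have hpos : 0 < n.choose r := Nat.choose_pos (hrm.trans hmn)
  have := tEdges_mul_choose_le l hrm hmn
  refine Nat.lt_of_mul_lt_mul_right (a := m.choose r) ?_
  nlinarith

theorem PairArrows.compl {r n e m f : ℕ} (h : PairArrows r n e m f) (he : e ≤ n.choose r) :
    PairArrows r n (n.choose r - e) m (m.choose r - f) := by
  intro G hG hGcard
  have hGsub : G ⊆ univ.powersetCard r := fun t ht => by simp [hG t ht]
  obtain ⟨S, hS, hSf⟩ := h (univ.powersetCard r \ G)
    (fun t ht => (mem_powersetCard.1 (mem_sdiff.1 ht).1).2)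
    (by rw [card_sdiff_of_subset hGsub, card_powersetCard, card_univ, Fintype.card_fin]; omega)
  refine ⟨S, hS, ?_⟩
  have hpart : {t ∈ univ.powersetCard r \ G | t ⊆ S} = S.powersetCard r \ {t ∈ G | t ⊆ S} := by
    ext t
    simp only [mem_filter, mem_sdiff, mem_powersetCard, subset_univ, true_and]
    constructor
    · rintro ⟨⟨htr, htG⟩, htS⟩; exact ⟨⟨htS, htr⟩, fun h => htG h.1⟩
    · rintro ⟨⟨htS, htr⟩, htG⟩; exact ⟨⟨htr, fun h => htG ⟨h, htS⟩⟩, htS⟩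
  have hsub : {t ∈ G | t ⊆ S} ⊆ S.powersetCard r := fun t ht => by
    rw [mem_filter] at ht; exact mem_powersetCard.2 ⟨ht.2, hG t ht.1⟩
  rw [hpart, card_sdiff_of_subset hsub, card_powersetCard, hS] at hSf
  have := card_le_card hsub
  rw [card_powersetCard, hS] at this
  omega

theorem not_pairArrows_of_le_tEdges {r n e m f l : ℕ} (hf : tEdges r m l < f)
    (he : e ≤ tEdges r n l) : ¬ PairArrows r n e m f := by
  intro h
  obtain ⟨G, hGK, rfl⟩ := exists_subset_card_eq (he.trans_eq (card_balancedMultipartite r n l).symm)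
  obtain ⟨S, rfl, hS⟩ := h G (fun t ht => (mem_powersetCard.1 (mem_filter.1 (hGK ht)).1).2) rfl
  have := (card_le_card (filter_subset_filter _ hGK)).trans
    (card_filter_subset_balancedMultipartite_le r l S)
  omega

theorem card_filter_pairArrows_add_two_mul_tEdges_lt {r n m f l : ℕ} (hf1 : tEdges r m l < f)
    (hf2 : f < m.choose r - tEdges r m l) (hmn : m ≤ n) :
    #{e ∈ range (n.choose r + 1) | PairArrows r n e m f} + 2 * tEdges r n l < n.choose r := by
  have hsub : {e ∈ range (n.choose r + 1) | PairArrows r n e m f} ⊆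
      Ioo (tEdges r n l) (n.choose r - tEdges r n l) := by
    intro e he
    rw [mem_filter, mem_range] at he
    rw [mem_Ioo]
    constructor
    · by_contra! hle
      exact not_pairArrows_of_le_tEdges hf1 hle he.2
    · by_contra! hge
      exact not_pairArrows_of_le_tEdges (f := m.choose r - f) (l := l) (by omega) (by omega)
        (he.2.compl (by omega))
  have := card_le_card hsub
  have := two_mul_tEdges_lt_choose (by omega : 2 * tEdges r m l < m.choose r) hmn
  rw [Nat.card_Ioo] at *
  omega

open Filter Topology Asymptotics

theorem abs_partSize_sub_div_le {l : ℕ} (hl : 0 < l) (n i : ℕ) :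
    |(partSize n l i : ℝ) - n / l| ≤ 1 := by
  have hl' : (0 : ℝ) < l := by exact_mod_cast hl
  have hn : (n : ℝ) / l = (n / l : ℕ) + (n % l : ℕ) / l := by
    conv_lhs => rw [← Nat.div_add_mod n l]
    push_cast
    field_simp
  have hmod : ((n % l : ℕ) : ℝ) / l < 1 := (div_lt_one hl').2 (by exact_mod_cast Nat.mod_lt n hl)
  have hmod' : 0 ≤ ((n % l : ℕ) : ℝ) / l := by positivity
  rw [hn, abs_le, partSize]
  push_cast
  constructor <;> split_ifs <;> linarith

theorem tendsto_partSize_div {l : ℕ} (hl : 0 < l) (i : ℕ) :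
    Tendsto (fun n => (partSize n l i : ℝ) / n) atTop (𝓝 (l : ℝ)⁻¹) := by
  have hinv := tendsto_inv_atTop_nhds_zero_nat (𝕜 := ℝ)
  refine tendsto_of_tendsto_of_tendsto_of_le_of_le' (g := fun n : ℕ => (l : ℝ)⁻¹ - (n : ℝ)⁻¹)
    (h := fun n : ℕ => (l : ℝ)⁻¹ + (n : ℝ)⁻¹) (by simpa using hinv.const_sub (l : ℝ)⁻¹)
    (by simpa using hinv.const_add (l : ℝ)⁻¹) ?_ ?_
  all_goals
    filter_upwards [eventually_gt_atTop 0] with n hn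
    have hn' : (0 : ℝ) < n := by exact_mod_cast hn
    have hdev := abs_le.1 (abs_partSize_sub_div_le hl n i)
  · rw [le_div_iff₀ hn', sub_mul, inv_mul_cancel₀ hn'.ne', inv_mul_eq_div]
    linarith
  · rw [div_le_iff₀ hn', add_mul, inv_mul_cancel₀ hn'.ne', inv_mul_eq_div]
    linarith

theorem tendsto_tEdges_div_pow (r l : ℕ) :
    Tendsto (fun n => (tEdges r n l : ℝ) / n ^ r) atTop (𝓝 (l.choose r / l ^ r)) := by
  have hsum : ∀ n : ℕ, (tEdges r n l : ℝ) / n ^ r =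
      ∑ C ∈ (range l).powersetCard r, ∏ i ∈ C, (partSize n l i : ℝ) / n := by
    intro n
    rw [tEdges]
    push_cast
    rw [sum_div]
    refine sum_congr rfl fun C hC => ?_
    rw [prod_div_distrib, prod_const, (mem_powersetCard.1 hC).2]
  have hlim : ∑ C ∈ (range l).powersetCard r, ∏ _i ∈ C, (l : ℝ)⁻¹ = l.choose r / l ^ r := by
    rw [sum_congr rfl fun C hC => by rw [prod_const, (mem_powersetCard.1 hC).2], sum_const,
      card_powersetCard, card_range, nsmul_eq_mul, inv_pow, div_eq_mul_inv]
  simp_rw [hsum, ← hlim]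
  refine tendsto_finsetSum _ fun C hC => tendsto_finsetProd _ fun i hi => tendsto_partSize_div ?_ i
  have := mem_range.1 ((mem_powersetCard.1 hC).1 hi)
  omega

theorem tendsto_tEdges_div_choose (r l : ℕ) :
    Tendsto (fun n => (tEdges r n l : ℝ) / n.choose r) atTop
      (𝓝 (l.descFactorial r / l ^ r)) := by
  have h : Tendsto (fun n => (tEdges r n l : ℝ) / ((n : ℝ) ^ r / r.factorial)) atTop
      (𝓝 (l.descFactorial r / l ^ r)) := by
    convert (tendsto_tEdges_div_pow r l).const_mul (r.factorial : ℝ) using 1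
    · ext n; rw [div_div_eq_mul_div, mul_div_right_comm, mul_comm]
    · rw [Nat.descFactorial_eq_factorial_mul_choose]; push_cast; rw [mul_div_assoc]
  exact (IsEquivalent.refl.div (isEquivalent_choose r).symm).tendsto_nhds h

theorem sigmaR_le_of_tendsto {r m f : ℕ} {u : ℕ → ℝ} {c : ℝ} (hu : Tendsto u atTop (𝓝 c))
    (h : ∀ᶠ n in atTop,
      (#{e ∈ range (n.choose r + 1) | PairArrows r n e m f} : ℝ) ≤ n.choose r * u n) :
    sigmaR r m f ≤ c := by
  rw [sigmaR, ← hu.limsup_eq]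
  refine limsup_le_limsup ?_ (isCoboundedUnder_le_of_le atTop fun n => by positivity)
    hu.isBoundedUnder_le
  filter_upwards [h, eventually_ge_atTop r] with n hn hrn
  rw [div_le_iff₀' (by exact_mod_cast Nat.choose_pos hrn)]
  exact hn

theorem sigma_le_one_sub_two_ratio_general (r m l f : ℕ)
    (hf1 : tEdges r m l < f) (hf2 : f < m.choose r - tEdges r m l) :
    sigmaR r m f ≤ 1 - 2 * (Nat.descFactorial l r : ℝ) / (l : ℝ) ^ r := by
  rw [mul_div_assoc]
  refine sigmaR_le_of_tendsto (((tendsto_tEdges_div_choose r l).const_mul 2).const_sub 1) ?_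
  filter_upwards [eventually_ge_atTop m] with n hmn
  have hcard := card_filter_pairArrows_add_two_mul_tEdges_lt hf1 hf2 hmn
  have hC : (n.choose r : ℝ) ≠ 0 := by exact_mod_cast (by omega : n.choose r ≠ 0)
  rw [mul_sub, mul_one, ← mul_assoc, mul_comm _ (2 : ℝ), mul_assoc, mul_div_cancel₀ _ hC,
    le_sub_iff_add_le]
  exact_mod_cast hcard.le

theorem sigma_le_one_sub_two_ratio (r m l f : ℕ) (hr : 3 ≤ r) (hm : r < m)
    (hl : l ≤ lmr r m) (hf1 : tEdges r m l < f) (hf2 : f < m.choose r - tEdges r m l) :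
    sigmaR r m f ≤ 1 - 2 * (Nat.descFactorial l r : ℝ) / (l : ℝ) ^ r :=
  sigma_le_one_sub_two_ratio_general r m l f hf1 hf2
end

section
/- Define 3-uniform hypergraphs G_k recursively: G_1 is a single triple on 3 vertices; G_k consists of three vertex-disjoint copies of G_{k−1} together with all triples containing exactly one vertex from each copy. Then every set of 6 vertices in G_k spans at most 8 hyperedges; in particular G_k has no induced sub-hypergraph on 6 vertices with exactly 10 edges. -/
open Finset
open scoped Classical

/-- The iterated 3-partite blow-up `G_k` of a single triple: vertices are ternary
strings of length `k`; a triple `{a,b,c}` is an edge iff at some coordinate `j` the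
three strings agree on all coordinates before `j` and take pairwise distinct values
at `j`. (`G_1` is a single triple; `G_k` is three copies of `G_{k-1}` together with
all transversal triples.) -/
noncomputable def Gk (k : ℕ) : Finset (Finset (Fin k → Fin 3)) :=
  Finset.univ.filter (fun s =>
    ∃ a b c : Fin k → Fin 3, s = {a, b, c} ∧
      ∃ j : Fin k, (∀ i : Fin k, i < j → a i = b i ∧ a i = c i) ∧
        a j ≠ b j ∧ a j ≠ c j ∧ b j ≠ c j)

lemma mem_Gk {k : ℕ} {e : Finset (Fin k → Fin 3)} (he : e ∈ Gk k) :
    ∃ a b c : Fin k → Fin 3, e = {a, b, c} ∧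
      ∃ j : Fin k, (∀ i : Fin k, i < j → a i = b i ∧ a i = c i) ∧
        a j ≠ b j ∧ a j ≠ c j ∧ b j ≠ c j := by
  simpa [Gk] using he


lemma triple_eq {α : Type*} [DecidableEq α] (a b c : α) :
    ({a, b, c} : Finset α) = {a, c, b} ∧ ({a, b, c} : Finset α) = {b, a, c} ∧
    ({a, b, c} : Finset α) = {b, c, a} ∧ ({a, b, c} : Finset α) = {c, a, b} ∧
    ({a, b, c} : Finset α) = {c, b, a} := by
  refine ⟨?_, ?_, ?_, ?_, ?_⟩ <;>
    (ext t; simp only [Finset.mem_insert, Finset.mem_singleton]; tauto)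

lemma mem_T {k : ℕ} {X : Finset (Fin k → Fin 3)} {j : Fin k} {a b c : Fin k → Fin 3}
    (ha : a ∈ X) (hb : b ∈ X) (hc : c ∈ X)
    (hva : a j = 0) (hvb : b j = 1) (hvc : c j = 2) :
    ({a, b, c} : Finset _) ∈ ((X.filter (fun x => x j = 0) ×ˢ X.filter (fun x => x j = 1) ×ˢ
        X.filter (fun x => x j = 2)).image (fun p => {p.1, p.2.1, p.2.2})) := by
  rw [Finset.mem_image]
  exact ⟨(a, b, c),
    by simp [Finset.mem_product, Finset.mem_filter, ha, hb, hc, hva, hvb, hvc], rfl⟩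

lemma cover_lemma {k : ℕ} (X : Finset (Fin k → Fin 3)) (j : Fin k)
    (hconst : ∀ i : Fin k, i < j → ∀ u ∈ X, ∀ v ∈ X, u i = v i) :
    (Gk k).filter (fun e => e ⊆ X) ⊆
      (((Gk k).filter (fun e => e ⊆ X.filter (fun x => x j = 0))) ∪
       ((Gk k).filter (fun e => e ⊆ X.filter (fun x => x j = 1))) ∪
       ((Gk k).filter (fun e => e ⊆ X.filter (fun x => x j = 2)))) ∪
      ((X.filter (fun x => x j = 0) ×ˢ X.filter (fun x => x j = 1) ×ˢ
        X.filter (fun x => x j = 2)).image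
        (fun p => {p.1, p.2.1, p.2.2})) := by
  intro e hef
  rw [Finset.mem_filter] at hef
  obtain ⟨he, heX⟩ := hef
  obtain ⟨a, b, c, rfl, j', hpre, hab, hac, hbc⟩ := mem_Gk he
  have ha : a ∈ X := heX (by simp)
  have hb : b ∈ X := heX (by simp)
  have hc : c ∈ X := heX (by simp)
  by_cases hsameg : a j = b j ∧ a j = c j
  · -- all three in the same part
    obtain ⟨v, hv⟩ : ∃ v, a j = v := ⟨_, rfl⟩
    have hbv : b j = v := hsameg.1 ▸ hv
    have hcv : c j = v := hsameg.2 ▸ hv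
    have hsub : ({a, b, c} : Finset _) ⊆ X.filter (fun x => x j = v) := by
      intro t ht
      simp only [Finset.mem_insert, Finset.mem_singleton] at ht
      rcases ht with rfl | rfl | rfl <;>
        simp [Finset.mem_filter, ha, hb, hc, hv, hbv, hcv]
    apply Finset.mem_union_left
    fin_cases v
    · exact Finset.mem_union_left _
        (Finset.mem_union_left _ (Finset.mem_filter.mpr ⟨he, hsub⟩))
    · exact Finset.mem_union_left _
        (Finset.mem_union_right _ (Finset.mem_filter.mpr ⟨he, hsub⟩))
    · exact Finset.mem_union_right _ (Finset.mem_filter.mpr ⟨he, hsub⟩)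
  · -- transversal triple
    have hj'j : j' = j := by
      rcases lt_trichotomy j' j with h | h | h
      · exact absurd (hconst j' h a ha b hb) hab
      · exact h
      · exact absurd ⟨(hpre j h).1, (hpre j h).2⟩ hsameg
    subst hj'j
    apply Finset.mem_union_right
    have h3 : ∀ v : Fin 3, v = 0 ∨ v = 1 ∨ v = 2 := fun v => by omega
    rcases h3 (a j') with hva | hva | hva <;>
      rcases h3 (b j') with hvb | hvb | hvb <;>
      rcases h3 (c j') with hvc | hvc | hvc <;>
      first
      | exact absurd (hva.trans hvb.symm) hab
      | exact absurd (hva.trans hvc.symm) hac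
      | exact absurd (hvb.trans hvc.symm) hbc
      | exact mem_T ha hb hc hva hvb hvc
      | (rw [(triple_eq a b c).1]; exact mem_T ha hc hb hva hvc hvb)
      | (rw [(triple_eq a b c).2.1]; exact mem_T hb ha hc hvb hva hvc)
      | (rw [(triple_eq a b c).2.2.1]; exact mem_T hb hc ha hvb hvc hva)
      | (rw [(triple_eq a b c).2.2.2.1]; exact mem_T hc ha hb hvc hva hvb)
      | (rw [(triple_eq a b c).2.2.2.2]; exact mem_T hc hb ha hvc hvb hva)

lemma card_Gk {k : ℕ} {e : Finset (Fin k → Fin 3)} (he : e ∈ Gk k) : e.card = 3 := by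
  obtain ⟨a, b, c, rfl, j, hpre, hab, hac, hbc⟩ := mem_Gk he
  have hab' : a ≠ b := fun h => hab (by rw [h])
  have hac' : a ≠ c := fun h => hac (by rw [h])
  have hbc' : b ≠ c := fun h => hbc (by rw [h])
  rw [Finset.card_insert_of_notMem (by simp [hab', hac']),
    Finset.card_insert_of_notMem (by simp [hbc']), Finset.card_singleton]

def g6 : ℕ → ℕ
  | 0 => 0 | 1 => 0 | 2 => 0 | 3 => 1 | 4 => 2 | 5 => 4 | _ => 8

theorem g6_ineq (n0 n1 n2 : ℕ) (h : n0 + n1 + n2 ≤ 6)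
    (h0 : n0 < n0 + n1 + n2) (h1 : n1 < n0 + n1 + n2) (h2 : n2 < n0 + n1 + n2) :
    g6 n0 + g6 n1 + g6 n2 + n0 * n1 * n2 ≤ g6 (n0 + n1 + n2) := by
  have b0 : n0 ≤ 6 := by omega
  have b1 : n1 ≤ 6 := by omega
  have b2 : n2 ≤ 6 := by omega
  interval_cases n0 <;> interval_cases n1 <;> interval_cases n2 <;> simp_all [g6]

lemma main_bound (k : ℕ) : ∀ n, ∀ X : Finset (Fin k → Fin 3), X.card = n → n ≤ 6 →
    ((Gk k).filter (fun e => e ⊆ X)).card ≤ g6 n := by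
  intro n
  induction n using Nat.strong_induction_on with
  | _ n ih =>
    intro X hXn hn6
    by_cases hsmall : X.card ≤ 1
    · have hE : (Gk k).filter (fun e => e ⊆ X) = ∅ := by
        rw [Finset.filter_eq_empty_iff]
        intro e he hsub
        have h3 := card_Gk he
        have hle := Finset.card_le_card hsub
        omega
      simp [hE]
    push_neg at hsmall
    obtain ⟨x, hx, y, hy, hxy⟩ := Finset.one_lt_card.mp hsmall
    obtain ⟨j, hconst, u0, hu0, v0, hv0, huv0⟩ :
        ∃ j : Fin k, (∀ i : Fin k, i < j → ∀ u ∈ X, ∀ v ∈ X, u i = v i) ∧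
          ∃ u ∈ X, ∃ v ∈ X, u j ≠ v j := by
      have hNne : ((univ : Finset (Fin k)).filter
          (fun j => ∃ u ∈ X, ∃ v ∈ X, u j ≠ v j)).Nonempty := by
        obtain ⟨j, hj⟩ := Function.ne_iff.mp hxy
        refine ⟨j, ?_⟩
        simp only [Finset.mem_filter, Finset.mem_univ, true_and]
        exact ⟨x, hx, y, hy, hj⟩
      set N := (univ : Finset (Fin k)).filter
        (fun j => ∃ u ∈ X, ∃ v ∈ X, u j ≠ v j) with hN
      refine ⟨N.min' hNne, ?_, ?_⟩
      · intro i hij u hu v hv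
        by_contra hne
        have hiN : i ∈ N := by
          rw [hN, Finset.mem_filter]
          exact ⟨Finset.mem_univ _, u, hu, v, hv, hne⟩
        exact absurd (N.min'_le i hiN) (not_le.mpr hij)
      · have hm : N.min' hNne ∈ (univ : Finset (Fin k)).filter
            (fun j => ∃ u ∈ X, ∃ v ∈ X, u j ≠ v j) := N.min'_mem hNne
        exact (Finset.mem_filter.mp hm).2
    -- partition sizes
    have hsum : X.card = (X.filter (fun x => x j = 0)).card +
        (X.filter (fun x => x j = 1)).card + (X.filter (fun x => x j = 2)).card := by
      have := Finset.card_eq_sum_card_fiberwise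
        (f := fun x => x j) (s := X) (t := (univ : Finset (Fin 3)))
        (fun x _ => Finset.mem_univ _)
      rw [this, Fin.sum_univ_three]
    have hlt : ∀ v : Fin 3, (X.filter (fun x => x j = v)).card < X.card := by
      intro v
      apply Finset.card_lt_card
      rw [Finset.ssubset_iff_of_subset (Finset.filter_subset _ _)]
      rcases eq_or_ne (u0 j) v with h | h
      · refine ⟨v0, hv0, ?_⟩
        simp only [Finset.mem_filter, not_and]
        intro _ hv
        exact huv0 (h.trans hv.symm)
      · refine ⟨u0, hu0, ?_⟩
        simp only [Finset.mem_filter, not_and]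
        intro _ hv
        exact h hv
    -- count via cover
    have hcard := Finset.card_le_card (cover_lemma X j hconst)
    have hQ : ∀ v : Fin 3, ((Gk k).filter (fun e => e ⊆ X.filter (fun x => x j = v))).card ≤
        g6 (X.filter (fun x => x j = v)).card := by
      intro v
      exact ih _ (hXn ▸ hlt v) _ rfl (by have := hlt v; linarith)
    have hT : ((X.filter (fun x => x j = 0) ×ˢ X.filter (fun x => x j = 1) ×ˢ
        X.filter (fun x => x j = 2)).image
        (fun p => ({p.1, p.2.1, p.2.2} : Finset (Fin k → Fin 3)))).card ≤
        (X.filter (fun x => x j = 0)).card * (X.filter (fun x => x j = 1)).card *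
        (X.filter (fun x => x j = 2)).card := by
      calc _ ≤ _ := Finset.card_image_le
        _ = _ := by rw [Finset.card_product, Finset.card_product]; ring
    have hfinal := g6_ineq (X.filter (fun x => x j = 0)).card
      (X.filter (fun x => x j = 1)).card (X.filter (fun x => x j = 2)).card
      (by linarith) (by have := hlt 0; linarith) (by have := hlt 1; linarith)
      (by have := hlt 2; linarith)
    have step1 := Finset.card_union_le
      ((((Gk k).filter (fun e => e ⊆ X.filter (fun x => x j = 0))) ∪
        ((Gk k).filter (fun e => e ⊆ X.filter (fun x => x j = 1)))) ∪
       ((Gk k).filter (fun e => e ⊆ X.filter (fun x => x j = 2))))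
      ((X.filter (fun x => x j = 0) ×ˢ X.filter (fun x => x j = 1) ×ˢ
        X.filter (fun x => x j = 2)).image
        (fun p => ({p.1, p.2.1, p.2.2} : Finset (Fin k → Fin 3))))
    have step2 := Finset.card_union_le
      (((Gk k).filter (fun e => e ⊆ X.filter (fun x => x j = 0))) ∪
       ((Gk k).filter (fun e => e ⊆ X.filter (fun x => x j = 1))))
      ((Gk k).filter (fun e => e ⊆ X.filter (fun x => x j = 2)))
    have step3 := Finset.card_union_le
      ((Gk k).filter (fun e => e ⊆ X.filter (fun x => x j = 0)))
      ((Gk k).filter (fun e => e ⊆ X.filter (fun x => x j = 1)))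
    have h0 := hQ 0
    have h1 := hQ 1
    have h2 := hQ 2
    have hXsum : (X.filter (fun x => x j = 0)).card + (X.filter (fun x => x j = 1)).card +
        (X.filter (fun x => x j = 2)).card = n := by linarith
    rw [← hXsum]
    linarith [hcard, step1, step2, step3, h0, h1, h2, hT, hfinal]

/-- Every 6 vertices of `G_k` span at most 8 edges; in particular `G_k` has no
induced sub-hypergraph on 6 vertices with exactly 10 edges. -/
theorem blowup_six_sets_span_at_most_eight (k : ℕ) :
    (∀ X : Finset (Fin k → Fin 3), X.card = 6 →
      ((Gk k).filter (fun e => e ⊆ X)).card ≤ 8) ∧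
    ¬ ∃ S : Finset (Fin k → Fin 3), S.card = 6 ∧
      ((Gk k).filter (fun e => e ⊆ S)).card = 10 := by
  have hmain : ∀ X : Finset (Fin k → Fin 3), X.card = 6 →
      ((Gk k).filter (fun e => e ⊆ X)).card ≤ 8 := by
    intro X hX
    have := main_bound k 6 X hX (by norm_num)
    simpa [g6] using this
  refine ⟨hmain, ?_⟩
  rintro ⟨S, hS, h10⟩
  have := hmain S hS
  linarith
end
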